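/- arXiv:2512.18480 — 9 statements merged into one kernel-verified Lean document; each statement's English description precedes it below -/
import Mathlib

section
/- Every graph that admits a tree-decomposition in which every bag is a clique is chordal, i.e., every cycle of length at least 4 has a chord. -/
open SimpleGraph

/-- A graph is chordal if every cycle of length at least 4 has a chord, i.e. an edge
of the graph joining two vertices of the cycle which is not an edge of the cycle. -/
def IsChordal {V : Type*} (G : SimpleGraph V) : Prop :=
  ∀ (v : V) (c : G.Walk v v), c.IsCycle → 4 ≤ c.length →
    ∃ x y, x ∈ c.support ∧ y ∈ c.support ∧ G.Adj x y ∧ s(x, y) ∉ c.edges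

/-- A tree-decomposition of `G` modelled on the tree `Tg`. -/
structure TreeDecomp {V T : Type*} (G : SimpleGraph V) (Tg : SimpleGraph T) where
  isTree : Tg.IsTree
  bag : T → Set V
  covers_vertex : ∀ v : V, ∃ t, v ∈ bag t
  covers_edge : ∀ ⦃v w : V⦄, G.Adj v w → ∃ t, v ∈ bag t ∧ w ∈ bag t
  subtree : ∀ v : V, (Tg.induce {t | v ∈ bag t}).Connected

namespace ChordalAux

variable {V T : Type*} {G : SimpleGraph V} {Tg : SimpleGraph T}

lemma getVert_eq_support_getElem {u w : V} (p : G.Walk u w) {i : ℕ} (hi : i ≤ p.length) :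
    p.getVert i = p.support[i]'(by rw [SimpleGraph.Walk.length_support]; omega) := by
  induction p generalizing i with
  | nil =>
    simp only [SimpleGraph.Walk.length_nil, Nat.le_zero] at hi
    subst hi
    simp [SimpleGraph.Walk.getVert]
  | cons h q ih =>
    cases i with
    | zero => simp
    | succ i =>
      rw [SimpleGraph.Walk.getVert_cons_succ]
      simp only [SimpleGraph.Walk.support_cons, List.getElem_cons_succ]
      exact ih (by simpa [Nat.succ_le_succ_iff] using hi)

lemma cycle_getVert_inj {v : V} {c : G.Walk v v} (hc : c.IsCycle) {i j : ℕ}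
    (hi1 : 1 ≤ i) (hi2 : i ≤ c.length) (hj1 : 1 ≤ j) (hj2 : j ≤ c.length)
    (hij : c.getVert i = c.getVert j) : i = j := by
  have hnd : c.support.tail.Nodup := hc.support_nodup
  have hlen : c.support.tail.length = c.length := by
    have := c.length_support
    have := c.support.length_tail
    omega
  have key : ∀ k : ℕ, 1 ≤ k → (hk : k ≤ c.length) →
      c.getVert k = c.support.tail[k-1]'(by omega) := by
    intro k hk1 hk2
    rw [getVert_eq_support_getElem c hk2]
    rw [List.getElem_tail]
    congr 1
    omega
  rw [key i hi1 hi2, key j hj1 hj2] at hij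
  have := List.Nodup.getElem_inj_iff hnd |>.mp hij
  omega

lemma mem_edges_exists_idx {u w x y : V} {p : G.Walk u w} (hxy : s(x,y) ∈ p.edges) :
    ∃ i < p.length, (p.getVert i = x ∧ p.getVert (i+1) = y) ∨
      (p.getVert i = y ∧ p.getVert (i+1) = x) := by
  induction p with
  | nil => simp at hxy
  | @cons a b c h q ih =>
    rw [SimpleGraph.Walk.edges_cons, List.mem_cons] at hxy
    rcases hxy with heq | hmem
    · refine ⟨0, by simp, ?_⟩
      rw [Sym2.eq_iff] at heq
      rcases heq with ⟨rfl, rfl⟩ | ⟨rfl, rfl⟩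
      · exact Or.inl ⟨by simp, by rw [SimpleGraph.Walk.getVert_cons_succ]; simp⟩
      · exact Or.inr ⟨by simp, by rw [SimpleGraph.Walk.getVert_cons_succ]; simp⟩
    · obtain ⟨i, hi, hcase⟩ := ih hmem
      refine ⟨i+1, by simp; omega, ?_⟩
      simpa [SimpleGraph.Walk.getVert_cons_succ] using hcase

lemma subtree_walk (D : TreeDecomp G Tg) (x : V)
    {s s' : T} (hs : x ∈ D.bag s) (hs' : x ∈ D.bag s') :
    ∃ W : Tg.Walk s s', ∀ t ∈ W.support, x ∈ D.bag t := by
  obtain ⟨p⟩ := (D.subtree x).preconnected ⟨s, hs⟩ ⟨s', hs'⟩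
  refine ⟨p.map (SimpleGraph.Embedding.induce {t | x ∈ D.bag t}).toHom, ?_⟩
  intro t ht
  have ht' : t ∈ (p.map (SimpleGraph.Embedding.induce {t | x ∈ D.bag t}).toHom).support := ht
  rw [SimpleGraph.Walk.support_map, List.mem_map] at ht'
  obtain ⟨t', _, rfl⟩ := ht'
  exact t'.2

lemma decomp_walk_seg (D : TreeDecomp G Tg) {u₀ w₀ : V} (c : G.Walk u₀ w₀) (i : ℕ) :
    ∀ j, i ≤ j → j ≤ c.length → ∀ tx ty : T, c.getVert i ∈ D.bag tx → c.getVert j ∈ D.bag ty →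
      ∃ W : Tg.Walk tx ty, ∀ d ∈ W.darts,
        ∃ k, i ≤ k ∧ k ≤ j ∧ c.getVert k ∈ D.bag d.fst ∧ c.getVert k ∈ D.bag d.snd := by
  intro j hij
  induction j, hij using Nat.le_induction with
  | base =>
    intro _ tx ty hx hy
    obtain ⟨W, hW⟩ := subtree_walk D (c.getVert i) hx hy
    exact ⟨W, fun d hd => ⟨i, le_refl _, le_refl _,
      hW _ (SimpleGraph.Walk.dart_fst_mem_support_of_mem_darts _ hd),
      hW _ (SimpleGraph.Walk.dart_snd_mem_support_of_mem_darts _ hd)⟩⟩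
  | succ j hij ih =>
    intro hj1 tx ty hx hy
    have hadj : G.Adj (c.getVert j) (c.getVert (j+1)) := c.adj_getVert_succ (by omega)
    obtain ⟨te, hte1, hte2⟩ := D.covers_edge hadj
    obtain ⟨W1, hW1⟩ := ih (by omega) tx te hx hte1
    obtain ⟨W2, hW2⟩ := subtree_walk D (c.getVert (j+1)) hte2 hy
    refine ⟨W1.append W2, ?_⟩
    intro d hd
    rw [SimpleGraph.Walk.darts_append, List.mem_append] at hd
    rcases hd with hd | hd
    · obtain ⟨k, h1, h2, h3, h4⟩ := hW1 d hd
      exact ⟨k, h1, by omega, h3, h4⟩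
    · exact ⟨j+1, by omega, le_refl _,
        hW2 _ (SimpleGraph.Walk.dart_fst_mem_support_of_mem_darts _ hd),
        hW2 _ (SimpleGraph.Walk.dart_snd_mem_support_of_mem_darts _ hd)⟩

lemma exit_dart (P : T → Prop) :
    ∀ {s s' : T} (w : Tg.Walk s s'), P s → ¬ P s' →
      ∃ (a b : T) (hab : Tg.Adj a b) (w1 : Tg.Walk s a) (w2 : Tg.Walk b s'),
        w = w1.append (w2.cons hab) ∧ P a ∧ ¬ P b := by
  intro s s' w
  induction w with
  | nil => intro h1 h2; exact absurd h1 h2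
  | @cons u m s' h q ih =>
    intro h1 h2
    by_cases hm : P m
    · obtain ⟨a, b, hab, w1, w2, heq, ha, hb⟩ := ih hm h2
      exact ⟨a, b, hab, w1.cons h, w2,
        by rw [SimpleGraph.Walk.cons_append, ← heq], ha, hb⟩
    · exact ⟨u, m, h, SimpleGraph.Walk.nil, q,
        by rw [SimpleGraph.Walk.nil_append], h1, hm⟩

end ChordalAux

open ChordalAux in
theorem stmt_0 {V T : Type*} (G : SimpleGraph V) (Tg : SimpleGraph T)
    (D : TreeDecomp G Tg) (h : ∀ t, G.IsClique (D.bag t)) : IsChordal G := by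
  classical
  intro v c hc hlen
  by_contra hcon
  push_neg at hcon
  set n := c.length with hn
  have inj : ∀ i j : ℕ, 1 ≤ i → i ≤ n → 1 ≤ j → j ≤ n → c.getVert i = c.getVert j → i = j :=
    fun i j hi1 hi2 hj1 hj2 hij => cycle_getVert_inj hc hi1 hi2 hj1 hj2 hij
  have hgn : c.getVert n = v := c.getVert_length
  have hg0 : c.getVert 0 = v := c.getVert_zero
  have hmem : ∀ k : ℕ, k ≤ n → c.getVert k ∈ c.support := fun k hk =>
    SimpleGraph.Walk.mem_support_iff_exists_getVert.mpr ⟨k, rfl, hk⟩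
  have hsame : ∀ (t : T) (x y : V), x ∈ D.bag t → y ∈ D.bag t → x ∈ c.support →
      y ∈ c.support → x ≠ y → s(x,y) ∈ c.edges :=
    fun t x y hx hy hxs hys hne => hcon x y hxs hys (h t hx hy hne)
  have idx : ∀ i k : ℕ, i ≤ n → 1 ≤ k → k ≤ n → c.getVert i = c.getVert k →
      i = k ∨ (i = 0 ∧ k = n) := by
    intro i k hi hk1 hk2 hik
    by_cases h0 : i = 0
    · subst h0
      exact Or.inr ⟨rfl, (inj n k (by omega) le_rfl hk1 hk2 ((hgn.trans hg0.symm).trans hik)).symm⟩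
    · exact Or.inl (inj i k (by omega) hi hk1 hk2 hik)
  -- some distinctness facts
  have hd13 : c.getVert 1 ≠ c.getVert 3 := fun hh => by
    have := inj 1 3 (by omega) (by omega) (by omega) (by omega) hh; omega
  have hd02 : v ≠ c.getVert 2 := fun hh => by
    have := inj n 2 (by omega) le_rfl (by omega) (by omega) (hgn.trans hh); omega
  -- non-edges of the cycle
  have hne13 : s(c.getVert 1, c.getVert 3) ∉ c.edges := by
    intro hmem'
    obtain ⟨i, hi, hcase⟩ := mem_edges_exists_idx hmem'
    rcases hcase with ⟨h1, h2⟩ | ⟨h1, h2⟩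
    · rcases idx i 1 (by omega) (by omega) (by omega) h1 with rfl | ⟨rfl, h1n⟩
      · rcases idx 2 3 (by omega) (by omega) (by omega) h2 with hh | ⟨hh, _⟩ <;> omega
      · omega
    · rcases idx i 3 (by omega) (by omega) (by omega) h1 with rfl | ⟨rfl, h3n⟩
      · rcases idx 4 1 (by omega) (by omega) (by omega) h2 with hh | ⟨hh, _⟩ <;> omega
      · omega
  have hne02 : s(v, c.getVert 2) ∉ c.edges := by
    intro hmem'
    obtain ⟨i, hi, hcase⟩ := mem_edges_exists_idx hmem'
    rcases hcase with ⟨h1, h2⟩ | ⟨h1, h2⟩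
    · rcases idx i n (by omega) (by omega) le_rfl (h1.trans hgn.symm) with rfl | ⟨rfl, _⟩
      · omega
      · rcases idx 1 2 (by omega) (by omega) (by omega) h2 with hh | ⟨hh, _⟩ <;> omega
    · rcases idx i 2 (by omega) (by omega) (by omega) h1 with rfl | ⟨rfl, h2n⟩
      · rcases idx 3 n (by omega) (by omega) le_rfl (h2.trans hgn.symm) with hh | ⟨hh, _⟩ <;> omega
      · omega
  -- bags covering consecutive edges
  have h01 : G.Adj (c.getVert 0) (c.getVert 1) := c.adj_getVert_succ (by omega)
  have h12 : G.Adj (c.getVert 1) (c.getVert 2) := c.adj_getVert_succ (by omega)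
  have h23 : G.Adj (c.getVert 2) (c.getVert 3) := c.adj_getVert_succ (by omega)
  obtain ⟨t0, ht00, ht01⟩ := D.covers_edge h01
  obtain ⟨t1, ht11, ht12⟩ := D.covers_edge h12
  obtain ⟨t2, ht22, ht23⟩ := D.covers_edge h23
  have hv1t2 : c.getVert 1 ∉ D.bag t2 := fun hmem' =>
    hne13 (hsame t2 _ _ hmem' ht23 (hmem 1 (by omega)) (hmem 3 (by omega)) hd13)
  -- the walk from t0 to t2 through bags containing getVert 1 or getVert 2
  obtain ⟨WA, hWA⟩ := subtree_walk D (c.getVert 1) ht01 ht11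
  obtain ⟨WB, hWB⟩ := subtree_walk D (c.getVert 2) ht12 ht22
  have hW12sup : ∀ t ∈ (WA.append WB).bypass.support,
      c.getVert 1 ∈ D.bag t ∨ c.getVert 2 ∈ D.bag t := by
    intro t ht
    have := (WA.append WB).support_bypass_subset ht
    rw [SimpleGraph.Walk.mem_support_append_iff] at this
    rcases this with h' | h'
    · exact Or.inl (hWA _ h')
    · exact Or.inr (hWB _ h')
  obtain ⟨a, b, hab, w1, w2, heq, hPa, hPb⟩ :=
    exit_dart (fun t => c.getVert 1 ∈ D.bag t) (WA.append WB).bypass ht01 hv1t2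
  have hbsup : b ∈ (WA.append WB).bypass.support := by
    rw [heq, SimpleGraph.Walk.mem_support_append_iff]
    right
    rw [SimpleGraph.Walk.support_cons]
    exact List.mem_cons_of_mem _ w2.start_mem_support
  have hv2b : c.getVert 2 ∈ D.bag b := (hW12sup b hbsup).resolve_left hPb
  have htrail : (WA.append WB).bypass.edges.Nodup :=
    ((WA.append WB).bypass_isPath).isTrail.edges_nodup
  have hednd : s(a,b) ∉ w1.edges ∧ s(a,b) ∉ w2.edges := by
    rw [heq, SimpleGraph.Walk.edges_append, SimpleGraph.Walk.edges_cons] at htrail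
    have h' := List.nodup_middle.mp htrail
    have h'' := (List.nodup_cons.mp h').1
    rw [List.mem_append] at h''
    push_neg at h''
    exact h''
  -- the walk from t2 to t0 along the rest of the cycle
  obtain ⟨W3, hW3⟩ := decomp_walk_seg D c 3 n (by omega) le_rfl t2 t0 ht23
    (by have hx : c.getVert n = c.getVert 0 := hgn.trans hg0.symm; rw [hx]; exact ht00)
  by_cases he3 : s(a, b) ∈ W3.edges
  · -- some dart of W3 crosses the edge (a, b); get a cycle vertex in both bags
    rw [show W3.edges = W3.darts.map SimpleGraph.Dart.edge from rfl, List.mem_map] at he3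
    obtain ⟨d, hd, hde⟩ := he3
    obtain ⟨k, hk3, hkn, hkf, hks⟩ := hW3 d hd
    have hdc : (d.fst = a ∧ d.snd = b) ∨ (d.fst = b ∧ d.snd = a) := by
      have : s(d.fst, d.snd) = s(a, b) := hde
      exact Sym2.eq_iff.mp this
    have hkab : c.getVert k ∈ D.bag a ∧ c.getVert k ∈ D.bag b := by
      rcases hdc with ⟨h1, h2⟩ | ⟨h1, h2⟩
      · exact ⟨h1 ▸ hkf, h2 ▸ hks⟩
      · exact ⟨h2 ▸ hks, h1 ▸ hkf⟩
    have hune : c.getVert k ≠ c.getVert 1 := fun hh => hPb (hh ▸ hkab.2)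
    have hedge1 : s(c.getVert k, c.getVert 1) ∈ c.edges :=
      hsame a _ _ hkab.1 hPa (hmem k hkn) (hmem 1 (by omega)) hune
    -- deduce k = n, so that getVert k = v
    have hkeq : k = n := by
      obtain ⟨i, hi, hcase⟩ := mem_edges_exists_idx hedge1
      rcases hcase with ⟨h1, h2⟩ | ⟨h1, h2⟩
      · rcases idx (i+1) 1 (by omega) (by omega) (by omega) h2 with hh | ⟨hh, _⟩
        · have hi0 : i = 0 := by omega
          subst hi0
          rcases idx 0 k (by omega) (by omega) (by omega) h1 with hh2 | ⟨_, hh2⟩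
          · omega
          · exact hh2
        · omega
      · rcases idx i 1 (by omega) (by omega) (by omega) h1 with rfl | ⟨rfl, h1n⟩
        · rcases idx 2 k (by omega) (by omega) (by omega) h2 with hh | ⟨hh, _⟩ <;> omega
        · omega
    subst hkeq
    have hvb : v ∈ D.bag b := by rw [← hgn]; exact hkab.2
    exact hne02 (hsame b v (c.getVert 2) hvb hv2b (c.start_mem_support)
      (hmem 2 (by omega)) hd02)
  · -- otherwise the tree has a cycle through the bridge (a, b)
    have hbridge : Tg.IsBridge s(a, b) :=
      (SimpleGraph.isAcyclic_iff_forall_edge_isBridge.mp D.isTree.2)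
        (Tg.mem_edgeSet.mpr hab)
    have hnr := SimpleGraph.isBridge_iff.mp hbridge
    apply hnr
    rw [SimpleGraph.reachable_delete_edges_iff_exists_walk]
    refine ⟨w1.reverse.append (W3.reverse.append w2.reverse), ?_⟩
    simp only [SimpleGraph.Walk.edges_append, SimpleGraph.Walk.edges_reverse,
      List.mem_append, List.mem_reverse]
    push_neg
    exact ⟨hednd.1, he3, hednd.2⟩
end

section
/- A finite graph is chordal if and only if every minimal vertex separator is a clique. -/
open SimpleGraph

/-- `X` is a `u`–`v` separator: `u, v ∉ X` and every `u`–`v` walk meets `X`. -/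
def IsSepBetween {V : Type*} (G : SimpleGraph V) (u v : V) (X : Set V) : Prop :=
  u ∉ X ∧ v ∉ X ∧ ∀ p : G.Walk u v, ∃ x ∈ X, x ∈ p.support

/-- `X` is a minimal separator: for some nonadjacent `u`, `v` it is
inclusion-minimal among `u`–`v` separators. -/
def IsMinimalSeparator {V : Type*} (G : SimpleGraph V) (X : Set V) : Prop :=
  ∃ u v, ¬ G.Adj u v ∧ IsSepBetween G u v X ∧ ∀ Y ⊆ X, IsSepBetween G u v Y → Y = X

open Walk

namespace ChordalAux

variable {V : Type*} {G : SimpleGraph V} {X : Set V}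

lemma support_getElem_eq_getVert {a b : V} (p : G.Walk a b) :
    ∀ i (h : i < p.support.length), p.support[i] = p.getVert i := by
  induction p with
  | nil =>
    intro i h
    simp only [Walk.support_nil, List.length_singleton] at h
    interval_cases i
    simp [Walk.getVert_zero]
  | cons hadj q ih =>
    intro i h
    cases i with
    | zero => simp [Walk.support_cons]
    | succ i =>
      simp only [Walk.support_cons, List.getElem_cons_succ, Walk.getVert_cons_succ]
      exact ih i (by simpa [Walk.length_support] using (by simpa [Walk.support_cons, Walk.length_support] using h : i + 1 < q.length + 1 + 1))

lemma edge_index_mem_edges {a b : V} (p : G.Walk a b) :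
    ∀ i, i < p.length → s(p.getVert i, p.getVert (i+1)) ∈ p.edges := by
  induction p with
  | nil => intro i h; simp at h
  | cons hadj q ih =>
    intro i h
    cases i with
    | zero =>
      simp [Walk.edges_cons, Walk.getVert_zero, Walk.getVert_cons_succ]
    | succ i =>
      simp only [Walk.getVert_cons_succ, Walk.edges_cons]
      exact List.mem_cons_of_mem _ (ih i (by simpa [Walk.length_cons] using h))

lemma exists_index_of_mem_edges {a b : V} (p : G.Walk a b) {e : Sym2 V} (he : e ∈ p.edges) :
    ∃ i, i < p.length ∧ e = s(p.getVert i, p.getVert (i+1)) := by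
  induction p with
  | nil => simp at he
  | cons hadj q ih =>
    rw [Walk.edges_cons, List.mem_cons] at he
    rcases he with he | he
    · exact ⟨0, by simp [Walk.length_cons], by simpa [Walk.getVert_cons_succ, Walk.getVert_zero] using he⟩
    · obtain ⟨i, hi, hei⟩ := ih he
      exact ⟨i + 1, by simp [Walk.length_cons]; omega, by simpa [Walk.getVert_cons_succ] using hei⟩

lemma cycle_getVert_injOn {v0 : V} {c : G.Walk v0 v0} (hc : c.IsCycle) :
    ∀ i j, 1 ≤ i → i ≤ c.length → 1 ≤ j → j ≤ c.length → c.getVert i = c.getVert j → i = j := by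
  intro i j hi1 hi hj1 hj hij
  have hlen : c.support.length = c.length + 1 := c.length_support
  have hnd := hc.support_nodup
  have h1 : c.support.tail[i-1]'(by simp [List.length_tail, hlen]; omega) =
      c.support.tail[j-1]'(by simp [List.length_tail, hlen]; omega) := by
    rw [List.getElem_tail, List.getElem_tail]
    have e1 : i - 1 + 1 = i := by omega
    have e2 : j - 1 + 1 = j := by omega
    simp_rw [e1, e2]
    rw [support_getElem_eq_getVert c i (by omega), support_getElem_eq_getVert c j (by omega)]
    exact hij
  have := (List.Nodup.getElem_inj_iff hnd).mp h1
  omega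

lemma exists_segment {a b : V} (c : G.Walk a b) :
    ∀ j, j ≤ c.length → ∀ i, i ≤ j → ∃ w : G.Walk (c.getVert i) (c.getVert j),
      w.length = j - i ∧ ∀ z ∈ w.support, ∃ k, i ≤ k ∧ k ≤ j ∧ z = c.getVert k := by
  intro j
  induction j with
  | zero =>
    intro _ i hi
    interval_cases i
    exact ⟨Walk.nil, by simp, by intro z hz; simp at hz; exact ⟨0, le_rfl, le_rfl, by simp [hz]⟩⟩
  | succ j ih =>
    intro hj i hi
    rcases Nat.eq_or_lt_of_le hi with rfl | hilt
    · exact ⟨Walk.nil, by simp, by intro z hz; simp at hz; exact ⟨j+1, le_rfl, le_rfl, by simp [hz]⟩⟩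
    · obtain ⟨w, hwl, hws⟩ := ih (by omega) i (by omega)
      refine ⟨w.concat (c.adj_getVert_succ (by omega)), ?_, ?_⟩
      · rw [Walk.length_concat]; omega
      · intro z hz
        rw [Walk.support_concat, List.mem_append] at hz
        rcases hz with hz | hz
        · obtain ⟨k, h1, h2, h3⟩ := hws z hz
          exact ⟨k, h1, by omega, h3⟩
        · simp at hz
          exact ⟨j + 1, by omega, le_rfl, hz⟩

/-- `z` is reachable from `c` by a walk avoiding `X`. -/
def SideOf (G : SimpleGraph V) (X : Set V) (c z : V) : Prop :=
  ∃ p : G.Walk c z, ∀ r ∈ p.support, r ∉ X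

lemma SideOf.extend {c s z : V} (h : SideOf G X c s) (hadj : G.Adj s z) (hz : z ∉ X) :
    SideOf G X c z := by
  obtain ⟨p, hp⟩ := h
  refine ⟨p.concat hadj, ?_⟩
  intro r hr
  rw [Walk.support_concat, List.mem_append] at hr
  rcases hr with hr | hr
  · exact hp r hr
  · simp at hr; subst hr; exact hz

lemma SideOf.nil {c : V} (hc : c ∉ X) : SideOf G X c c :=
  ⟨Walk.nil, by intro r hr; simp at hr; subst hr; exact hc⟩

lemma sideOf_of_path {c : V} : ∀ {s t : V} (w : G.Walk s t), w.IsPath →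
    (∀ z ∈ w.support, z = t ∨ z ∉ X) → SideOf G X c s →
    ∀ z ∈ w.support, z ≠ t → z ∉ X ∧ SideOf G X c z := by
  intro s t w
  induction w with
  | nil =>
    intro _ _ _ z hz hzt
    simp at hz
    exact absurd hz hzt
  | @cons s s' t hadj w ih =>
    intro hpath hw hs z hz hzt
    rw [Walk.support_cons, List.mem_cons] at hz
    have hsX : s ∉ X := by
      obtain ⟨q, hq⟩ := hs
      exact hq s (Walk.end_mem_support q)
    rcases hz with rfl | hz
    · exact ⟨hsX, hs⟩
    · by_cases hst : s' = t
      · subst hst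
        -- w : G.Walk s' t with s' = t is a path from t to t, hence nil
        cases w with
        | nil => simp at hz; exact absurd hz hzt
        | cons h' w' =>
          exfalso
          have := hpath.support_nodup
          rw [Walk.support_cons, Walk.support_cons] at this
          have h1 := List.nodup_cons.mp this
          have h2 := List.nodup_cons.mp h1.2
          exact h2.1 (Walk.end_mem_support w')
      · have hs'X : s' ∉ X := by
          rcases hw s' (by simp) with h | h
          · exact absurd h hst
          · exact h
        exact ih hpath.of_cons (fun r hr => hw r (by simp [hr])) (hs.extend hadj hs'X) z hz hzt

lemma not_both_sides {u v : V} (hsep : IsSepBetween G u v X) {z : V}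
    (hu : SideOf G X u z) (hv : SideOf G X v z) : False := by
  obtain ⟨p, hp⟩ := hu
  obtain ⟨q, hq⟩ := hv
  obtain ⟨x, hxX, hxs⟩ := hsep.2.2 (p.append q.reverse)
  rw [Walk.mem_support_append_iff] at hxs
  rcases hxs with h | h
  · exact hp x h hxX
  · rw [Walk.support_reverse, List.mem_reverse] at h
    exact hq x h hxX

lemma exists_shorter_core {a b : V} (p : G.Walk a b) {i j : ℕ} (hij : i < j)
    (hj : j ≤ p.length) (hadj : G.Adj (p.getVert i) (p.getVert j)) (hne : j ≠ i + 1) :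
    ∃ w : G.Walk a b, w.length < p.length ∧ ∀ z ∈ w.support, z ∈ p.support := by
  obtain ⟨w1, hw1l, hw1s⟩ := exists_segment p i (by omega) 0 (by omega)
  obtain ⟨w2, hw2l, hw2s⟩ := exists_segment p p.length le_rfl j hj
  refine ⟨(w1.copy p.getVert_zero rfl).append (Walk.cons hadj (w2.copy rfl p.getVert_length)),
    ?_, ?_⟩
  · rw [Walk.length_append, Walk.length_cons, Walk.length_copy, Walk.length_copy,
      hw1l, hw2l]
    omega
  · intro z hz
    rw [Walk.mem_support_append_iff] at hz
    rcases hz with hz | hz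
    · rw [Walk.support_copy] at hz
      obtain ⟨k, _, hk2, rfl⟩ := hw1s z hz
      exact Walk.mem_support_iff_exists_getVert.mpr ⟨k, rfl, by omega⟩
    · rw [Walk.support_cons, List.mem_cons] at hz
      rcases hz with rfl | hz
      · exact Walk.mem_support_iff_exists_getVert.mpr ⟨i, rfl, by omega⟩
      · rw [Walk.support_copy] at hz
        obtain ⟨k, _, hk2, rfl⟩ := hw2s z hz
        exact Walk.mem_support_iff_exists_getVert.mpr ⟨k, rfl, by omega⟩

lemma exists_shorter {a b x y : V} (p : G.Walk a b) (hx : x ∈ p.support) (hy : y ∈ p.support)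
    (hadj : G.Adj x y) (he : s(x, y) ∉ p.edges) :
    ∃ w : G.Walk a b, w.length < p.length ∧ ∀ z ∈ w.support, z ∈ p.support := by
  obtain ⟨i, hxi, hi⟩ := Walk.mem_support_iff_exists_getVert.mp hx
  obtain ⟨j, hyj, hj⟩ := Walk.mem_support_iff_exists_getVert.mp hy
  subst hxi hyj
  have hij : i ≠ j := by rintro rfl; exact hadj.ne rfl
  rcases lt_or_gt_of_ne hij with h | h
  · refine exists_shorter_core p h hj hadj (fun hc => he ?_)
    subst hc
    exact edge_index_mem_edges p i (by omega)
  · refine exists_shorter_core p h hi hadj.symm (fun hc => he ?_)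
    subst hc
    rw [Sym2.eq_swap]
    exact edge_index_mem_edges p j (by omega)

lemma sep_compl {u v : V} (hne : u ≠ v) (hadj : ¬G.Adj u v) :
    IsSepBetween G u v {z | z ≠ u ∧ z ≠ v} := by
  refine ⟨by simp, by simp, ?_⟩
  intro p
  by_contra hcon
  push_neg at hcon
  simp only [Set.mem_setOf_eq] at hcon
  cases p with
  | nil => exact hne rfl
  | cons h q =>
    rename_i w
    have hw : w ∈ (Walk.cons h q).support := by
      rw [Walk.support_cons, List.mem_cons]; right; exact q.start_mem_support
    have := hcon w
    have hw2 : w = u ∨ w = v := by by_contra hc; push_neg at hc; exact this ⟨hc.1, hc.2⟩ hw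
    rcases hw2 with rfl | rfl
    · exact h.ne rfl
    · exact hadj h

lemma exists_min_sep [Finite V] {u v : V} (hne : u ≠ v) (hadj : ¬G.Adj u v) :
    ∃ X : Set V, ¬ G.Adj u v ∧ IsSepBetween G u v X ∧ ∀ Y ⊆ X, IsSepBetween G u v Y → Y = X := by
  classical
  have hex : ∃ n, ∃ X : Set V, IsSepBetween G u v X ∧ X.ncard = n :=
    ⟨_, _, sep_compl hne hadj, rfl⟩
  obtain ⟨X, hX, hXcard⟩ := Nat.find_spec hex
  refine ⟨X, hadj, hX, ?_⟩
  intro Y hYX hY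
  have h1 : Nat.find hex ≤ Y.ncard := Nat.find_min' hex ⟨Y, hY, rfl⟩
  exact Set.eq_of_subset_of_ncard_le hYX (by omega) (Set.toFinite X)

theorem chordal_of_cliques [Finite V]
    (h : ∀ X : Set V, IsMinimalSeparator G X → G.IsClique X) : IsChordal G := by
  intro v0 c hc hlen
  set x1 := c.getVert 1 with hx1
  set x2 := c.getVert 2 with hx2
  set x3 := c.getVert 3 with hx3
  have inj := cycle_getVert_injOn hc
  have h0len : c.getVert 0 = c.getVert c.length := by
    rw [c.getVert_zero, c.getVert_length]
  have hx1s : x1 ∈ c.support := Walk.mem_support_iff_exists_getVert.mpr ⟨1, rfl, by omega⟩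
  have hx2s : x2 ∈ c.support := Walk.mem_support_iff_exists_getVert.mpr ⟨2, rfl, by omega⟩
  have hx3s : x3 ∈ c.support := Walk.mem_support_iff_exists_getVert.mpr ⟨3, rfl, by omega⟩
  have hx13 : x1 ≠ x3 := fun hcon => by have := inj 1 3 (by omega) (by omega) (by omega) (by omega) hcon; omega
  by_cases hadj13 : G.Adj x1 x3
  · refine ⟨x1, x3, hx1s, hx3s, hadj13, ?_⟩
    intro hmem
    obtain ⟨i, hi, hei⟩ := exists_index_of_mem_edges c hmem
    rw [Sym2.eq_iff] at hei
    rcases hei with ⟨h1, h2⟩ | ⟨h1, h2⟩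
    · rcases Nat.eq_zero_or_pos i with rfl | hpos
      · rw [h0len] at h1
        have := inj 1 c.length (by omega) (by omega) (by omega) le_rfl h1
        omega
      · have := inj 1 i (by omega) (by omega) (by omega) (by omega) h1
        have := inj 3 (i+1) (by omega) (by omega) (by omega) (by omega) h2
        omega
    · have := inj 1 (i+1) (by omega) (by omega) (by omega) (by omega) h1
      rcases Nat.eq_zero_or_pos i with rfl | hpos
      · rw [h0len] at h2
        have := inj 3 c.length (by omega) (by omega) (by omega) le_rfl h2
        omega
      · have := inj 3 i (by omega) (by omega) (by omega) (by omega) h2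
        omega
  · -- main case
    obtain ⟨X, _, hsep, hmin⟩ := exists_min_sep hx13 hadj13
    have hclique := h X ⟨x1, x3, hadj13, hsep, hmin⟩
    -- x2 ∈ X via the short walk x1-x2-x3
    have hadj12 : G.Adj x1 x2 := c.adj_getVert_succ (by omega)
    have hadj23 : G.Adj x2 x3 := c.adj_getVert_succ (by omega)
    have hx2X : x2 ∈ X := by
      obtain ⟨z, hzX, hzs⟩ := hsep.2.2 (Walk.cons hadj12 (Walk.cons hadj23 Walk.nil))
      simp only [Walk.support_cons, Walk.support_nil, List.mem_cons, List.mem_singleton] at hzs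
      rcases hzs with rfl | rfl | (rfl | h')
      · exact absurd hzX hsep.1
      · exact hzX
      · exact absurd hzX hsep.2.1
      · simp at h'
    -- walk from x1 to x3 the other way around
    obtain ⟨wA, _, hwAs⟩ := exists_segment c c.length le_rfl 3 (by omega)
    obtain ⟨wB, _, hwBs⟩ := exists_segment c 1 (by omega) 0 (by omega)
    have w2 : G.Walk x1 x3 :=
      ((wA.copy rfl c.getVert_length).append (wB.copy c.getVert_zero rfl)).reverse
    obtain ⟨z, hzX, hzs⟩ := hsep.2.2
      (((wA.copy rfl c.getVert_length).append (wB.copy c.getVert_zero rfl)).reverse)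
    rw [Walk.support_reverse, List.mem_reverse, Walk.mem_support_append_iff] at hzs
    have hz_idx : ∃ k, (3 ≤ k ∧ k ≤ c.length ∨ k ≤ 1) ∧ z = c.getVert k := by
      rcases hzs with hz | hz
      · rw [Walk.support_copy] at hz
        obtain ⟨k, h1, h2, h3⟩ := hwAs z hz
        exact ⟨k, Or.inl ⟨h1, h2⟩, h3⟩
      · rw [Walk.support_copy] at hz
        obtain ⟨k, h1, h2, h3⟩ := hwBs z hz
        exact ⟨k, Or.inr h2, h3⟩
    obtain ⟨k, hk, rfl⟩ := hz_idx
    have hzx1 : c.getVert k ≠ x1 := fun hcon => hsep.1 (hcon ▸ hzX)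
    have hzx3 : c.getVert k ≠ x3 := fun hcon => hsep.2.1 (hcon ▸ hzX)
    have hzx2 : c.getVert k ≠ x2 := by
      intro hcon
      rcases hk with ⟨h3k, hkl⟩ | hk1
      · have := inj k 2 (by omega) hkl (by omega) (by omega) hcon
        omega
      · rcases Nat.le_one_iff_eq_zero_or_eq_one.mp hk1 with rfl | rfl
        · rw [h0len] at hcon
          have := inj c.length 2 (by omega) le_rfl (by omega) (by omega) hcon
          omega
        · have := inj 1 2 (by omega) (by omega) (by omega) (by omega) hcon
          omega
    have hzs' : c.getVert k ∈ c.support := by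
      rcases hk with ⟨_, hkl⟩ | hk1
      · exact Walk.mem_support_iff_exists_getVert.mpr ⟨k, rfl, hkl⟩
      · exact Walk.mem_support_iff_exists_getVert.mpr ⟨k, rfl, by omega⟩
    have hadj2z : G.Adj x2 (c.getVert k) := hclique hx2X hzX (Ne.symm hzx2)
    refine ⟨x2, c.getVert k, hx2s, hzs', hadj2z, ?_⟩
    intro hmem
    obtain ⟨i, hi, hei⟩ := exists_index_of_mem_edges c hmem
    rw [Sym2.eq_iff] at hei
    rcases hei with ⟨h1, h2⟩ | ⟨h1, h2⟩
    · rcases Nat.eq_zero_or_pos i with rfl | hpos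
      · rw [h0len] at h1
        have := inj 2 c.length (by omega) (by omega) (by omega) le_rfl h1
        omega
      · have h2i := inj 2 i (by omega) (by omega) (by omega) (by omega) h1
        rw [← h2i] at h2
        exact hzx3 h2
    · have h2i := inj 2 (i+1) (by omega) (by omega) (by omega) (by omega) h1
      have hieq : i = 1 := by omega
      subst hieq
      exact hzx1 h2

/-- connector predicate -/
def ConnAux {V : Type*} (G : SimpleGraph V) (X : Set V) (cs a b : V) (w : G.Walk a b) : Prop :=
  ∀ z ∈ w.support, z = a ∨ z = b ∨ (z ∉ X ∧ SideOf G X cs z)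

lemma exists_conn {u v a b : V} (hu : u ∉ X)
    (P : G.Walk u v) (hP : P.IsPath) (haP : a ∈ P.support)
    (hPp : ∀ z ∈ P.support, z ∈ X → z = a)
    (Q : G.Walk u v) (hQ : Q.IsPath) (hbQ : b ∈ Q.support)
    (hQp : ∀ z ∈ Q.support, z ∈ X → z = b) :
    ∃ w : G.Walk a b, ConnAux G X u a b w := by
  classical
  have hside1 := sideOf_of_path (P.takeUntil a haP) (hP.takeUntil haP)
    (fun z hz => (em (z = a)).imp id
      (fun h hzX => h (hPp z (P.support_takeUntil_subset haP hz) hzX)))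
    (SideOf.nil hu)
  have hside2 := sideOf_of_path (Q.takeUntil b hbQ) (hQ.takeUntil hbQ)
    (fun z hz => (em (z = b)).imp id
      (fun h hzX => h (hQp z (Q.support_takeUntil_subset hbQ hz) hzX)))
    (SideOf.nil hu)
  refine ⟨(P.takeUntil a haP).reverse.append (Q.takeUntil b hbQ), ?_⟩
  intro z hz
  rw [Walk.mem_support_append_iff] at hz
  rcases hz with hz | hz
  · rw [Walk.support_reverse, List.mem_reverse] at hz
    by_cases hza : z = a
    · exact Or.inl hza
    · exact Or.inr (Or.inr (hside1 z hz hza))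
  · by_cases hzb : z = b
    · exact Or.inr (Or.inl hzb)
    · exact Or.inr (Or.inr (hside2 z hz hzb))

lemma exists_min_conn {cs a b : V} (hex0 : ∃ w : G.Walk a b, ConnAux G X cs a b w) :
    ∃ p : G.Walk a b, p.IsPath ∧ ConnAux G X cs a b p ∧
      ∀ w : G.Walk a b, ConnAux G X cs a b w → p.length ≤ w.length := by
  classical
  have hex : ∃ n, ∃ w : G.Walk a b, ConnAux G X cs a b w ∧ w.length = n :=
    ⟨hex0.choose.length, hex0.choose, hex0.choose_spec, rfl⟩
  obtain ⟨w, hw, hwl⟩ := Nat.find_spec hex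
  refine ⟨w.bypass, w.bypass_isPath, fun z hz => hw z (w.support_bypass_subset hz), ?_⟩
  intro w' hw'
  calc w.bypass.length ≤ w.length := w.length_bypass_le
    _ = Nat.find hex := hwl
    _ ≤ w'.length := Nat.find_min' hex ⟨w', hw', rfl⟩

lemma length_two_le {a b : V} (p : G.Walk a b) (hne : a ≠ b) (hab : ¬G.Adj a b) :
    2 ≤ p.length := by
  rcases Nat.lt_or_ge p.length 2 with h | h
  · interval_cases hl : p.length
    · exact absurd (Walk.eq_of_length_eq_zero hl) hne
    · exfalso
      have h1 := p.adj_getVert_succ (by omega : 0 < p.length)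
      rw [p.getVert_zero, show p.getVert (0+1) = b from
        (p.getVert_of_length_le (by omega))] at h1
      exact hab h1
  · exact h

theorem cliques_of_chordal (hch : IsChordal G) {Y : Set V} (hY : IsMinimalSeparator G Y) :
    G.IsClique Y := by
  classical
  obtain ⟨u, v, huv, hsep, hmin⟩ := hY
  intro a ha b hb hne
  by_contra hab
  -- for each x ∈ Y, a u-v path hitting Y exactly at x
  have getP : ∀ x ∈ Y, ∃ P : G.Walk u v, P.IsPath ∧ x ∈ P.support ∧
      (∀ z ∈ P.support, z ∈ Y → z = x) := by
    intro x hx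
    have hYne : (Y \ {x} : Set V) ≠ Y := by
      intro hcon
      have : x ∈ Y \ {x} := hcon.symm ▸ hx
      simp at this
    have hnsep : ¬ IsSepBetween G u v (Y \ {x}) :=
      fun hs => hYne (hmin _ Set.diff_subset hs)
    rw [IsSepBetween] at hnsep
    push_neg at hnsep
    obtain ⟨P0, hP0⟩ := hnsep (fun h => hsep.1 h.1) (fun h => hsep.2.1 h.1)
    refine ⟨P0.bypass, P0.bypass_isPath, ?_, ?_⟩
    · obtain ⟨y, hyY, hys⟩ := hsep.2.2 P0.bypass
      have hyx : y = x := by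
        by_contra hyx
        exact hP0 y ⟨hyY, hyx⟩ (P0.support_bypass_subset hys)
      exact hyx ▸ hys
    · intro z hz hzY
      by_contra hzx
      exact hP0 z ⟨hzY, hzx⟩ (P0.support_bypass_subset hz)
  obtain ⟨P, hPpath, haP, hPprop⟩ := getP a ha
  obtain ⟨Q, hQpath, hbQ, hQprop⟩ := getP b hb
  -- connectors on the u-side and v-side
  obtain ⟨p, hp_path, hp_conn, hp_min⟩ := exists_min_conn
    (exists_conn hsep.1 P hPpath haP hPprop Q hQpath hbQ hQprop)
  obtain ⟨q, hq_path, hq_conn, hq_min⟩ := exists_min_conn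
    (exists_conn hsep.2.1 P.reverse hPpath.reverse
      (by rw [Walk.support_reverse, List.mem_reverse]; exact haP)
      (by intro z hz; rw [Walk.support_reverse, List.mem_reverse] at hz; exact hPprop z hz)
      Q.reverse hQpath.reverse
      (by rw [Walk.support_reverse, List.mem_reverse]; exact hbQ)
      (by intro z hz; rw [Walk.support_reverse, List.mem_reverse] at hz; exact hQprop z hz))
  have hpl2 : 2 ≤ p.length := length_two_le p hne hab
  have hql2 : 2 ≤ q.length := length_two_le q hne hab
  have h_disj : ∀ z, z ∈ p.support → z ∈ q.support → z = a ∨ z = b := by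
    intro z hzp hzq
    by_contra hcon
    push_neg at hcon
    have h1 := ((hp_conn z hzp).resolve_left hcon.1).resolve_left hcon.2
    have h2 := ((hq_conn z hzq).resolve_left hcon.1).resolve_left hcon.2
    exact not_both_sides hsep h1.2 h2.2
  set c : G.Walk a a := p.append q.reverse with hc
  have hmemc : ∀ z, z ∈ c.support ↔ z ∈ p.support ∨ z ∈ q.support := by
    intro z
    rw [hc, Walk.mem_support_append_iff, Walk.support_reverse, List.mem_reverse]
  have hcyc : c.IsCycle := by
    refine ⟨⟨⟨?_⟩, ?_⟩, ?_⟩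
    · -- edges nodup
      rw [hc, Walk.edges_append, List.nodup_append]
      refine ⟨hp_path.edges_nodup, (hq_path.reverse).edges_nodup, ?_⟩
      intro e hep e' heq hee
      subst hee
      rw [Walk.edges_reverse, List.mem_reverse] at heq
      induction e using Sym2.ind with
      | _ x y =>
        have hxy : G.Adj x y := p.adj_of_mem_edges hep
        have hxp := p.fst_mem_support_of_mem_edges hep
        have hyp := p.snd_mem_support_of_mem_edges hep
        have hxq := q.fst_mem_support_of_mem_edges heq
        have hyq := q.snd_mem_support_of_mem_edges heq
        rcases h_disj x hxp hxq with rfl | rfl <;> rcases h_disj y hyp hyq with rfl | rfl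
        · exact hxy.ne rfl
        · exact hab hxy
        · exact hab hxy.symm
        · exact hxy.ne rfl
    · -- ne nil
      intro hnil
      have := congrArg Walk.length hnil
      rw [hc, Walk.length_append, Walk.length_reverse, Walk.length_nil] at this
      omega
    · -- support tail nodup
      have hsupp : c.support = p.support ++ q.reverse.support.tail :=
        Walk.support_append _ _
      have hps : p.support = a :: p.support.tail := p.support_eq_cons
      have hqs : q.reverse.support = b :: q.reverse.support.tail :=
        q.reverse.support_eq_cons
      rw [hsupp, hps, List.cons_append, List.tail_cons]
      have hnp : p.support.tail.Nodup ∧ a ∉ p.support.tail := by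
        have := hp_path.support_nodup
        rw [hps] at this
        exact ⟨(List.nodup_cons.mp this).2, (List.nodup_cons.mp this).1⟩
      have hnq : q.reverse.support.tail.Nodup ∧ b ∉ q.reverse.support.tail := by
        have := (hq_path.reverse).support_nodup
        rw [hqs] at this
        exact ⟨(List.nodup_cons.mp this).2, (List.nodup_cons.mp this).1⟩
      rw [List.nodup_append]
      refine ⟨hnp.1, hnq.1, ?_⟩
      intro z hz1 z' hz2 hzz
      subst hzz
      have hzp : z ∈ p.support := List.mem_of_mem_tail hz1
      have hzq : z ∈ q.support := by
        have := List.mem_of_mem_tail hz2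
        rwa [Walk.support_reverse, List.mem_reverse] at this
      rcases h_disj z hzp hzq with rfl | rfl
      · exact hnp.2 hz1
      · exact hnq.2 hz2
  have hclen : 4 ≤ c.length := by
    rw [hc, Walk.length_append, Walk.length_reverse]
    omega
  obtain ⟨x, y, hxs, hys, hxy, hne_e⟩ := hch a c hcyc hclen
  have hpe : s(x, y) ∉ p.edges := by
    intro h
    exact hne_e (by rw [hc, Walk.edges_append]; exact List.mem_append_left _ h)
  have hqe : s(x, y) ∉ q.edges := by
    intro h
    refine hne_e ?_
    rw [hc, Walk.edges_append]
    exact List.mem_append_right _ (by rw [Walk.edges_reverse, List.mem_reverse]; exact h)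
  rw [hmemc] at hxs hys
  -- shortening arguments
  have shorten_p : x ∈ p.support → y ∈ p.support → False := by
    intro hxp hyp
    obtain ⟨w, hwlt, hws⟩ := exists_shorter p hxp hyp hxy hpe
    have hconn : ConnAux G Y u a b w := fun z hz => hp_conn z (hws z hz)
    have := hp_min w hconn
    omega
  have shorten_q : x ∈ q.support → y ∈ q.support → False := by
    intro hxq hyq
    obtain ⟨w, hwlt, hws⟩ := exists_shorter q hxq hyq hxy hqe
    have hconn : ConnAux G Y v a b w := fun z hz => hq_conn z (hws z hz)
    have := hq_min w hconn
    omega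
  by_cases hxp : x ∈ p.support
  · by_cases hyp : y ∈ p.support
    · exact shorten_p hxp hyp
    · have hyq : y ∈ q.support := hys.resolve_left hyp
      by_cases hxq : x ∈ q.support
      · exact shorten_q hxq hyq
      · have hx_int := ((hp_conn x hxp).resolve_left
            (fun h => hxq (h ▸ q.start_mem_support))).resolve_left
            (fun h => hxq (h ▸ q.end_mem_support))
        have hy_int := ((hq_conn y hyq).resolve_left
            (fun h => hyp (h ▸ p.start_mem_support))).resolve_left
            (fun h => hyp (h ▸ p.end_mem_support))
        exact not_both_sides hsep hx_int.2 (hy_int.2.extend hxy.symm hx_int.1)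
  · have hxq : x ∈ q.support := hxs.resolve_left hxp
    by_cases hyq : y ∈ q.support
    · exact shorten_q hxq hyq
    · have hyp : y ∈ p.support := hys.resolve_right hyq
      have hx_int := ((hq_conn x hxq).resolve_left
          (fun h => hxp (h ▸ p.start_mem_support))).resolve_left
          (fun h => hxp (h ▸ p.end_mem_support))
      have hy_int := ((hp_conn y hyp).resolve_left
          (fun h => hyq (h ▸ q.start_mem_support))).resolve_left
          (fun h => hyq (h ▸ q.end_mem_support))
      exact not_both_sides hsep (hy_int.2.extend hxy.symm hx_int.1) hx_int.2

end ChordalAux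

theorem stmt_2 {V : Type*} [Finite V] (G : SimpleGraph V) :
    IsChordal G ↔ ∀ X : Set V, IsMinimalSeparator G X → G.IsClique X := by
  constructor
  · intro hch X hX
    exact ChordalAux.cliques_of_chordal hch hX
  · intro h
    exact ChordalAux.chordal_of_cliques h
end

section
/- Let X be a finite clique in a chordal graph G, and let C be a full component of G − X (i.e., N_G(C) = X). Then C contains a vertex adjacent to every vertex of X. -/
open SimpleGraph

/-- A component `c` of `G - X` is full if every vertex of `X` has a neighbour in `c`,
i.e. `N_G(c) = X`. -/
def IsFullComponent {V : Type*} (G : SimpleGraph V) (X : Set V)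
    (c : (G.induce Xᶜ).ConnectedComponent) : Prop :=
  ∀ x ∈ X, ∃ w : ↥Xᶜ, (G.induce Xᶜ).connectedComponentMk w = c ∧ G.Adj x ↑w

section Aux

variable {W : Type*}

/-- Build a walk from a chain list. -/
def mkw (H : SimpleGraph W) : (a b : W) → (l : List W) → List.Chain H.Adj a l →
    l.getLastD a = b → H.Walk a b
  | _, _, [], _, h => h ▸ Walk.nil
  | a, b, x :: t, hc, h =>
    Walk.cons (List.chain_cons.mp hc).1
      (mkw H x b t (List.chain_cons.mp hc).2 (by rw [List.getLastD_cons] at h; exact h))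

lemma mkw_support (H : SimpleGraph W) : ∀ (a b : W) (l : List W) (hc : List.Chain H.Adj a l)
    (h : l.getLastD a = b), (mkw H a b l hc h).support = a :: l
  | a, b, [], _, h => by subst h; rfl
  | a, b, x :: t, hc, h => by
    simp only [mkw, Walk.support_cons, mkw_support]; exact congrArg (a :: ·) (mkw_support _ _ _ _ _ _)

lemma mkw_length (H : SimpleGraph W) : ∀ (a b : W) (l : List W) (hc : List.Chain H.Adj a l)
    (h : l.getLastD a = b), (mkw H a b l hc h).length = l.length
  | a, b, [], _, h => by subst h; rfl
  | a, b, x :: t, hc, h => by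
    simp [mkw, Walk.length_cons, mkw_length]; exact mkw_length _ _ _ _ _ _

lemma mkw_edges (H : SimpleGraph W) : ∀ (a b : W) (l : List W) (hc : List.Chain H.Adj a l)
    (h : l.getLastD a = b), (mkw H a b l hc h).edges = List.zipWith (fun x y => s(x, y)) (a :: l) l
  | a, b, [], _, h => by subst h; rfl
  | a, b, x :: t, hc, h => by
    simp only [mkw, Walk.edges_cons, mkw_edges, List.zipWith]; exact congrArg (s(a, x) :: ·) (mkw_edges _ _ _ _ _ _)

lemma mem_pairs : ∀ (l : List W) (a : W) (e : Sym2 W),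
    e ∈ List.zipWith (fun x y => s(x, y)) (a :: l) l ↔
      ∃ i, ∃ h : i + 1 < (a :: l).length, e = s((a :: l)[i], (a :: l)[i+1])
  | [], a, e => by simp
  | x :: t, a, e => by
    rw [List.zipWith, List.mem_cons, mem_pairs t x e]
    constructor
    · rintro (rfl | ⟨i, h, rfl⟩)
      · exact ⟨0, by simp, rfl⟩
      · exact ⟨i + 1, by simpa using h, rfl⟩
    · rintro ⟨i, h, rfl⟩
      match i with
      | 0 => left; rfl
      | i + 1 => right; exact ⟨i, by simpa using h, rfl⟩

lemma chain_concat {R : W → W → Prop} {b : W} :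
    ∀ {a : W} (l : List W), List.Chain R a l → R (l.getLastD a) b → List.Chain R a (l ++ [b])
  | a, [], _, h => List.Chain.cons h List.Chain.nil
  | a, x :: t, hc, h => by
    rw [List.cons_append]
    exact List.chain_cons.mpr ⟨(List.chain_cons.mp hc).1,
      chain_concat t (List.chain_cons.mp hc).2 (by rw [List.getLastD_cons] at h; exact h)⟩

/-- A walk along any nonempty chain list. -/
lemma walk_of_chain' (H : SimpleGraph W) (l : List W) (hl : 0 < l.length)
    (hc : List.Chain' H.Adj l) :
    ∃ q : H.Walk (l[0]'hl) (l[l.length - 1]'(by omega)), q.length = l.length - 1 := by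
  match l with
  | a :: t =>
    refine ⟨(mkw H a _ t hc ?_ : H.Walk a ((a :: t)[(a :: t).length - 1]'(by omega))), ?_⟩
    · rw [← List.getLast_eq_getElem (l := a :: t) (by simp)]
      exact (List.getLast_eq_getLastD (a := a) (l := t) (by simp)).symm
    · simp [mkw_length]; exact mkw_length _ _ _ _ _ _

lemma getElem_idx_congr {α : Type*} (l : List α) {i j : ℕ} (h : i = j) (hi : i < l.length) :
    l[i]'hi = l[j]'(h ▸ hi) := by subst h; rfl

end Aux

section Chord

variable {V : Type*} {G : SimpleGraph V}

lemma chord_of_cycle (hG : IsChordal G) (s' : V) (u : List V)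
    (hu : 3 ≤ u.length) (hnd : u.Nodup) (hs'u : s' ∉ u) (hch : List.Chain' G.Adj u)
    (h1 : G.Adj s' (u[0]'(by omega)))
    (h2 : G.Adj (u[u.length - 1]'(by omega)) s') :
    (∃ i j, ∃ hj : j < u.length, ∃ _ : i + 1 < j, G.Adj (u[i]'(by omega)) (u[j]'hj)) ∨
    (∃ i, ∃ hi : i + 1 < u.length, 1 ≤ i ∧ G.Adj s' (u[i]'(by omega))) := by
  match u with
  | a :: T =>
  simp only [List.length_cons] at hu
  have hT2 : 2 ≤ T.length := by omega
  have hlast : T.getLastD a = (a :: T)[(a :: T).length - 1]'(by simp) := by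
    rw [← List.getLast_eq_getElem (l := a :: T) (by simp)]
    exact (List.getLast_eq_getLastD (a := a) (l := T) (by simp)).symm
  have hchain : List.Chain G.Adj a (T ++ [s']) :=
    chain_concat T hch (by rw [hlast]; exact h2)
  set q : G.Walk a s' := mkw G a s' (T ++ [s']) hchain List.getLastD_concat with hq
  have hqsup : q.support = a :: (T ++ [s']) := mkw_support _ _ _ _ _ _
  have hqedges : q.edges = List.zipWith (fun x y => s(x, y)) (a :: (T ++ [s'])) (T ++ [s']) :=
    mkw_edges _ _ _ _ _ _
  have h1' : G.Adj s' a := by simpa using h1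
  have hulen : (a :: (T ++ [s'])).length = (a :: T).length + 1 := by simp
  have hgetl : ∀ i (hi : i < (a :: T).length),
      (a :: (T ++ [s']))[i]'(by simp only [hulen]; omega) = (a :: T)[i]'hi := fun i hi =>
    List.getElem_append_left (as := a :: T) (bs := [s']) hi
  have hgetlast : (a :: (T ++ [s']))[(a :: T).length]'(by simp only [hulen]; omega) = s' :=
    List.getElem_concat_length (l := a :: T) (a := s') rfl (by simp)
  have hndT : (a :: T).Nodup := hnd
  -- the closing edge is not among the path edges
  have hmem_edge : ∀ e ∈ q.edges, ∃ i, ∃ hi : i + 1 < (a :: T).length + 1,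
      e = s(((a :: (T ++ [s']))[i]'(by simp only [hulen]; omega)),
        ((a :: (T ++ [s']))[i+1]'(by simp only [hulen]; omega))) := by
    intro e he
    rw [hqedges, mem_pairs] at he
    obtain ⟨i, hi, rfl⟩ := he
    exact ⟨i, by simp only [hulen] at hi; omega, rfl⟩
  have hnotmem : s(s', a) ∉ q.edges := by
    intro hmem
    obtain ⟨i, hi, heq⟩ := hmem_edge _ hmem
    rcases Sym2.eq_iff.mp heq with ⟨hx, hy⟩ | ⟨hx, hy⟩
    · have hilt : i < (a :: T).length := by omega
      rw [hgetl i hilt] at hx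
      exact hs'u (hx ▸ List.getElem_mem _)
    · have hilt : i < (a :: T).length := by omega
      rw [hgetl i hilt] at hy
      have hi0 : i = 0 := by
        have := (hndT.getElem_inj_iff (i := 0) (hi := by simp) (j := i) (hj := hilt)).mp
        simpa using (this (by simp [← hy])).symm
      subst hi0
      have h1lt : (1 : ℕ) < (a :: T).length := by simp only [List.length_cons]; omega
      rw [hgetl 1 h1lt] at hx
      exact hs'u (hx ▸ List.getElem_mem _)
  set cyc : G.Walk s' s' := Walk.cons h1' q with hcyc
  have hcycle : cyc.IsCycle := by
    rw [hcyc, Walk.cons_isCycle_iff]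
    refine ⟨?_, by simpa [Sym2.eq_swap] using hnotmem⟩
    rw [Walk.isPath_def, hqsup]
    have haT : a ∉ T := (List.nodup_cons.mp hndT).1
    have hTnd : T.Nodup := (List.nodup_cons.mp hndT).2
    have hs'T : s' ∉ T := fun h => hs'u (List.mem_cons_of_mem _ h)
    have hs'a : s' ≠ a := fun h => hs'u (h ▸ List.mem_cons_self)
    refine List.nodup_cons.mpr ⟨?_, ?_⟩
    · simp only [List.mem_append, List.mem_singleton]
      rintro (h | h)
      · exact haT h
      · exact hs'a h.symm
    · refine List.nodup_append.mpr ⟨hTnd, List.nodup_singleton _, ?_⟩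
      intro t htT _ hts heq
      rw [List.mem_singleton] at hts
      exact hs'T (by subst heq; subst hts; exact htT)
  have hlen : 4 ≤ cyc.length := by
    rw [hcyc, Walk.length_cons, mkw_length]
    simp only [List.length_append, List.length_singleton]
    omega
  obtain ⟨x, z, hx, hz, hadj, hne⟩ := hG s' cyc hcycle hlen
  have hsup : cyc.support = s' :: (a :: (T ++ [s'])) := by rw [hcyc, Walk.support_cons, hqsup]
  have hedges : cyc.edges = s(s', a) :: q.edges := by rw [hcyc, Walk.edges_cons]
  have hclass : ∀ t ∈ cyc.support, t = s' ∨ ∃ i, ∃ hi : i < (a :: T).length, (a :: T)[i]'hi = t := by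
    intro t ht
    rw [hsup] at ht
    rcases List.mem_cons.mp ht with rfl | ht2
    · exact Or.inl rfl
    rcases List.mem_cons.mp ht2 with rfl | ht3
    · exact Or.inr ⟨0, by simp, rfl⟩
    rcases List.mem_append.mp ht3 with ht4 | ht5
    · obtain ⟨i, hi, rfl⟩ := List.mem_iff_getElem.mp ht4
      exact Or.inr ⟨i + 1, by simp only [List.length_cons]; omega, by simp⟩
    · exact Or.inl (List.mem_singleton.mp ht5)
  have hedge_consec : ∀ i (h : i + 1 < (a :: T).length),
      s((a :: T)[i]'(by omega), (a :: T)[i+1]'h) ∈ cyc.edges := by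
    intro i h
    rw [hedges]
    refine List.mem_cons_of_mem _ ?_
    rw [hqedges, mem_pairs]
    refine ⟨i, by simp only [hulen]; omega, ?_⟩
    rw [hgetl i (by omega), hgetl (i+1) h]
  have hedge_last : s((a :: T)[(a :: T).length - 1]'(by simp), s') ∈ cyc.edges := by
    rw [hedges]
    refine List.mem_cons_of_mem _ ?_
    rw [hqedges, mem_pairs]
    refine ⟨(a :: T).length - 1, by simp only [hulen, List.length_cons]; omega, ?_⟩
    have h2' : (a :: (T ++ [s']))[(a :: T).length - 1 + 1]'(by
        simp only [hulen, List.length_cons]; omega) = s' := by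
      convert hgetlast using 2 <;> (simp only [List.length_cons]; omega)
    rw [hgetl ((a :: T).length - 1) (by simp), h2']
  have hedge_first : s(s', (a :: T)[0]'(by simp)) ∈ cyc.edges := by
    rw [hedges]; simp
  have hcase_s' : ∀ j (hj : j < (a :: T).length), G.Adj s' ((a :: T)[j]'hj) →
      s(s', (a :: T)[j]'hj) ∉ cyc.edges →
      (∃ i, ∃ hi : i + 1 < (a :: T).length, 1 ≤ i ∧ G.Adj s' ((a :: T)[i]'(by omega))) := by
    intro j hj hadj' hne'
    have hj0 : j ≠ 0 := by
      rintro rfl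
      exact hne' hedge_first
    have hjlast : j ≠ (a :: T).length - 1 := by
      rintro rfl
      exact hne' (by rw [Sym2.eq_swap]; exact hedge_last)
    exact ⟨j, by omega, by omega, hadj'⟩
  rcases hclass x hx with rfl | ⟨i, hi, rfl⟩
  · rcases hclass z hz with rfl | ⟨j, hj, rfl⟩
    · exact absurd rfl hadj.ne
    · exact Or.inr (hcase_s' j hj hadj hne)
  · rcases hclass z hz with rfl | ⟨j, hj, rfl⟩
    · exact Or.inr (hcase_s' i hi hadj.symm (by rwa [Sym2.eq_swap]))
    · have hij : i ≠ j := fun h => absurd (h ▸ rfl) hadj.ne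
      rcases Nat.lt_or_ge i j with hlt | hge
      · rcases Nat.eq_or_lt_of_le (Nat.succ_le_of_lt hlt) with heq | hlt2
        · subst heq
          exact absurd (hedge_consec i hj) hne
        · exact Or.inl ⟨i, j, hj, hlt2, hadj⟩
      · have hlt : j < i := by omega
        rcases Nat.eq_or_lt_of_le (Nat.succ_le_of_lt hlt) with heq | hlt2
        · subst heq
          rw [Sym2.eq_swap] at hne
          exact absurd (hedge_consec j hi) hne
        · exact Or.inl ⟨j, i, hi, hlt2, hadj.symm⟩

end Chord

section Descent

variable {V : Type*} {G : SimpleGraph V}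

lemma descent (hG : IsChordal G) (s' : V) (L : List V) (hnd : L.Nodup) (hs' : s' ∉ L)
    (hch : List.Chain' G.Adj L)
    (hnochord : ∀ i j, ∀ hj : j < L.length, ∀ _ : i + 1 < j, ¬ G.Adj (L[i]'(by omega)) (L[j]'hj)) :
    ∀ j, ∀ hj : j < L.length, ∀ _ : 1 ≤ j, G.Adj s' (L[j]'hj) →
      G.Adj s' (L[0]'(by omega)) → G.Adj s' (L[1]'(by omega)) := by
  intro j
  induction j using Nat.strong_induction_on with
  | _ j IH =>
    intro hj h1j hadjj hadj0
    rcases Nat.eq_or_lt_of_le h1j with heq | h2j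
    · exact heq ▸ hadjj
    have h2j : 2 ≤ j := h2j
    set u := L.take (j + 1) with hu
    have hulen : u.length = j + 1 := by
      rw [hu, List.length_take]
      omega
    have hget : ∀ i (hi : i < j + 1), u[i]'(by omega) = L[i]'(by omega) := by
      intro i hi
      exact List.getElem_take (xs := L)
    rcases chord_of_cycle hG s' u (by omega) (List.Nodup.sublist (List.take_sublist _ _) hnd)
      (fun h => hs' (List.take_subset _ _ h)) (hch.prefix (List.take_prefix _ _))
      (by rw [hget 0 (by omega)]; exact hadj0)
      (by
        have : u[u.length - 1]'(by omega) = L[j]'hj := by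
          have := hget j (by omega)
          convert this using 2
          omega
        rw [this]; exact hadjj.symm) with h | h
    · obtain ⟨i, j', hj', hij', hadj'⟩ := h
      rw [hget i (by omega), hget j' (by omega)] at hadj'
      exact absurd hadj' (hnochord i j' (by omega) hij')
    · obtain ⟨i, hi, h1i, hadji⟩ := h
      rw [hget i (by omega)] at hadji
      exact IH i (by omega) (by omega) h1i hadji hadj0

end Descent

section Step

variable {V : Type*} {G : SimpleGraph V}

set_option maxHeartbeats 2000000 in
lemma step (hG : IsChordal G) {X : Set V} (hX : G.IsClique X)
    {c : (G.induce Xᶜ).ConnectedComponent} {s : V} (hs : s ∈ X) {Y : Set V} (hY : Y ⊆ X)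
    (hsY : s ∉ Y)
    (hwex : ∃ w : ↥Xᶜ, (G.induce Xᶜ).connectedComponentMk w = c ∧ G.Adj s ↑w)
    (hvex : ∃ v : ↥Xᶜ, (G.induce Xᶜ).connectedComponentMk v = c ∧ ∀ y ∈ Y, G.Adj ↑v y) :
    ∃ v : ↥Xᶜ, (G.induce Xᶜ).connectedComponentMk v = c ∧ (∀ y ∈ Y, G.Adj ↑v y) ∧
      G.Adj ↑v s := by
  classical
  obtain ⟨v₀, hv₀c, hv₀Y⟩ := hvex
  obtain ⟨w₀, hw₀c, hw₀s⟩ := hwex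
  obtain ⟨p₀⟩ := ConnectedComponent.exact (hv₀c.trans hw₀c.symm)
  let P : ℕ → Prop := fun n => ∃ (v w : ↥Xᶜ) (p : (G.induce Xᶜ).Walk v w), p.IsPath ∧
    (G.induce Xᶜ).connectedComponentMk v = c ∧ (∀ y ∈ Y, G.Adj ↑v y) ∧ G.Adj s ↑w ∧
    p.length = n
  have hPex : ∃ n, P n :=
    ⟨p₀.bypass.length, v₀, w₀, p₀.bypass, p₀.bypass_isPath, hv₀c, hv₀Y, hw₀s, rfl⟩
  obtain ⟨v, w, p, hpath, hvc, hvY, hws, hplen⟩ := Nat.find_spec hPex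
  set n := Nat.find hPex with hn
  have noGood : ∀ (v' w' : ↥Xᶜ) (q : (G.induce Xᶜ).Walk v' w'),
      (G.induce Xᶜ).connectedComponentMk v' = c → (∀ y ∈ Y, G.Adj ↑v' y) → G.Adj s ↑w' →
      n ≤ q.length := by
    intro v' w' q h1 h2 h3
    by_contra hlt
    push_neg at hlt
    exact Nat.find_min hPex (lt_of_le_of_lt q.length_bypass_le hlt)
      ⟨v', w', q.bypass, q.bypass_isPath, h1, h2, h3, rfl⟩
  set l : List ↥Xᶜ := p.support with hldef
  set L : List V := l.map Subtype.val with hLdef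
  have hllen : l.length = n + 1 := by rw [hldef, Walk.length_support, hplen]
  have hLlen : L.length = n + 1 := by rw [hLdef, List.length_map, hllen]
  have hl0 : l[0]'(by omega) = v := by
    have h := p.head_support
    rwa [← List.getElem_zero (l := p.support) (by simp)] at h
  have hllast : l[l.length - 1]'(by omega) = w := by
    have h := p.getLast_support
    rwa [List.getLast_eq_getElem] at h
  have hchainl : List.Chain' (G.induce Xᶜ).Adj l := p.isChain_adj_support
  have hgetLl : ∀ i, ∀ hi : i < n + 1,
      L[i]'(by rw [hLlen]; omega) = ↑(l[i]'(by rw [hllen]; omega)) := by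
    intro i hi
    exact List.getElem_map _
  have hLmem : ∀ x ∈ L, x ∈ Xᶜ := by
    intro x hx
    rw [hLdef] at hx
    obtain ⟨a, _, rfl⟩ := List.mem_map.mp hx
    exact a.2
  have hLnd : L.Nodup := by
    rw [hLdef]
    exact (hpath.support_nodup).map Subtype.val_injective
  have hLch : List.Chain' G.Adj L := by
    rw [hLdef]
    exact List.isChain_map_of_isChain Subtype.val (fun a b (h : (G.induce Xᶜ).Adj a b) => h)
      hchainl
  -- no vertex of the path except the last is adjacent to s
  have noAdjS : ∀ i, ∀ hi1 : i + 1 < n + 1, ¬ G.Adj s (L[i]'(by rw [hLlen]; omega)) := by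
    intro i hi1 hadj
    have htlen : (l.take (i+1)).length = i + 1 := by rw [List.length_take]; omega
    obtain ⟨q, hqlen⟩ := walk_of_chain' (G.induce Xᶜ) (l.take (i+1)) (by omega)
      (hchainl.prefix (List.take_prefix _ _))
    have e0 : (l.take (i+1))[0]'(by omega) = v := (List.getElem_take (xs := l)).trans hl0
    have e1 : (l.take (i+1))[(l.take (i+1)).length - 1]'(by omega) = l[i]'(by omega) := by
      have h := List.getElem_take (xs := l) (j := i + 1) (i := i)
        (h := by rw [htlen]; omega)
      convert h using 2 <;> omega
    rw [hgetLl i (by omega)] at hadj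
    have hge := noGood _ _ q (by rw [e0]; exact hvc) (by rw [e0]; exact hvY)
      (by rw [e1]; exact hadj)
    omega
  -- no chords along the path
  have noChord : ∀ i j, ∀ hj : j < L.length, ∀ hij : i + 1 < j,
      ¬ G.Adj (L[i]'(by omega)) (L[j]'hj) := by
    intro i j hj hij hadj
    rw [hLlen] at hj
    have hadj' : (G.induce Xᶜ).Adj (l[i]'(by omega)) (l[j]'(by omega)) := by
      rw [hgetLl i (by omega), hgetLl j (by omega)] at hadj
      exact hadj
    have htlen : (l.take (i+1)).length = i + 1 := by rw [List.length_take]; omega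
    have hdlen : (l.drop j).length = n + 1 - j := by rw [List.length_drop, hllen]
    have htake_eq : l.take (i+1) = l.take i ++ [l[i]'(by omega)] := by
      exact (List.take_concat_get' l i (by omega)).symm
    have hch' : List.Chain' (G.induce Xᶜ).Adj (l.take (i+1) ++ l.drop j) := by
      refine List.IsChain.append (hchainl.prefix (List.take_prefix _ _)) (hchainl.drop j) ?_
      intro x hx y hy
      rw [htake_eq, List.getLast?_concat, Option.mem_some_iff] at hx
      rw [List.head?_drop, List.getElem?_eq_getElem (by omega), Option.mem_some_iff] at hy
      rw [← hx, ← hy]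
      exact hadj'
    have hl'len : (l.take (i+1) ++ l.drop j).length = (i + 1) + (n + 1 - j) := by
      rw [List.length_append, htlen, hdlen]
    obtain ⟨q, hqlen⟩ := walk_of_chain' (G.induce Xᶜ) (l.take (i+1) ++ l.drop j)
      (by omega) hch'
    have e0 : (l.take (i+1) ++ l.drop j)[0]'(by omega) = v := by
      rw [List.getElem_append_left (by omega)]
      exact (List.getElem_take (xs := l)).trans hl0
    have e1 : (l.take (i+1) ++ l.drop j)[(l.take (i+1) ++ l.drop j).length - 1]'(by omega)
        = w := by
      rw [List.getElem_append_right (by rw [htlen]; omega)]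
      have h := List.getElem_drop (xs := l) (i := j)
        (j := (l.take (i+1) ++ l.drop j).length - 1 - (l.take (i+1)).length)
        (h := by rw [hdlen, hl'len, htlen]; omega)
      rw [h]
      refine (getElem_idx_congr l ?_ _).trans hllast
      rw [hl'len, htlen, hllen]
      omega
    have hge := noGood _ _ q (by rw [e0]; exact hvc) (by rw [e0]; exact hvY)
      (by rw [e1]; exact hws)
    omega
  rcases Nat.eq_zero_or_pos n with hn0 | hn1
  · have hvw : v = w := Walk.eq_of_length_eq_zero (by rw [hplen, hn0])
    exact ⟨v, hvc, hvY, (hvw ▸ hws).symm⟩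
  · exfalso
    -- the second vertex of the path
    have h1lt : 1 < n + 1 := by omega
    set v₁ : ↥Xᶜ := l[1]'(by omega) with hv₁
    have hadj01 : (G.induce Xᶜ).Adj (l[0]'(by omega)) v₁ := by
      have h := List.isChain_iff_getElem.mp hchainl 0 (by omega)
      simpa [List.get_eq_getElem] using h
    have hv₁c : (G.induce Xᶜ).connectedComponentMk v₁ = c := by
      rw [← hvc, ← hl0]
      exact ConnectedComponent.sound hadj01.symm.reachable
    have hv₁Y : ∀ y ∈ Y, G.Adj ↑v₁ y := by
      intro y hy
      have hyX : y ∈ X := hY hy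
      have hsy : s ≠ y := fun h => hsY (h ▸ hy)
      have hyadj0 : G.Adj y (L[0]'(by omega)) := by
        rw [hgetLl 0 (by omega), hl0]
        exact (hvY y hy).symm
      have hsnotL : s ∉ L := fun h => (hLmem s h) hs
      have hynotL : y ∉ L := fun h => (hLmem y h) hyX
      have hynotu : y ∉ L ++ [s] := by
        rw [List.mem_append, List.mem_singleton]
        rintro (h | rfl)
        · exact hynotL h
        · exact hsy rfl
      have hnd_u : (L ++ [s]).Nodup := by
        refine List.nodup_append.mpr ⟨hLnd, List.nodup_singleton _, ?_⟩
        intro t htL _ hts heq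
        rw [List.mem_singleton] at hts
        exact hsnotL (by subst heq; subst hts; exact htL)
      have hLne : L ≠ [] := by
        intro h
        rw [h] at hLlen
        simp at hLlen
      have hLgetlast : L.getLast hLne = ↑w := by
        rw [List.getLast_eq_getElem]
        have h := hgetLl (L.length - 1) (by rw [← hLlen]; omega)
        rw [h]
        exact congrArg _ ((getElem_idx_congr l (by simp only [hllen, hLlen]) _).trans hllast)
      have hch_u : List.Chain' G.Adj (L ++ [s]) := by
        refine List.IsChain.append hLch (List.isChain_singleton s) ?_
        intro x hx y' hy'
        rw [List.getLast?_eq_getLast (l := L) hLne, Option.mem_some_iff] at hx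
        rw [List.head?_cons, Option.mem_some_iff] at hy'
        rw [← hx, ← hy', hLgetlast]
        exact hws.symm
      have hulen2 : (L ++ [s]).length = n + 2 := by
        rw [List.length_append, hLlen, List.length_singleton]
      have h1u : G.Adj y ((L ++ [s])[0]'(by rw [hulen2]; omega)) := by
        rw [List.getElem_append_left (by omega)]
        exact hyadj0
      have h2u : G.Adj ((L ++ [s])[(L ++ [s]).length - 1]'(by omega)) y := by
        have hlast_u : (L ++ [s])[(L ++ [s]).length - 1]'(by omega) = s :=
          List.getElem_concat_length (l := L) (a := s) (by rw [hulen2, hLlen]; omega) _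
        rw [hlast_u]
        exact hX hs hyX hsy
      have hy1 : G.Adj y (L[1]'(by rw [hLlen]; omega)) := by
        rcases chord_of_cycle hG y (L ++ [s]) (by rw [hulen2]; omega) hnd_u hynotu hch_u
          h1u h2u with ⟨i, j, hj, hij, hadj⟩ | ⟨i, hi, h1i, hadjy⟩
        · exfalso
          rw [hulen2] at hj
          rcases Nat.lt_or_ge j (n + 1) with hjn | hjn
          · rw [List.getElem_append_left (by rw [hLlen]; omega),
              List.getElem_append_left (by rw [hLlen]; omega)] at hadj
            exact noChord i j (by rw [hLlen]; omega) hij hadj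
          · have hjeq : j = n + 1 := by omega
            have hsj : (L ++ [s])[j]'(by rw [hulen2]; omega) = s :=
              List.getElem_concat_length (l := L) (a := s) (by rw [hLlen]; omega) _
            rw [hsj, List.getElem_append_left (by rw [hLlen]; omega)] at hadj
            exact noAdjS i (by omega) hadj.symm
        · rw [hulen2] at hi
          rw [List.getElem_append_left (by rw [hLlen]; omega)] at hadjy
          exact descent hG y L hLnd hynotL hLch noChord i (by rw [hLlen]; omega) h1i
            hadjy hyadj0
      rw [hgetLl 1 (by omega)] at hy1
      exact hy1.symm
    -- the tail of the path is a shorter good walk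
    have hdlen1 : (l.drop 1).length = n := by rw [List.length_drop, hllen]; omega
    obtain ⟨q, hqlen⟩ := walk_of_chain' (G.induce Xᶜ) (l.drop 1) (by omega) (hchainl.drop 1)
    have e0 : (l.drop 1)[0]'(by omega) = v₁ := by
      rw [List.getElem_drop (xs := l)]
    have e1 : (l.drop 1)[(l.drop 1).length - 1]'(by omega) = w := by
      rw [List.getElem_drop (xs := l)]
      refine (getElem_idx_congr l ?_ _).trans hllast
      rw [hdlen1, hllen]
      omega
    have hge := noGood _ _ q (by rw [e0]; exact hv₁c) (by rw [e0]; exact hv₁Y)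
      (by rw [e1]; exact hws)
    omega

end Step

theorem stmt_3 {V : Type*} (G : SimpleGraph V) (hG : IsChordal G)
    (X : Set V) (hXfin : X.Finite) (hX : G.IsClique X)
    (c : (G.induce Xᶜ).ConnectedComponent) (hc : IsFullComponent G X c) :
    ∃ w : ↥Xᶜ, (G.induce Xᶜ).connectedComponentMk w = c ∧ ∀ x ∈ X, G.Adj ↑w x := by
  classical
  have key : ∀ F : Finset V, ↑F ⊆ X →
      ∃ v : ↥Xᶜ, (G.induce Xᶜ).connectedComponentMk v = c ∧ ∀ y ∈ (↑F : Set V), G.Adj ↑v y := by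
    intro F
    induction F using Finset.induction_on with
    | empty =>
      intro _
      obtain ⟨v, hv⟩ := Quot.exists_rep c
      exact ⟨v, hv, by simp⟩
    | @insert a F haF IH =>
      intro hsub
      have haX : a ∈ X := hsub (by simp)
      have hFsub : (↑F : Set V) ⊆ X := fun y hy => hsub (by simp [hy])
      obtain ⟨v', h1, h2, h3⟩ := step hG hX haX hFsub
        (fun h => haF (by simpa using h)) (hc a haX) (IH hFsub)
      refine ⟨v', h1, fun y hy => ?_⟩
      rcases Finset.mem_insert.mp (by simpa using hy) with rfl | hyF
      · exact h3
      · exact h2 y (by simpa using hyF)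
  obtain ⟨v, h1, h2⟩ := key hXfin.toFinset (by simp)
  exact ⟨v, h1, fun x hx => h2 x (by simp [hXfin.mem_toFinset, hx])⟩
end

section
/- Let X and Y be two distinct maximal cliques in a finite chordal graph G. Then there is a vertex set S separating X and Y in G with |S| < |X| and |S| < |Y|. -/
open SimpleGraph

/-- An inclusion-maximal clique. -/
def IsMaxClique {V : Type*} (G : SimpleGraph V) (X : Set V) : Prop :=
  G.IsClique X ∧ ∀ Y : Set V, G.IsClique Y → X ⊆ Y → X = Y

/-- `S` separates the vertex sets `A` and `B`: every walk from `A` to `B` meets `S`. -/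
def SeparatesSets {V : Type*} (G : SimpleGraph V) (A B S : Set V) : Prop :=
  ∀ a ∈ A, ∀ b ∈ B, ∀ p : G.Walk a b, ∃ s ∈ S, s ∈ p.support

section Aux
open Walk
variable {V : Type*} {G : SimpleGraph V}

variable {V : Type*} {G : SimpleGraph V}

lemma myConcatPath {u v w : V} {p : G.Walk u v} (hp : p.IsPath) (hw : w ∉ p.support)
    (h : G.Adj v w) : (p.concat h).IsPath := by
  rw [Walk.isPath_def, Walk.support_concat]
  rw [Walk.isPath_def] at hp
  simp [List.nodup_append, hp, hw]
  exact fun a ha h => hw (h ▸ ha)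

lemma myShortcut [DecidableEq V] {x y : V} :
    ∀ {u v : V} (p : G.Walk u v), G.Adj x y → s(x, y) ∉ p.edges → x ∈ p.support →
      y ∈ p.support → ∃ q : G.Walk u v, q.length < p.length ∧ q.support ⊆ p.support := by
  intro u v p
  induction p with
  | nil =>
    intro hadj he hx hy
    simp only [Walk.support_nil, List.mem_singleton] at hx hy
    exact absurd (hx.trans hy.symm) hadj.ne
  | @cons u u' v h p' IH =>
    intro hadj he hx hy
    rw [Walk.edges_cons, List.mem_cons, not_or] at he
    by_cases hx' : x ∈ p'.support
    · by_cases hy' : y ∈ p'.support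
      · obtain ⟨q', hlt, hsub⟩ := IH hadj he.2 hx' hy'
        refine ⟨Walk.cons h q', by simpa using hlt, ?_⟩
        simp only [Walk.support_cons]
        exact fun z hz => by
          rcases List.mem_cons.mp hz with rfl | hz
          · exact List.mem_cons_self
          · exact List.mem_cons_of_mem _ (hsub hz)
      · have hyu : y = u := by
          rcases List.mem_cons.mp (by simpa using hy) with h' | h'
          · exact h'
          · exact absurd h' hy'
        subst hyu
        -- edge from u to x, then dropUntil x
        have hne : x ≠ u' := by
          rintro rfl
          exact he.1 (Sym2.eq_swap)
        refine ⟨Walk.cons hadj.symm (p'.dropUntil x hx'), ?_, ?_⟩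
        · have hspec : (p'.takeUntil x hx').length + (p'.dropUntil x hx').length = p'.length := by
            rw [← Walk.length_append, Walk.take_spec]
          have htk : 1 ≤ (p'.takeUntil x hx').length := by
            by_contra hcon
            push_neg at hcon
            exact hne (Walk.eq_of_length_eq_zero (p := p'.takeUntil _ _) (by omega)).symm
          simp only [Walk.length_cons]
          omega
        · intro z hz
          simp only [Walk.support_cons, List.mem_cons] at hz ⊢
          rcases hz with rfl | hz
          · exact Or.inl rfl
          · exact Or.inr (Walk.support_dropUntil_subset _ _ hz)
    · have hxu : x = u := by
        rcases List.mem_cons.mp (by simpa using hx) with h' | h'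
        · exact h'
        · exact absurd h' hx'
      subst hxu
      have hy' : y ∈ p'.support := by
        rcases List.mem_cons.mp (by simpa using hy) with rfl | h'
        · exact absurd rfl hadj.ne
        · exact h'
      have hne : y ≠ u' := by
        rintro rfl
        exact he.1 rfl
      refine ⟨Walk.cons hadj (p'.dropUntil y hy'), ?_, ?_⟩
      · have hspec : (p'.takeUntil y hy').length + (p'.dropUntil y hy').length = p'.length := by
          rw [← Walk.length_append, Walk.take_spec]
        have htk : 1 ≤ (p'.takeUntil y hy').length := by
          by_contra hcon
          push_neg at hcon
          exact hne (Walk.eq_of_length_eq_zero (p := p'.takeUntil _ _) (by omega)).symm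
        simp only [Walk.length_cons]
        omega
      · intro z hz
        simp only [Walk.support_cons, List.mem_cons] at hz ⊢
        rcases hz with rfl | hz
        · exact Or.inl rfl
        · exact Or.inr (Walk.support_dropUntil_subset _ _ hz)


lemma myInner [DecidableEq V] (hG : IsChordal G) {P : Prop} {D : Set V}
    {x y c p1 : V} (h₁ : G.Adj c p1) (hyc : G.Adj y c) (hyD : y ∉ D)
    (hyp1 : ¬ G.Adj y p1) {n : ℕ}
    (hrec : ∀ w : G.Walk c x, (∀ v ∈ w.support, v ∈ D) → w.length < n → P) :
    ∀ (m : ℕ) (z : V) (u₂ : G.Walk p1 z) (r : G.Walk z x), u₂.length = m →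
      1 ≤ u₂.length → ((Walk.cons h₁ u₂).append r).IsPath →
      (∀ v ∈ ((Walk.cons h₁ u₂).append r).support, v ∈ D) →
      ((Walk.cons h₁ u₂).append r).length = n → G.Adj y z → P := by
  intro m
  induction m using Nat.strong_induction_on with
  | _ m IH =>
  intro z u₂ r hm h1m hpath hsup hn hyz
  set u : G.Walk c z := Walk.cons h₁ u₂ with hu
  have hupath : u.IsPath := hpath.of_append_left
  have husub : ∀ v ∈ u.support, v ∈ D := fun v hv =>
    hsup v (Walk.subset_support_append_left _ _ hv)
  have hyu : y ∉ u.support := fun h => hyD (husub y h)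
  have hcz : c ≠ z := by
    rintro rfl
    rw [Walk.isPath_iff_eq_nil, hu] at hupath
    simp at hupath
  -- build the cycle
  have hconcatpath : (u.concat hyz.symm).IsPath := myConcatPath hupath hyu _
  have hedge : s(y, c) ∉ (u.concat hyz.symm).edges := by
    rw [Walk.edges_concat, List.concat_eq_append]
    intro hmem
    rcases List.mem_append.mp hmem with hmem | hmem
    · exact hyu (Walk.fst_mem_support_of_mem_edges _ hmem)
    · rcases Sym2.eq_iff.mp (List.mem_singleton.mp hmem) with ⟨rfl, rfl⟩ | ⟨-, rfl⟩
      · exact G.irrefl hyz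
      · exact hcz rfl
  have hcyc : (Walk.cons hyc (u.concat hyz.symm)).IsCycle :=
    (Walk.cons_isCycle_iff _ _).mpr ⟨hconcatpath, hedge⟩
  have hlen4 : 4 ≤ (Walk.cons hyc (u.concat hyz.symm)).length := by
    rw [Walk.length_cons, Walk.length_concat, hu, Walk.length_cons]
    omega
  obtain ⟨a, b, ha, hb, hab, hnab⟩ := hG y _ hcyc hlen4
  have hsupcyc : ∀ w, w ∈ (Walk.cons hyc (u.concat hyz.symm)).support →
      w = y ∨ w ∈ u.support := by
    intro w hw
    rw [Walk.support_cons, Walk.support_concat] at hw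
    rcases List.mem_cons.mp hw with rfl | hw
    · exact Or.inl rfl
    · rcases List.mem_append.mp hw with hw | hw
      · exact Or.inr hw
      · exact Or.inl (List.mem_singleton.mp hw)
  have hedgescyc : (Walk.cons hyc (u.concat hyz.symm)).edges
      = s(y, c) :: (u.edges ++ [s(z, y)]) := by
    rw [Walk.edges_cons, Walk.edges_concat, List.concat_eq_append]
  -- key: handle a chord from y to a vertex of u
  have key : ∀ b', b' ∈ u.support → G.Adj y b' →
      s(y, b') ∉ (Walk.cons hyc (u.concat hyz.symm)).edges → P := by
    intro b' hb'u hyb hnyb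
    rw [hedgescyc] at hnyb
    have hb'c : b' ≠ c := by
      rintro rfl
      exact hnyb List.mem_cons_self
    have hb'z : b' ≠ z := by
      rintro rfl
      refine hnyb (List.mem_cons_of_mem _ (List.mem_append.mpr (Or.inr ?_)))
      simp [Sym2.eq_swap]
    have hb'p1 : b' ≠ p1 := by
      rintro rfl
      exact hyp1 hyb
    have hb2 : b' ∈ u₂.support := by
      rcases List.mem_cons.mp (by simpa [hu, Walk.support_cons] using hb'u) with rfl | h'
      · exact absurd rfl hb'c
      · exact h'
    set t := u₂.takeUntil b' hb2 with ht
    set d := u₂.dropUntil b' hb2 with hd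
    have hspec : t.append d = u₂ := u₂.take_spec hb2
    have hlen : t.length + d.length = u₂.length := by
      rw [← Walk.length_append, hspec]
    have ht1 : 1 ≤ t.length := by
      by_contra hcon
      push_neg at hcon
      exact hb'p1 (Walk.eq_of_length_eq_zero (p := t) (by omega)).symm
    have hd1 : 1 ≤ d.length := by
      by_contra hcon
      push_neg at hcon
      exact hb'z (Walk.eq_of_length_eq_zero (p := d) (by omega))
    have heq : (Walk.cons h₁ t).append (d.append r) = (Walk.cons h₁ u₂).append r := by
      rw [Walk.cons_append, Walk.cons_append, Walk.append_assoc, hspec]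
    refine IH t.length (by omega) b' t (d.append r) rfl ht1 ?_ ?_ ?_ hyb
    · rw [heq]; exact hpath
    · rw [heq]; exact hsup
    · rw [heq]; exact hn
  rcases hsupcyc a ha with rfl | hau
  · rcases hsupcyc b hb with rfl | hbu
    · exact absurd rfl hab.ne
    · exact key b hbu hab hnab
  · rcases hsupcyc b hb with rfl | hbu
    · refine key a hau hab.symm ?_
      rwa [Sym2.eq_swap]
    · -- chord inside u : shortcut
      have hnab' : s(a, b) ∉ u.edges := by
        intro hmem
        refine hnab ?_
        rw [hedgescyc]
        exact List.mem_cons_of_mem _ (List.mem_append.mpr (Or.inl hmem))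
      obtain ⟨q, hql, hqs⟩ := myShortcut u hab hnab' hau hbu
      refine hrec (q.append r) ?_ ?_
      · intro v hv
        rcases (Walk.mem_support_append_iff _ _).mp hv with hv | hv
        · exact husub v (hqs hv)
        · exact hsup v (Walk.subset_support_append_right _ _ hv)
      · rw [Walk.length_append] at hn ⊢
        omega

lemma myStep [DecidableEq V] (hG : IsChordal G) {C : Set V} {K : Finset V} {x : V}
    (hxC : x ∉ C) (hKC : ∀ y ∈ K, y ∉ C) (hKx : ∀ y ∈ K, G.Adj y x) :
    ∀ (n : ℕ) (c : V), c ∈ C → (∀ y ∈ K, G.Adj c y) →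
      ∀ w : G.Walk c x, (∀ v ∈ w.support, v ∈ C ∪ {x}) → w.length = n →
      ∃ c' ∈ C, G.Adj c' x ∧ ∀ y ∈ K, G.Adj c' y := by
  intro n
  induction n using Nat.strong_induction_on with
  | _ n IH =>
  intro c hc hcK w hw hlen
  by_cases hbp : w.bypass.length < n
  · exact IH w.bypass.length hbp c hc hcK w.bypass
      (fun v hv => hw v (Walk.support_bypass_subset _ hv)) rfl
  · have hlenbp : w.bypass.length = n := by
      have := Walk.length_bypass_le w
      omega
    have hpath : w.bypass.IsPath := Walk.bypass_isPath w
    set w' := w.bypass with hw'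
    have hw'sub : ∀ v ∈ w'.support, v ∈ C ∪ {x} :=
      fun v hv => hw v (Walk.support_bypass_subset _ hv)
    clear_value w'
    clear hbp hw' hw hlen
    cases w' with
    | nil => exact absurd hc hxC
    | @cons _ p1 _ h₁ t =>
      rcases Nat.eq_zero_or_pos t.length with ht0 | ht1
      · have : p1 = x := Walk.eq_of_length_eq_zero (p := t) ht0
        subst this
        exact ⟨c, hc, h₁, hcK⟩
      · have htpath : t.IsPath := ((Walk.cons_isPath_iff _ _).mp hpath).1
        have hp1x : p1 ≠ x := by
          rintro rfl
          rw [Walk.isPath_iff_eq_nil] at htpath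
          subst htpath
          simp at ht1
        have hp1C : p1 ∈ C := by
          have := hw'sub p1 (by rw [Walk.support_cons]; exact
            List.mem_cons_of_mem _ t.start_mem_support)
          rcases this with h | h
          · exact h
          · exact absurd h hp1x
        have hn1 : t.length + 1 = n := by
          rw [Walk.length_cons] at hlenbp; exact hlenbp
        by_cases hall : ∀ y ∈ K, G.Adj p1 y
        · refine IH (n - 1) (by omega) p1 hp1C hall t ?_ ?_
          · intro v hv
            exact hw'sub v (by rw [Walk.support_cons]; exact List.mem_cons_of_mem _ hv)
          · omega
        · push_neg at hall
          obtain ⟨y, hyK, hyp1⟩ := hall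
          have hyp1' : ¬ G.Adj y p1 := fun h => hyp1 h.symm
          have hyD : y ∉ C ∪ {x} := by
            rintro (h | h)
            · exact hKC y hyK h
            · exact (hKx y hyK).ne (by simpa using h)
          have happ : (Walk.cons h₁ t).append Walk.nil = Walk.cons h₁ t :=
            Walk.append_nil _
          refine myInner hG (D := C ∪ {x}) h₁ ((hcK y hyK).symm) hyD hyp1'
            (n := n) ?_ t.length x t Walk.nil rfl ht1 ?_ ?_ ?_ (hKx y hyK)
          · intro w2 hw2 hlt
            exact IH w2.length hlt c hc hcK w2 hw2 rfl
          · rw [happ]; exact hpath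
          · rw [happ]; exact hw'sub
          · rw [happ]; exact hlenbp

lemma myHelly [DecidableEq V] (hG : IsChordal G) {C X : Set V}
    (hCX : ∀ c ∈ C, c ∉ X)
    (hCconn : ∀ c ∈ C, ∀ c' ∈ C, ∃ w : G.Walk c c', ∀ v ∈ w.support, v ∈ C)
    (hXcl : G.IsClique X) (hCne : C.Nonempty) :
    ∀ K : Finset V, ↑K ⊆ X → (∀ z ∈ K, ∃ cc ∈ C, G.Adj z cc) →
      ∃ c ∈ C, ∀ z ∈ K, G.Adj c z := by
  intro K
  induction K using Finset.induction_on with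
  | empty => exact fun _ _ => ⟨hCne.choose, hCne.choose_spec, fun z hz => absurd hz (by simp)⟩
  | @insert x K hxK IHK =>
    intro hKX hnbr
    have hxX : x ∈ X := hKX (by simp)
    obtain ⟨c, hcC, hcK⟩ := IHK (fun z hz => hKX (by simp [hz]))
      (fun z hz => hnbr z (by simp [hz]))
    obtain ⟨c₀, hc₀C, hxc₀⟩ := hnbr x (by simp)
    obtain ⟨w₀, hw₀⟩ := hCconn c hcC c₀ hc₀C
    have hxC : x ∉ C := fun h => hCX x h hxX
    have hKC : ∀ y ∈ K, y ∉ C := fun y hy h =>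
      hCX y h (hKX (by simp [hy]))
    have hKx : ∀ y ∈ K, G.Adj y x := fun y hy =>
      hXcl (hKX (by simp [hy])) hxX (fun h => hxK (h ▸ hy))
    obtain ⟨c', hc'C, hc'x, hc'K⟩ := myStep hG hxC hKC hKx
      (w₀.concat hxc₀.symm).length c hcC hcK (w₀.concat hxc₀.symm)
      (by
        intro v hv
        rw [Walk.support_concat] at hv
        rcases List.mem_append.mp hv with hv | hv
        · exact Or.inl (hw₀ v hv)
        · exact Or.inr (by simpa using hv)) rfl
    refine ⟨c', hc'C, fun z hz => ?_⟩
    rcases Finset.mem_insert.mp hz with rfl | hz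
    · exact hc'x
    · exact hc'K z hz



lemma myLemB {C S : Set V} (hstep : ∀ u v, u ∈ C → G.Adj u v → v ∈ C ∨ v ∈ S) :
    ∀ {b a : V} (q : G.Walk b a), b ∈ C → (∃ s ∈ S, s ∈ q.support) ∨ a ∈ C := by
  intro b a q
  induction q with
  | nil => exact fun h => Or.inr h
  | @cons b v a h q' IH =>
    intro hb
    rcases hstep b v hb h with hvC | hvS
    · rcases IH hvC with ⟨s, hs, hsup⟩ | ha
      · exact Or.inl ⟨s, hs, by rw [Walk.support_cons]; exact List.mem_cons_of_mem _ hsup⟩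
      · exact Or.inr ha
    · exact Or.inl ⟨v, hvS, by
        rw [Walk.support_cons]; exact List.mem_cons_of_mem _ q'.start_mem_support⟩

lemma myMainHalf {V : Type*} [Finite V] {G : SimpleGraph V} (hG : IsChordal G)
    {X Y : Set V} (hX : IsMaxClique G X) (hY : IsMaxClique G Y) (hne : X ≠ Y) :
    ∃ S : Set V, SeparatesSets G X Y S ∧ S.ncard < X.ncard := by
  classical
  have hYX : ¬ Y ⊆ X := fun hsub => hne (hY.2 X hX.1 hsub).symm
  obtain ⟨y0, hy0Y, hy0X⟩ := Set.not_subset.mp hYX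
  set C : Set V := {v | ∃ w : G.Walk y0 v, ∀ u ∈ w.support, u ∉ X} with hC
  have hy0C : y0 ∈ C := ⟨Walk.nil, by simp [hy0X]⟩
  have hCX : ∀ c ∈ C, c ∉ X := fun c hc => hc.choose_spec c hc.choose.end_mem_support
  have hCclosed : ∀ u v, u ∈ C → G.Adj u v → v ∉ X → v ∈ C := by
    rintro u v ⟨w, hw⟩ hadj hvX
    refine ⟨w.concat hadj, ?_⟩
    intro z hz
    rw [Walk.support_concat] at hz
    rcases List.mem_append.mp hz with hz | hz
    · exact hw z hz
    · rw [List.mem_singleton] at hz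
      exact hz ▸ hvX
  have hCsup : ∀ v (w : G.Walk y0 v), (∀ u ∈ w.support, u ∉ X) →
      ∀ z ∈ w.support, z ∈ C := by
    intro v w hw z hz
    exact ⟨w.takeUntil z hz, fun u hu => hw u (Walk.support_takeUntil_subset _ _ hu)⟩
  have hCconn : ∀ c ∈ C, ∀ c' ∈ C, ∃ w : G.Walk c c', ∀ v ∈ w.support, v ∈ C := by
    rintro c ⟨w1, hw1⟩ c' ⟨w2, hw2⟩
    refine ⟨w1.reverse.append w2, ?_⟩
    intro v hv
    rcases (Walk.mem_support_append_iff _ _).mp hv with hv | hv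
    · exact hCsup c w1 hw1 v (by rwa [Walk.support_reverse, List.mem_reverse] at hv)
    · exact hCsup c' w2 hw2 v hv
  set S : Set V := {v | v ∈ X ∧ ∃ c ∈ C, G.Adj v c} with hS
  have hSX : S ⊆ X := fun v hv => hv.1
  have hfin : X.Finite := Set.toFinite X
  have hSne : S ≠ X := by
    intro hSeq
    have hall : ∀ z ∈ hfin.toFinset, ∃ cc ∈ C, G.Adj z cc := by
      intro z hz
      rw [Set.Finite.mem_toFinset] at hz
      have hzS : z ∈ S := by rw [hSeq]; exact hz
      exact hzS.2
    obtain ⟨c, hcC, hcadj⟩ := myHelly hG hCX hCconn hX.1 ⟨y0, hy0C⟩ hfin.toFinset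
      (by simp) hall
    have hclique : G.IsClique (insert c X) :=
      hX.1.insert (fun b hb _ => hcadj b (by rwa [Set.Finite.mem_toFinset]))
    have hXeq := hX.2 (insert c X) hclique (Set.subset_insert _ _)
    exact hCX c hcC (hXeq ▸ Set.mem_insert c X)
  have hSsub : S ⊂ X := hSX.ssubset_of_ne hSne
  refine ⟨S, ?_, Set.ncard_lt_ncard hSsub hfin⟩
  have hstep2 : ∀ u v, u ∈ C → G.Adj u v → v ∈ C ∨ v ∈ S := by
    intro u v hu hadj
    by_cases hvX : v ∈ X
    · exact Or.inr ⟨hvX, u, hu, hadj.symm⟩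
    · exact Or.inl (hCclosed u v hu hadj hvX)
  intro a ha b hb p
  by_cases hbX : b ∈ X
  · refine ⟨b, ⟨hbX, y0, hy0C, ?_⟩, p.end_mem_support⟩
    exact hY.1 hb hy0Y (fun h => hy0X (h ▸ hbX))
  · have hbC : b ∈ C := by
      by_cases hby0 : b = y0
      · exact hby0 ▸ hy0C
      · exact hCclosed y0 b hy0C (hY.1 hy0Y hb (fun h => hby0 h.symm)) hbX
    rcases myLemB hstep2 p.reverse hbC with ⟨s, hsS, hsup⟩ | haC
    · exact ⟨s, hsS, by rwa [Walk.support_reverse, List.mem_reverse] at hsup⟩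
    · exact absurd ha (hCX a haC)

theorem stmt_4' {V : Type*} [Finite V] (G : SimpleGraph V) (hG : IsChordal G)
    (X Y : Set V) (hX : IsMaxClique G X) (hY : IsMaxClique G Y) (hne : X ≠ Y) :
    ∃ S : Set V, SeparatesSets G X Y S ∧ S.ncard < X.ncard ∧ S.ncard < Y.ncard := by
  rcases le_or_gt X.ncard Y.ncard with hle | hlt
  · obtain ⟨S, hsep, hcard⟩ := myMainHalf hG hX hY hne
    exact ⟨S, hsep, hcard, lt_of_lt_of_le hcard hle⟩
  · obtain ⟨S, hsep, hcard⟩ := myMainHalf hG hY hX hne.symm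
    refine ⟨S, ?_, hcard.trans hlt, hcard⟩
    intro a ha b hb p
    obtain ⟨s, hsS, hsup⟩ := hsep b hb a ha p.reverse
    exact ⟨s, hsS, by rwa [Walk.support_reverse, List.mem_reverse] at hsup⟩

end Aux

theorem stmt_4 {V : Type*} [Finite V] (G : SimpleGraph V) (hG : IsChordal G)
    (X Y : Set V) (hX : IsMaxClique G X) (hY : IsMaxClique G Y) (hne : X ≠ Y) :
    ∃ S : Set V, SeparatesSets G X Y S ∧ S.ncard < X.ncard ∧ S.ncard < Y.ncard := by
  exact stmt_4' G hG X Y hX hY hne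
end

section
/- Let (T, V) be a regular tree-decomposition of a graph G (i.e., for every edge f = t₁t₂ of T, with A_i the union of bags over the component of T − f containing t_i, both A₁ \ A₂ and A₂ \ A₁ are nonempty). Then for every automorphism γ of G there is at most one automorphism φ of T with γ(V_t) = V_{φ(t)} for all nodes t. -/
open SimpleGraph

/-- For an edge `t₁t₂` of the decomposition tree, the union of the bags over
the component of `T - t₁t₂` containing `t₁`. -/
def sideSet {V T : Type*} {G : SimpleGraph V} {Tg : SimpleGraph T}
    (D : TreeDecomp G Tg) (t₁ t₂ : T) : Set V :=
  ⋃ s ∈ {s | (Tg.deleteEdges {s(t₁, t₂)}).Reachable t₁ s}, D.bag s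

/-- A tree-decomposition is regular if all its induced separations are proper. -/
def Regular {V T : Type*} {G : SimpleGraph V} {Tg : SimpleGraph T}
    (D : TreeDecomp G Tg) : Prop :=
  ∀ ⦃t₁ t₂ : T⦄, Tg.Adj t₁ t₂ → (sideSet D t₁ t₂ \ sideSet D t₂ t₁).Nonempty

section Aux

variable {T : Type*} {Tg : SimpleGraph T}

private lemma not_reach_del {x y : T} (hT : Tg.IsAcyclic) (h : Tg.Adj x y) :
    ¬ (Tg.deleteEdges {s(x, y)}).Reachable x y :=
  isBridge_iff.mp (isAcyclic_iff_forall_adj_isBridge.mp hT h)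

private lemma not_reach_both {x y v : T} (hT : Tg.IsAcyclic) (h : Tg.Adj x y)
    (h1 : (Tg.deleteEdges {s(x, y)}).Reachable x v)
    (h2 : (Tg.deleteEdges {s(x, y)}).Reachable y v) : False :=
  not_reach_del hT h (h1.trans h2.symm)

private lemma reach_or_aux {x y : T} :
    ∀ {u v : T}, Tg.Walk u v →
      ((Tg.deleteEdges {s(x, y)}).Reachable x u ∨ (Tg.deleteEdges {s(x, y)}).Reachable y u) →
      ((Tg.deleteEdges {s(x, y)}).Reachable x v ∨ (Tg.deleteEdges {s(x, y)}).Reachable y v) := by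
  intro u v w
  induction w with
  | nil => exact id
  | @cons u b v hub w ih =>
    intro hu
    apply ih
    by_cases he : s(u, b) = s(x, y)
    · rw [Sym2.eq_iff] at he
      rcases he with ⟨rfl, rfl⟩ | ⟨rfl, rfl⟩
      · exact Or.inr (Reachable.refl _)
      · exact Or.inl (Reachable.refl _)
    · have hadj : (Tg.deleteEdges {s(x, y)}).Adj u b := by
        simp only [deleteEdges_adj, Set.mem_singleton_iff]
        exact ⟨hub, he⟩
      rcases hu with h | h
      · exact Or.inl (h.trans hadj.reachable)
      · exact Or.inr (h.trans hadj.reachable)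

private lemma reach_or {x y : T} (hc : Tg.Connected) (v : T) :
    (Tg.deleteEdges {s(x, y)}).Reachable x v ∨ (Tg.deleteEdges {s(x, y)}).Reachable y v := by
  obtain ⟨w⟩ := hc.preconnected x v
  exact reach_or_aux w (Or.inl (Reachable.refl _))

private lemma walk_transfer {x y p q : T}
    (hp : ¬ (Tg.deleteEdges {s(x, y)}).Reachable x p)
    (hq : ¬ (Tg.deleteEdges {s(x, y)}).Reachable x q) :
    ∀ {u v : T}, (Tg.deleteEdges {s(x, y)}).Walk u v →
      (Tg.deleteEdges {s(x, y)}).Reachable x u →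
      (Tg.deleteEdges {s(p, q)}).Reachable x u →
      (Tg.deleteEdges {s(p, q)}).Reachable x v := by
  intro u v w
  induction w with
  | nil => exact fun _ h => h
  | @cons u b v hub w ih =>
    intro h1 h2
    have hub' : Tg.Adj u b := by
      have := (deleteEdges_adj (G := Tg)).mp hub
      exact this.1
    have hne2 : s(u, b) ≠ s(p, q) := by
      intro he
      rw [Sym2.eq_iff] at he
      rcases he with ⟨rfl, rfl⟩ | ⟨rfl, rfl⟩
      · exact hp h1
      · exact hq h1
    have hadj2 : (Tg.deleteEdges {s(p, q)}).Adj u b := by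
      simp only [deleteEdges_adj, Set.mem_singleton_iff]
      exact ⟨hub', hne2⟩
    exact ih (h1.trans hub.reachable) (h2.trans hadj2.reachable)

private lemma reach_transfer {x y p q s : T}
    (hp : ¬ (Tg.deleteEdges {s(x, y)}).Reachable x p)
    (hq : ¬ (Tg.deleteEdges {s(x, y)}).Reachable x q)
    (hs : (Tg.deleteEdges {s(x, y)}).Reachable x s) :
    (Tg.deleteEdges {s(p, q)}).Reachable x s := by
  obtain ⟨w⟩ := hs
  exact walk_transfer hp hq w (Reachable.refl _) (Reachable.refl _)

private lemma sym2_ne_map (ψ : Tg ≃g Tg) {a b c d : T} (h : s(a, b) ≠ s(c, d)) :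
    s(ψ a, ψ b) ≠ s(ψ c, ψ d) := by
  intro he
  apply h
  rw [Sym2.eq_iff] at he ⊢
  rcases he with ⟨h1, h2⟩ | ⟨h1, h2⟩
  · exact Or.inl ⟨ψ.toEquiv.injective h1, ψ.toEquiv.injective h2⟩
  · exact Or.inr ⟨ψ.toEquiv.injective h1, ψ.toEquiv.injective h2⟩

/-- The graph isomorphism between deleted-edge graphs induced by `ψ`. -/
private def delIso (ψ : Tg ≃g Tg) (a b : T) :
    Tg.deleteEdges {s(a, b)} ≃g Tg.deleteEdges {s(ψ a, ψ b)} where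
  toEquiv := ψ.toEquiv
  map_rel_iff' := by
    intro u v
    simp only [Equiv.coe_fn_mk, deleteEdges_adj, Set.mem_singleton_iff]
    constructor
    · rintro ⟨ha, hne⟩
      refine ⟨ψ.map_adj_iff.mp ha, fun he => hne ?_⟩
      rw [Sym2.eq_iff] at he ⊢
      rcases he with ⟨rfl, rfl⟩ | ⟨rfl, rfl⟩
      · exact Or.inl ⟨rfl, rfl⟩
      · exact Or.inr ⟨rfl, rfl⟩
    · rintro ⟨ha, hne⟩
      refine ⟨ψ.map_adj_iff.mpr ha, fun he => hne ?_⟩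
      rw [Sym2.eq_iff] at he ⊢
      rcases he with ⟨h1, h2⟩ | ⟨h1, h2⟩
      · exact Or.inl ⟨ψ.toEquiv.injective h1, ψ.toEquiv.injective h2⟩
      · exact Or.inr ⟨ψ.toEquiv.injective h1, ψ.toEquiv.injective h2⟩

private lemma reach_del_map (ψ : Tg ≃g Tg) {a b u v : T}
    (h : (Tg.deleteEdges {s(a, b)}).Reachable u v) :
    (Tg.deleteEdges {s(ψ a, ψ b)}).Reachable (ψ u) (ψ v) :=
  h.map (delIso ψ a b).toHom

private lemma sideSet_map {V : Type*} {G : SimpleGraph V} {D : TreeDecomp G Tg}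
    (ψ : Tg ≃g Tg) (hbag : ∀ t, D.bag (ψ t) = D.bag t) (a b : T) :
    sideSet D (ψ a) (ψ b) = sideSet D a b := by
  ext v
  simp only [sideSet, Set.mem_iUnion, Set.mem_setOf_eq, exists_prop]
  constructor
  · rintro ⟨s, hs, hv⟩
    refine ⟨ψ.symm s, ?_, ?_⟩
    · have := reach_del_map ψ.symm hs
      simpa using this
    · have hb := hbag (ψ.symm s)
      rw [show ψ (ψ.symm s) = s by simp] at hb
      rwa [← hb]
  · rintro ⟨s, hs, hv⟩
    exact ⟨ψ s, reach_del_map ψ hs, by rwa [hbag s]⟩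

private lemma main_case {V : Type*} {G : SimpleGraph V} {D : TreeDecomp G Tg}
    (hreg : Regular D) (ψ : Tg ≃g Tg) (hbag : ∀ t, D.bag (ψ t) = D.bag t)
    {x y : T} (hadj : Tg.Adj x y) (hne : s(ψ x, ψ y) ≠ s(x, y))
    (hyx : (Tg.deleteEdges {s(x, y)}).Reachable y (ψ x))
    (hyy : (Tg.deleteEdges {s(x, y)}).Reachable y (ψ y)) : False := by
  have hacyc : Tg.IsAcyclic := D.isTree.IsAcyclic
  have hconn : Tg.Connected := D.isTree.isConnected
  have hp0 : ¬ (Tg.deleteEdges {s(x, y)}).Reachable x (ψ x) :=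
    fun h => not_reach_both hacyc hadj h hyx
  have hq0 : ¬ (Tg.deleteEdges {s(x, y)}).Reachable x (ψ y) :=
    fun h => not_reach_both hacyc hadj h hyy
  rcases reach_or (x := ψ x) (y := ψ y) hconn x with hA | hB
  · -- translation-like configuration
    let xk : ℕ → T := fun k => (⇑ψ)^[k] x
    let yk : ℕ → T := fun k => (⇑ψ)^[k] y
    have hx1 : xk 1 = ψ x := by simp [xk]
    have hy1 : yk 1 = ψ y := by simp [yk]
    have hxs : ∀ k, xk (k + 1) = ψ (xk k) := by
      intro k; simp only [xk, Function.iterate_succ_apply']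
    have hys : ∀ k, yk (k + 1) = ψ (yk k) := by
      intro k; simp only [yk, Function.iterate_succ_apply']
    have hIter : ∀ k, Tg.Adj (xk k) (yk k) ∧
        s(xk (k + 1), yk (k + 1)) ≠ s(xk k, yk k) ∧
        (Tg.deleteEdges {s(xk k, yk k)}).Reachable (yk k) (xk (k + 1)) ∧
        (Tg.deleteEdges {s(xk k, yk k)}).Reachable (yk k) (yk (k + 1)) ∧
        (Tg.deleteEdges {s(xk (k + 1), yk (k + 1))}).Reachable (xk (k + 1)) (xk k) ∧
        sideSet D (xk k) (yk k) = sideSet D x y := by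
      intro k
      induction k with
      | zero =>
        refine ⟨hadj, ?_, ?_, ?_, ?_, rfl⟩
        · rw [hx1, hy1]; exact hne
        · rw [hx1]; exact hyx
        · rw [hy1]; exact hyy
        · rw [hx1, hy1]; exact hA
      | succ k ih =>
        obtain ⟨ih1, ih2, ih3, ih4, ih5, ih6⟩ := ih
        simp only [hxs, hys] at ih2 ih3 ih4 ih5 ⊢
        exact ⟨ψ.map_adj_iff.mpr ih1, sym2_ne_map ψ ih2, reach_del_map ψ ih3,
          reach_del_map ψ ih4, reach_del_map ψ ih5,
          (sideSet_map ψ hbag (xk k) (yk k)).trans ih6⟩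
    have hmono : ∀ k s, (Tg.deleteEdges {s(xk k, yk k)}).Reachable (xk k) s →
        (Tg.deleteEdges {s(xk (k + 1), yk (k + 1))}).Reachable (xk (k + 1)) s := by
      intro k s hs
      obtain ⟨h1, _, h3, h4, h5, _⟩ := hIter k
      have hp : ¬ (Tg.deleteEdges {s(xk k, yk k)}).Reachable (xk k) (xk (k + 1)) :=
        fun h => not_reach_both hacyc h1 h h3
      have hq : ¬ (Tg.deleteEdges {s(xk k, yk k)}).Reachable (xk k) (yk (k + 1)) :=
        fun h => not_reach_both hacyc h1 h h4
      exact h5.trans (reach_transfer hp hq hs)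
    have hcov : ∀ s, ∃ k, (Tg.deleteEdges {s(xk k, yk k)}).Reachable (xk k) s := by
      intro s
      obtain ⟨w⟩ := hconn.preconnected x s
      have H : ∀ {u v : T}, Tg.Walk u v →
          (∃ k, (Tg.deleteEdges {s(xk k, yk k)}).Reachable (xk k) u) →
          (∃ k, (Tg.deleteEdges {s(xk k, yk k)}).Reachable (xk k) v) := by
        intro u v w
        induction w with
        | nil => exact id
        | @cons u b v hub wtail ih =>
          rintro ⟨k, hk⟩
          apply ih
          by_cases he : s(u, b) = s(xk k, yk k)
          · have hk1 := hmono k u hk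
            have he2 : s(u, b) ≠ s(xk (k + 1), yk (k + 1)) := by
              intro h
              exact (hIter k).2.1 (h ▸ he)
            have hadj2 : (Tg.deleteEdges {s(xk (k + 1), yk (k + 1))}).Adj u b := by
              simp only [deleteEdges_adj, Set.mem_singleton_iff]
              exact ⟨hub, he2⟩
            exact ⟨k + 1, hk1.trans hadj2.reachable⟩
          · have hadj2 : (Tg.deleteEdges {s(xk k, yk k)}).Adj u b := by
              simp only [deleteEdges_adj, Set.mem_singleton_iff]
              exact ⟨hub, he⟩
            exact ⟨k, hk.trans hadj2.reachable⟩
      exact H w ⟨0, Reachable.refl _⟩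
    obtain ⟨v, hv1, hv2⟩ := hreg hadj.symm
    simp only [sideSet, Set.mem_iUnion, Set.mem_setOf_eq, exists_prop] at hv1
    obtain ⟨s, hs, hvs⟩ := hv1
    obtain ⟨k, hk⟩ := hcov s
    apply hv2
    have : v ∈ sideSet D (xk k) (yk k) := by
      simp only [sideSet, Set.mem_iUnion, Set.mem_setOf_eq, exists_prop]
      exact ⟨s, hk, hvs⟩
    rwa [(hIter k).2.2.2.2.2] at this
  · -- easy case: `x` lies on the `ψ y` side of `ψ(e)`
    have hsub : sideSet D x y ⊆ sideSet D y x := by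
      intro v hv
      simp only [sideSet, Set.mem_iUnion, Set.mem_setOf_eq, exists_prop] at hv
      obtain ⟨s, hs, hvs⟩ := hv
      have h1 : (Tg.deleteEdges {s(ψ x, ψ y)}).Reachable x s :=
        reach_transfer hp0 hq0 hs
      have h2 : (Tg.deleteEdges {s(ψ y, ψ x)}).Reachable (ψ y) s := by
        rw [Sym2.eq_swap (a := ψ y)]
        exact hB.trans h1
      rw [← sideSet_map ψ hbag y x]
      simp only [sideSet, Set.mem_iUnion, Set.mem_setOf_eq, exists_prop]
      exact ⟨s, h2, hvs⟩
    obtain ⟨v, hv1, hv2⟩ := hreg hadj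
    exact hv2 (hsub hv1)

private lemma exists_adj_of_walk_ne :
    ∀ {a b : T}, Tg.Walk a b → a ≠ b → ∃ c, Tg.Adj a c := by
  intro a b w
  induction w with
  | nil => exact fun h => absurd rfl h
  | cons h _ => exact fun _ => ⟨_, h⟩

private lemma psi_eq_id {V : Type*} {G : SimpleGraph V} {D : TreeDecomp G Tg}
    (hreg : Regular D) (ψ : Tg ≃g Tg) (hbag : ∀ t, D.bag (ψ t) = D.bag t) (t : T) :
    ψ t = t := by
  by_contra hne
  obtain ⟨w⟩ := D.isTree.isConnected.preconnected t (ψ t)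
  obtain ⟨u, hadj0⟩ := exists_adj_of_walk_ne w (fun h => hne h.symm)
  by_cases hcase : s(ψ t, ψ u) = s(t, u)
  · rw [Sym2.eq_iff] at hcase
    rcases hcase with ⟨h1, h2⟩ | ⟨h1, h2⟩
    · exact hne h1
    · -- inversion of the edge tu
      obtain ⟨v, hv1, hv2⟩ := hreg hadj0
      apply hv2
      have hmap := sideSet_map ψ hbag t u
      rw [h1, h2] at hmap
      rwa [hmap]
  · have hadj' : Tg.Adj (ψ t) (ψ u) := ψ.map_adj_iff.mpr hadj0
    have hDadj : (Tg.deleteEdges {s(t, u)}).Adj (ψ t) (ψ u) := by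
      simp only [deleteEdges_adj, Set.mem_singleton_iff]
      exact ⟨hadj', hcase⟩
    rcases reach_or (x := t) (y := u) D.isTree.isConnected (ψ t) with hA | hB
    · -- ψt on the t-side: use the lemma with x := u, y := t
      have hA2 : (Tg.deleteEdges {s(t, u)}).Reachable t (ψ u) := hA.trans hDadj.reachable
      refine main_case hreg ψ hbag hadj0.symm ?_ ?_ ?_
      · rw [Sym2.eq_swap (a := ψ u), Sym2.eq_swap (a := u)]
        exact hcase
      · rw [Sym2.eq_swap (a := u)]
        exact hA2
      · rw [Sym2.eq_swap (a := u)]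
        exact hA
    · have hB2 : (Tg.deleteEdges {s(t, u)}).Reachable u (ψ u) := hB.trans hDadj.reachable
      exact main_case hreg ψ hbag hadj0 hcase hB hB2

end Aux

theorem stmt_8 {V T : Type*} (G : SimpleGraph V) (Tg : SimpleGraph T)
    (D : TreeDecomp G Tg) (hreg : Regular D)
    (γ : G ≃g G) (φ₁ φ₂ : Tg ≃g Tg)
    (h₁ : ∀ t, (γ '' D.bag t : Set V) = D.bag (φ₁ t))
    (h₂ : ∀ t, (γ '' D.bag t : Set V) = D.bag (φ₂ t)) :
    φ₁ = φ₂ := by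
  have hbag : ∀ s, D.bag ((φ₁.symm.trans φ₂) s) = D.bag s := by
    intro s
    have e1 := h₁ (φ₁.symm s)
    have e2 := h₂ (φ₁.symm s)
    rw [show φ₁ (φ₁.symm s) = s from φ₁.apply_symm_apply s] at e1
    calc D.bag ((φ₁.symm.trans φ₂) s) = D.bag (φ₂ (φ₁.symm s)) := rfl
      _ = γ '' D.bag (φ₁.symm s) := e2.symm
      _ = D.bag s := e1
  have hid : ∀ s, (φ₁.symm.trans φ₂) s = s := psi_eq_id hreg _ hbag
  apply RelIso.ext
  intro t
  have := hid (φ₁ t)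
  have h : φ₂ (φ₁.symm (φ₁ t)) = φ₁ t := this
  rw [φ₁.symm_apply_apply] at h
  exact h.symm
end

section
/- If (T, V) is a tree-decomposition of a connected graph G such that each induced subgraph G[V_t] is a disjoint union of complete graphs, then each G[V_t] is in fact complete, i.e., every bag is a clique. -/
open SimpleGraph

lemma sub_walk {T : Type*} {Tg : SimpleGraph T} {S : Set T}
    (h : (Tg.induce S).Connected) {a b : T} (ha : a ∈ S) (hb : b ∈ S) :
    ∃ W : Tg.Walk a b, ∀ u ∈ W.support, u ∈ S := by
  obtain ⟨w⟩ := h.preconnected ⟨a, ha⟩ ⟨b, hb⟩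
  refine ⟨w.map (SimpleGraph.Embedding.induce S).toHom, ?_⟩
  intro u hu
  erw [Walk.support_map, List.mem_map] at hu
  obtain ⟨⟨u', hu'⟩, _, rfl⟩ := hu
  exact hu'

lemma chain_lemma {V T : Type*} {G : SimpleGraph V} {Tg : SimpleGraph T}
    (D : TreeDecomp G Tg) (t : T) :
    ∀ {z' y : V} (r : G.Walk z' y), y ∈ D.bag t → z' ∉ D.bag t →
      (∀ w ∈ r.support, w ≠ y → w ∉ D.bag t) → ∀ s, z' ∈ D.bag s →
      ∃ s', y ∈ D.bag s' ∧ ∃ W : Tg.Walk s s', ∀ u ∈ W.support, u ≠ t := by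
  intro z' y r
  induction r with
  | nil => intro hyt hz' _ _ _; exact absurd hyt hz'
  | @cons za z'' yy h3 r' ih =>
    intro hyt hz' hint s hs
    obtain ⟨s₁, hz's₁, hz''s₁⟩ := D.covers_edge h3
    obtain ⟨W1, hW1⟩ := sub_walk (D.subtree _) hs hz's₁
    have hW1t : ∀ u ∈ W1.support, u ≠ t := fun u hu hut => hz' (by
      have := hW1 u hu; rwa [hut] at this)
    by_cases hz''t : z'' ∈ D.bag t
    · have hzy2 : z'' = yy := by
        by_contra hne
        exact hint z'' (List.mem_cons_of_mem _ r'.start_mem_support) hne hz''t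
      subst hzy2
      exact ⟨s₁, hz''s₁, W1, hW1t⟩
    · have hint' : ∀ w ∈ r'.support, w ≠ yy → w ∉ D.bag t :=
        fun w hw => hint w (List.mem_cons_of_mem _ hw)
      obtain ⟨s', hys', W2, hW2⟩ := ih hyt hz''t hint' s₁ hz''s₁
      refine ⟨s', hys', W1.append W2, ?_⟩
      intro u hu
      rw [Walk.mem_support_append_iff] at hu
      rcases hu with hu | hu
      · exact hW1t u hu
      · exact hW2 u hu

lemma key {V T : Type*} {G : SimpleGraph V} {Tg : SimpleGraph T} (D : TreeDecomp G Tg)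
    (hdu : ∀ t, ∀ x y : ↥(D.bag t),
      (G.induce (D.bag t)).Reachable x y → x = y ∨ G.Adj ↑x ↑y) :
    ∀ (n : ℕ) (t : T) (x y : V), x ∈ D.bag t → y ∈ D.bag t → ∀ (p : G.Walk x y),
      p.length ≤ n → x = y ∨ G.Adj x y := by
  classical
  intro n
  induction n using Nat.strongRecOn with
  | ind n IH =>
  intro t x y hx hy p hlen
  obtain ⟨q, hq, hqlen⟩ : ∃ q : G.Walk x y, q.IsPath ∧ q.length ≤ n :=
    ⟨p.bypass, p.bypass_isPath, le_trans p.length_bypass_le hlen⟩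
  clear hlen p
  cases q with
  | nil => exact Or.inl rfl
  | @cons _ z _ h q' =>
    cases q' with
    | nil => exact Or.inr h
    | @cons _ w2 _ h2 q'' =>
      -- Notation: Q = cons h (cons h2 q'') : Walk x y, second vertex z.
      have hzy : z ≠ y := by
        rintro rfl
        have h5 : (Walk.cons h2 q'').IsPath := ((Walk.cons_isPath_iff _ _).mp hq).1
        rw [Walk.isPath_iff_eq_nil] at h5
        exact absurd h5 (by simp)
      -- splitting at an internal bag vertex
      have split : ∀ (t : T), x ∈ D.bag t → y ∈ D.bag t → ∀ (w : V)
          (hw : w ∈ (Walk.cons h (Walk.cons h2 q'')).support), w ≠ x → w ≠ y → w ∈ D.bag t →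
          x = y ∨ G.Adj x y := by
        intro t hx' hy' w hw hwx hwy hwbag
        have hspec := (Walk.cons h (Walk.cons h2 q'')).take_spec hw
        have hlen2 : ((Walk.cons h (Walk.cons h2 q'')).takeUntil w hw).length
            + ((Walk.cons h (Walk.cons h2 q'')).dropUntil w hw).length
            = (Walk.cons h (Walk.cons h2 q'')).length := by
          rw [← Walk.length_append, hspec]
        have hd : ((Walk.cons h (Walk.cons h2 q'')).dropUntil w hw).length ≠ 0 :=
          fun h0 => hwy (Walk.eq_of_length_eq_zero h0)
        have ht : ((Walk.cons h (Walk.cons h2 q'')).takeUntil w hw).length ≠ 0 :=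
          fun h0 => hwx (Walk.eq_of_length_eq_zero h0).symm
        have hQl : (Walk.cons h (Walk.cons h2 q'')).length ≤ n := hqlen
        have R1 := IH ((Walk.cons h (Walk.cons h2 q'')).takeUntil w hw).length
          (by omega) t x w hx' hwbag _ le_rfl
        have R2 := IH ((Walk.cons h (Walk.cons h2 q'')).dropUntil w hw).length
          (by omega) t w y hwbag hy' _ le_rfl
        have r1 : (G.induce (D.bag t)).Reachable ⟨x, hx'⟩ ⟨w, hwbag⟩ := by
          rcases R1 with rfl | ha
          · exact Reachable.refl _
          · exact Adj.reachable ha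
        have r2 : (G.induce (D.bag t)).Reachable ⟨w, hwbag⟩ ⟨y, hy'⟩ := by
          rcases R2 with rfl | ha
          · exact Reachable.refl _
          · exact Adj.reachable ha
        have := hdu t ⟨x, hx'⟩ ⟨y, hy'⟩ (r1.trans r2)
        rcases this with heq | hadj
        · exact Or.inl (congrArg Subtype.val heq)
        · exact Or.inr hadj
      -- bag containing the first edge
      obtain ⟨s₀, hxs₀, hzs₀⟩ := D.covers_edge h
      -- inner induction on the tree-distance to s₀
      have inner : ∀ (m : ℕ) (t : T), x ∈ D.bag t → y ∈ D.bag t →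
          ∀ (P : Tg.Walk t s₀), P.IsPath → P.length ≤ m → x = y ∨ G.Adj x y := by
        intro m
        induction m with
        | zero =>
          intro t hx' hy' P _ hPl
          have hts : t = s₀ := Walk.eq_of_length_eq_zero (Nat.le_zero.mp hPl)
          subst hts
          exact split t hx' hy' z (by simp) h.ne' hzy hzs₀
        | succ m ihm =>
          intro t hx' hy' P hP hPl
          by_cases hcase : ∃ w ∈ (Walk.cons h (Walk.cons h2 q'')).support,
              w ≠ x ∧ w ≠ y ∧ w ∈ D.bag t
          · obtain ⟨w, hw, h1', h2', h3'⟩ := hcase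
            exact split t hx' hy' w hw h1' h2' h3'
          · push_neg at hcase
            have hzt : z ∉ D.bag t := hcase z (by simp) h.ne' hzy
            have hts : t ≠ s₀ := by rintro rfl; exact hzt hzs₀
            cases P with
            | nil => exact absurd rfl hts
            | @cons _ t' _ hadj P' =>
              have hP2 := (Walk.cons_isPath_iff _ _).mp hP
              obtain ⟨hP', htP'⟩ := hP2
              have hint : ∀ w ∈ (Walk.cons h2 q'').support, w ≠ y → w ∉ D.bag t := by
                intro w hw hwy
                refine hcase w (by rw [Walk.support_cons]; exact List.mem_cons_of_mem _ hw)
                  ?_ hwy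
                rintro rfl
                exact ((Walk.cons_isPath_iff _ _).mp hq).2 hw
              obtain ⟨s', hys', W, hWt⟩ := chain_lemma D t (Walk.cons h2 q'') hy' hzt hint s₀ hzs₀
              -- x ∈ bag t'
              obtain ⟨Qx, hQx⟩ := sub_walk (D.subtree x) hx' hxs₀
              have hQxP : Qx.bypass = Walk.cons hadj P' :=
                (D.isTree.existsUnique_path t s₀).unique Qx.bypass_isPath hP
              have hxt' : x ∈ D.bag t' := by
                have hmem : t' ∈ Qx.bypass.support := by
                  rw [hQxP, Walk.support_cons]
                  exact List.mem_cons_of_mem _ P'.start_mem_support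
                exact hQx _ (Qx.support_bypass_subset hmem)
              -- y ∈ bag t'
              have hWt' : ∀ u ∈ (P'.append W).support, u ≠ t := by
                intro u hu
                rw [Walk.mem_support_append_iff] at hu
                rcases hu with hu | hu
                · rintro rfl; exact htP' hu
                · exact hWt u hu
              have hR : (Walk.cons hadj (P'.append W).bypass).IsPath := by
                rw [Walk.cons_isPath_iff]
                exact ⟨Walk.bypass_isPath _,
                  fun hmem => hWt' t ((P'.append W).support_bypass_subset hmem) rfl⟩
              obtain ⟨Qy, hQy⟩ := sub_walk (D.subtree y) hy' hys'
              have hQyR : Qy.bypass = Walk.cons hadj (P'.append W).bypass :=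
                (D.isTree.existsUnique_path t s').unique Qy.bypass_isPath hR
              have hyt' : y ∈ D.bag t' := by
                have hmem : t' ∈ Qy.bypass.support := by
                  rw [hQyR, Walk.support_cons]
                  exact List.mem_cons_of_mem _ (Walk.start_mem_support _)
                exact hQy _ (Qy.support_bypass_subset hmem)
              exact ihm t' hxt' hyt' P' hP' (by simpa [Walk.length_cons] using hPl)
      obtain ⟨P⟩ := D.isTree.isConnected.preconnected t s₀
      exact inner P.bypass.length t hx hy P.bypass P.bypass_isPath le_rfl

theorem stmt_11 {V T : Type*} (G : SimpleGraph V) (hconn : G.Connected)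
    (Tg : SimpleGraph T) (D : TreeDecomp G Tg)
    (hdu : ∀ t, ∀ x y : ↥(D.bag t),
      (G.induce (D.bag t)).Reachable x y → x = y ∨ G.Adj ↑x ↑y) :
    ∀ t, G.IsClique (D.bag t) := by
  intro t x hx y hy hne
  obtain ⟨p⟩ := hconn.preconnected x y
  rcases key D hdu p.length t x y hx hy p le_rfl with heq | hadj
  · exact absurd heq hne
  · exact hadj
end

section
/- The star K_{1,t} with t ≥ 3 leaves does not admit a canonical tree-decomposition into its maximal cliques, i.e., there is no tree-decomposition (T, V) of K_{1,t} with t ↦ V_t a bijection onto the set of maximal cliques (the edges of the star) together with an action of Aut(K_{1,t}) on T commuting with t ↦ V_t. -/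
open SimpleGraph

/-- The star `K_{1,t}`, with center `Sum.inl ()` and `t` leaves. -/
abbrev starGraph (t : ℕ) : SimpleGraph (Unit ⊕ Fin t) := completeBipartiteGraph Unit (Fin t)

lemma edge_isMaxClique (t : ℕ) (i : Fin t) :
    IsMaxClique (_root_.starGraph t) {Sum.inl (), Sum.inr i} := by
  constructor
  · rintro x (rfl | rfl) y (rfl | rfl) hxy <;> simp_all [completeBipartiteGraph]
  · intro Y hY hXY
    refine le_antisymm hXY ?_
    intro y hy
    rcases y with u | j
    · left; rfl
    · right
      have hmem : (Sum.inl () : Unit ⊕ Fin t) ∈ Y := hXY (by left; rfl)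
      have hmem' : (Sum.inr i : Unit ⊕ Fin t) ∈ Y := hXY (by right; rfl)
      by_contra h
      have hne : (Sum.inr j : Unit ⊕ Fin t) ≠ Sum.inr i := by
        simpa using fun hji => h (by simp [hji])
      have := hY hy hmem' hne
      simp [completeBipartiteGraph] at this

lemma maxClique_iff (t : ℕ) (ht : 1 ≤ t) (X : Set (Unit ⊕ Fin t)) :
    IsMaxClique (_root_.starGraph t) X ↔ ∃ i, X = {Sum.inl (), Sum.inr i} := by
  constructor
  · rintro ⟨hcl, hmax⟩
    by_cases h : ∃ j : Fin t, Sum.inr j ∈ X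
    · obtain ⟨j, hj⟩ := h
      refine ⟨j, hmax _ (edge_isMaxClique t j).1 ?_⟩
      intro x hx
      rcases x with u | k
      · left; rfl
      · right
        by_contra hk
        have hne : (Sum.inr k : Unit ⊕ Fin t) ≠ Sum.inr j := by
          simpa using fun hkj => hk (by simp [hkj])
        have := hcl hx hj hne
        simp [completeBipartiteGraph] at this
    · push_neg at h
      refine ⟨⟨0, ht⟩, hmax _ (edge_isMaxClique t _).1 ?_⟩
      intro x hx
      rcases x with u | k
      · left; rfl
      · exact absurd hx (h k)
  · rintro ⟨i, rfl⟩; exact edge_isMaxClique t i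

theorem stmt_12 (t : ℕ) (ht : 3 ≤ t) :
    ¬ ∃ (T : Type) (Tg : SimpleGraph T) (D : TreeDecomp (_root_.starGraph t) Tg)
        (a : (_root_.starGraph t ≃g _root_.starGraph t) → (Tg ≃g Tg)),
      Function.Injective D.bag ∧
      (∀ n, IsMaxClique (_root_.starGraph t) (D.bag n)) ∧
      (∀ X, IsMaxClique (_root_.starGraph t) X → ∃ n, D.bag n = X) ∧
      (∀ (φ : _root_.starGraph t ≃g _root_.starGraph t) (n : T),
        D.bag (a φ n) = (fun x => φ x) '' D.bag n) := by
  classical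
  rintro ⟨T, Tg, D, a, hinj, hmax, hsurj, hcomm⟩
  have ht1 : 1 ≤ t := by omega
  -- index of each bag
  have hbag : ∀ n, ∃ i, D.bag n = {Sum.inl (), Sum.inr i} := fun n =>
    (maxClique_iff t ht1 _).1 (hmax n)
  choose idx hidx using hbag
  have idx_inj : Function.Injective idx := by
    intro n m h
    apply hinj
    rw [hidx n, hidx m, h]
  have idx_surj : Function.Surjective idx := by
    intro i
    obtain ⟨n, hn⟩ := hsurj _ ((maxClique_iff t ht1 _).2 ⟨i, rfl⟩)
    refine ⟨n, ?_⟩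
    have : (Sum.inr (idx n) : Unit ⊕ Fin t) ∈ ({Sum.inl (), Sum.inr i} : Set _) := by
      rw [← hn, hidx n]; right; rfl
    simpa using this
  let e : T ≃ Fin t := Equiv.ofBijective idx ⟨idx_inj, idx_surj⟩
  haveI : Fintype T := Fintype.ofEquiv _ e.symm
  have hcard : Fintype.card T = t := by
    rw [Fintype.card_congr e, Fintype.card_fin]
  -- transitivity of the automorphism action
  have trans : ∀ n m : T, ∃ ψ : Tg ≃g Tg, ψ n = m := by
    intro n m
    let σ : Fin t ≃ Fin t := Equiv.swap (idx n) (idx m)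
    let φ : _root_.starGraph t ≃g _root_.starGraph t :=
      ⟨Equiv.sumCongr (Equiv.refl Unit) σ, by
        rintro (u | i) (v | j) <;> simp [completeBipartiteGraph]⟩
    refine ⟨a φ, hinj ?_⟩
    rw [hcomm φ n, hidx n, hidx m]
    ext x
    constructor
    · rintro ⟨y, (rfl | rfl), rfl⟩
      · left; rfl
      · right; simp [φ, σ, Equiv.swap_apply_left]
    · rintro (rfl | rfl)
      · exact ⟨Sum.inl (), by left; rfl, rfl⟩
      · exact ⟨Sum.inr (idx n), by right; rfl, by simp [φ, σ, Equiv.swap_apply_left]⟩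
  -- hence Tg is regular
  have hreg : ∀ n m : T, Tg.degree n = Tg.degree m := by
    intro n m
    obtain ⟨ψ, hψ⟩ := trans n m
    rw [← hψ, ← card_neighborSet_eq_degree, ← card_neighborSet_eq_degree]
    exact Fintype.card_congr (ψ.mapNeighborSet n)
  have hne : Nonempty T := ⟨e.symm ⟨0, ht1⟩⟩
  obtain ⟨n₀⟩ := hne
  set d := Tg.degree n₀ with hd
  have hsum : ∑ v : T, Tg.degree v = t * d := by
    rw [Finset.sum_congr rfl (fun v _ => (hreg n₀ v).symm), Finset.sum_const,
      Finset.card_univ, hcard, smul_eq_mul]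
  have hedges : Finset.card Tg.edgeFinset + 1 = t := by
    rw [D.isTree.card_edgeFinset, hcard]
  have h2 : t * d = 2 * Finset.card Tg.edgeFinset := by
    rw [← hsum, sum_degrees_eq_twice_card_edges]
  rcases (by omega : d = 0 ∨ d = 1 ∨ 2 ≤ d) with hd0 | hd1 | hd2
  · rw [hd0, Nat.mul_zero] at h2; omega
  · rw [hd1, Nat.mul_one] at h2; omega
  · have h3 : t * 2 ≤ t * d := Nat.mul_le_mul_left t hd2
    omega
end

section
/- Let (T, V) be a tree-decomposition of a graph G into cliques (all bags are cliques) such that no edge st of T satisfies V_s ⊆ V_t. Then for every maximal clique X of G there is a unique node t with V_t = X, and every bag V_t is a maximal clique. In particular (T, V) is a tree-decomposition into the maximal cliques of G. -/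
open SimpleGraph

section Aux
variable {V T : Type*} {G : SimpleGraph V} {Tg : SimpleGraph T}

/-- In an acyclic graph, the (unique) path between two vertices is contained in every
walk between them. -/
lemma aux_support_subset (hac : Tg.IsAcyclic) {s t : T} (p w : Tg.Walk s t) (hp : p.IsPath) :
    p.support ⊆ w.support := by
  classical
  have h := hac.path_unique ⟨p, hp⟩ w.toPath
  have h2 : p.support = (w.toPath : Tg.Walk s t).support := by rw [← h]
  rw [h2]
  exact w.support_toPath_subset

/-- Separation property: a vertex appearing in the bags at both ends of a path appears in
every bag along the path. -/
lemma aux_sep (D : TreeDecomp G Tg) {v : V} {s t : T} (hs : v ∈ D.bag s) (ht : v ∈ D.bag t)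
    (p : Tg.Walk s t) (hp : p.IsPath) : ∀ u ∈ p.support, v ∈ D.bag u := by
  obtain ⟨w0⟩ := (D.subtree v).preconnected ⟨s, hs⟩ ⟨t, ht⟩
  let w : Tg.Walk s t := w0.map (SimpleGraph.Embedding.induce {t | v ∈ D.bag t}).toHom
  have hw : ∀ u ∈ w.support, v ∈ D.bag u := by
    intro u hu
    have := Walk.support_map (SimpleGraph.Embedding.induce {t | v ∈ D.bag t}).toHom w0
    erw [this] at hu
    obtain ⟨⟨x, hx⟩, _, rfl⟩ := List.mem_map.mp hu
    exact hx
  intro u hu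
  exact hw u (aux_support_subset D.isTree.IsAcyclic p w hp hu)

/-- No bag is contained in the bag of a different node (given the non-subset condition on
adjacent bags). -/
lemma aux_no_subset (D : TreeDecomp G Tg)
    (hns : ∀ ⦃s t : T⦄, Tg.Adj s t → ¬ D.bag s ⊆ D.bag t)
    {s t : T} (hst : s ≠ t) (h : D.bag s ⊆ D.bag t) : False := by
  classical
  obtain ⟨w⟩ := D.isTree.isConnected.preconnected s t
  obtain ⟨q, hq⟩ := w.toPath
  cases q with
  | nil => exact hst rfl
  | @cons _ x _ h' q' =>
    apply hns h'
    intro v hv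
    exact aux_sep D hv (h hv) _ hq x (by
      rw [Walk.support_cons]
      exact List.mem_cons_of_mem _ q'.start_mem_support)

/-- Along a path ending in a bag containing `v`, there is a first node whose bag contains `v`. -/
lemma aux_first (D : TreeDecomp G Tg) {v : V} :
    ∀ {t₀ t₁ : T} (p : Tg.Walk t₀ t₁), p.IsPath → v ∈ D.bag t₁ →
    ∃ (u : T) (p₁ : Tg.Walk t₀ u), p₁.IsPath ∧ p₁.support ⊆ p.support ∧ v ∈ D.bag u ∧
      ∀ x ∈ p₁.support, x ≠ u → v ∉ D.bag x := by
  intro t₀ t₁ p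
  induction p with
  | nil =>
    intro _ h1
    exact ⟨_, Walk.nil, by simp, by simp, h1, by simp⟩
  | @cons a b c h q ih =>
    intro hp h1
    by_cases h0 : v ∈ D.bag a
    · exact ⟨a, Walk.nil, by simp, by simp, h0, by simp⟩
    · obtain ⟨u, p₁, hp₁, hsub, hu, hmin⟩ := ih hp.of_cons h1
      have ha : a ∉ p₁.support := fun hmem =>
        ((Walk.cons_isPath_iff h q).mp hp).2 (hsub hmem)
      refine ⟨u, Walk.cons h p₁, hp₁.cons ha, ?_, hu, ?_⟩
      · rw [Walk.support_cons, Walk.support_cons]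
        intro x hx
        rcases List.mem_cons.mp hx with rfl | hx
        · exact List.mem_cons_self
        · exact List.mem_cons_of_mem _ (hsub hx)
      · intro x hx hxu
        rw [Walk.support_cons] at hx
        rcases List.mem_cons.mp hx with rfl | hx
        · exact h0
        · exact hmin x hx hxu

/-- Every finite clique is contained in some bag (Helly property of subtrees). -/
lemma aux_exists_bag (D : TreeDecomp G Tg) {K : Set V} (hKfin : K.Finite) :
    G.IsClique K → ∃ t, K ⊆ D.bag t := by
  classical
  refine Set.Finite.induction_on (motive := fun K _ => G.IsClique K → ∃ t, K ⊆ D.bag t) K hKfin ?_ ?_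
  · intro _
    obtain ⟨t⟩ := D.isTree.isConnected.nonempty
    exact ⟨t, by simp⟩
  · intro v K' hv hK'fin ih hK
    obtain ⟨t₀, ht₀⟩ := ih (hK.subset (Set.subset_insert _ _))
    obtain ⟨t₁, ht₁⟩ := D.covers_vertex v
    obtain ⟨w⟩ := D.isTree.isConnected.preconnected t₀ t₁
    obtain ⟨p, hp⟩ := w.toPath
    obtain ⟨u, p₁, hp₁, _, hu, hmin⟩ := aux_first D p hp ht₁
    refine ⟨u, ?_⟩
    intro w' hw'
    rcases Set.mem_insert_iff.mp hw' with rfl | hw'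
    · exact hu
    -- w' ∈ K' : find a bag containing both v and w'
    have hne : v ≠ w' := fun h => hv (h ▸ hw')
    have hadj : G.Adj v w' := hK (Set.mem_insert _ _) (Set.mem_insert_of_mem _ hw') hne
    obtain ⟨tw, hvtw, hwtw⟩ := D.covers_edge hadj
    -- path from tw to u; all its vertices' bags contain v
    obtain ⟨w2⟩ := D.isTree.isConnected.preconnected tw u
    obtain ⟨q', hq'⟩ := w2.toPath
    have hvq' : ∀ x ∈ q'.support, v ∈ D.bag x := aux_sep D hvtw hu q' hq'
    -- the appended walk p₁ ++ q'.reverse is a path from t₀ to tw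
    have hWpath : (p₁.append q'.reverse).IsPath := by
      rw [Walk.isPath_def, Walk.support_append]
      refine List.nodup_append.mpr ⟨hp₁.support_nodup, ?_, ?_⟩
      · exact (hq'.reverse.support_nodup).tail
      · intro x hx y hx' hxy
        subst hxy
        have hxq : x ∈ q'.support := by
          have : x ∈ q'.reverse.support := List.mem_of_mem_tail hx'
          rwa [Walk.support_reverse, List.mem_reverse] at this
        have hxu : x ≠ u := by
          intro rfl'
          subst rfl'
          have hnd := hq'.reverse.support_nodup
          rw [q'.reverse.support_eq_cons] at hnd
          exact (List.nodup_cons.mp hnd).1 hx'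
        exact hmin x hx hxu (hvq' x hxq)
    have huW : u ∈ (p₁.append q'.reverse).support :=
      Walk.subset_support_append_left _ _ p₁.end_mem_support
    exact aux_sep D (ht₀ hw') hwtw _ hWpath u huW

end Aux

theorem stmt_14 {V T : Type*} (G : SimpleGraph V) (Tg : SimpleGraph T)
    (D : TreeDecomp G Tg)
    (hfin : ∀ K : Set V, G.IsClique K → K.Finite)
    (hcl : ∀ t, G.IsClique (D.bag t))
    (hns : ∀ ⦃s t : T⦄, Tg.Adj s t → ¬ D.bag s ⊆ D.bag t) :
    (∀ X : Set V, IsMaxClique G X → ∃! t, D.bag t = X) ∧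
    (∀ t, IsMaxClique G (D.bag t)) := by
  constructor
  · intro X hX
    obtain ⟨t, hXt⟩ := aux_exists_bag D (hfin X hX.1) hX.1
    have hbt : D.bag t = X := (hX.2 (D.bag t) (hcl t) hXt).symm
    refine ⟨t, hbt, ?_⟩
    intro s hs
    by_contra hst
    exact aux_no_subset D hns hst (by rw [hs, ← hbt])
  · intro t
    refine ⟨hcl t, ?_⟩
    intro Y hY hsub
    obtain ⟨s, hYs⟩ := aux_exists_bag D (hfin Y hY) hY
    have hts : t = s := by
      by_contra hne
      exact aux_no_subset D hns hne (hsub.trans hYs)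
    exact Set.Subset.antisymm hsub (by rw [hts]; exact hYs)
end

section
/- Every finite chordal graph admits a tree-decomposition whose bags are exactly its maximal cliques (a clique tree), i.e., a tree-decomposition (T, V) with t ↦ V_t a bijection from V(T) onto the set of maximal cliques of G. -/
open SimpleGraph

section Chordal
lemma IsChordal.induce {V : Type*} {G : SimpleGraph V} (hG : IsChordal G) (s : Set V) :
    IsChordal (G.induce s) := by
  intro v c hc hl
  have hinj : Function.Injective (SimpleGraph.Embedding.induce (G := G) s).toHom :=
    Subtype.val_injective
  obtain ⟨x, y, hx, hy, hxy, hne⟩ := hG _ (c.map _) (hc.map hinj) (by rwa [Walk.length_map])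
  rw [Walk.support_map] at hx hy
  obtain ⟨x', hx', rfl⟩ := List.mem_map.1 hx
  obtain ⟨y', hy', rfl⟩ := List.mem_map.1 hy
  refine ⟨x', y', hx', hy', hxy, fun h => hne ?_⟩
  rw [Walk.edges_map]
  exact List.mem_map.2 ⟨_, h, by simp [Sym2.map_pair_eq]⟩

lemma exists_maxclique {V : Type*} [Finite V] (G : SimpleGraph V) {s : Set V}
    (hs : G.IsClique s) : ∃ X, IsMaxClique G X ∧ s ⊆ X := by
  obtain ⟨X, ⟨hX, hsX⟩, hmax⟩ := Set.Finite.exists_maximalFor id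
    {Y | G.IsClique Y ∧ s ⊆ Y} (Set.toFinite _) ⟨s, hs, le_refl _⟩
  exact ⟨X, ⟨hX, fun Y hY hXY => Set.Subset.antisymm hXY (hmax ⟨hY, hsX.trans hXY⟩ hXY)⟩, hsX⟩


end Chordal

section Sep
variable {V : Type} {G : SimpleGraph V}

def Reach (G : SimpleGraph V) (S : Set V) (r : V) : Set V :=
  {u | ∃ q : G.Walk r u, ∀ z ∈ q.support, z ∉ S}

lemma reach_self {S : Set V} {r : V} (hr : r ∉ S) : r ∈ Reach G S r :=
  ⟨Walk.nil, by simp [hr]⟩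

lemma reach_not_mem {S : Set V} {r u : V} (hu : u ∈ Reach G S r) : u ∉ S := by
  obtain ⟨q, hq⟩ := hu; exact hq u q.end_mem_support

lemma reach_adj {S : Set V} {r u w : V} (hu : u ∈ Reach G S r) (huw : G.Adj u w)
    (hw : w ∉ S) : w ∈ Reach G S r := by
  obtain ⟨q, hq⟩ := hu
  refine ⟨q.concat huw, ?_⟩
  intro z hz
  rw [Walk.support_concat, List.mem_append, List.mem_singleton] at hz
  rcases hz with hz | rfl
  · exact hq z hz
  · exact hw

/-- A separator between `a` and `b`. -/
def VSep (G : SimpleGraph V) (a b : V) (S : Set V) : Prop :=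
  a ∉ S ∧ b ∉ S ∧ ∀ p : G.Walk a b, ∃ z ∈ p.support, z ∈ S

lemma vsep_cross {S : Set V} {a b u w : V} (hS : VSep G a b S)
    (hu : u ∈ Reach G S a) (hw : w ∈ Reach G S b) : u ≠ w ∧ ¬ G.Adj u w := by
  obtain ⟨qa, hqa⟩ := hu
  obtain ⟨qb, hqb⟩ := hw
  constructor
  · rintro rfl
    obtain ⟨z, hz, hzS⟩ := hS.2.2 (qa.append qb.reverse)
    rw [Walk.mem_support_append_iff] at hz
    rcases hz with hz | hz
    · exact hqa z hz hzS
    · exact hqb z (by rwa [Walk.support_reverse, List.mem_reverse] at hz) hzS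
  · intro hadj
    obtain ⟨z, hz, hzS⟩ := hS.2.2 ((qa.concat hadj).append qb.reverse)
    rw [Walk.mem_support_append_iff] at hz
    rcases hz with hz | hz
    · rw [Walk.support_concat, List.mem_append,
        List.mem_singleton] at hz
      rcases hz with hz | rfl
      · exact hqa z hz hzS
      · exact hqb z qb.end_mem_support hzS
    · exact hqb z (by rwa [Walk.support_reverse, List.mem_reverse] at hz) hzS

lemma access {S : Set V} {r t x : V} (p : G.Walk r t) (hp : p.IsPath)
    (hmeet : ∀ z ∈ p.support, z ∈ S → z = x) (hxp : x ∈ p.support) :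
    ∃ q : G.Walk r x, ∀ z ∈ q.support, z = x ∨ z ∈ Reach G S r := by
  classical
  refine ⟨p.takeUntil x hxp, ?_⟩
  intro z hz
  by_cases hzx : z = x
  · exact Or.inl hzx
  right
  refine ⟨(p.takeUntil x hxp).takeUntil z hz, ?_⟩
  intro y hy hyS
  have hy1 : y ∈ (p.takeUntil x hxp).support := (Walk.support_takeUntil_subset _ _) hy
  have hy2 : y ∈ p.support := (Walk.support_takeUntil_subset _ _) hy1
  have hyx : y = x := hmeet y hy2 hyS
  rw [hyx] at hy
  have hnd : (p.takeUntil x hxp).support.Nodup := (hp.takeUntil hxp).support_nodup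
  have hspec := (p.takeUntil x hxp).take_spec hz
  rw [← hspec, Walk.support_append] at hnd
  have hdisj := List.disjoint_of_nodup_append hnd
  have hxdrop : x ∈ ((p.takeUntil x hxp).dropUntil z hz).support.tail := by
    have hxmem : x ∈ ((p.takeUntil x hxp).dropUntil z hz).support :=
      Walk.end_mem_support _
    rw [Walk.support_eq_cons] at hxmem ⊢
    rcases List.mem_cons.1 hxmem with h | h
    · exact absurd h.symm hzx
    · exact h
  exact absurd hy (fun hy' => hdisj hy' hxdrop)

lemma edges_of_length_one {u w : V} (q : G.Walk u w)
    (h : q.length = 1) : q.edges = [s(u, w)] := by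
  cases q with
  | nil => simp at h
  | cons h' q' =>
    simp only [Walk.length_cons, add_left_inj] at h
    have h0 : q'.length = 0 := by omega
    cases q' with
    | nil => simp
    | cons h'' q'' => simp at h0

/-- In a family of walks with support constrained to `s`, a minimum-length walk has no chords. -/
lemma constrained_no_chord {x y : V} {s : Set V} (p : G.Walk x y)
    (hps : ∀ z ∈ p.support, z ∈ s)
    (hmin : ∀ q : G.Walk x y, (∀ z ∈ q.support, z ∈ s) → p.length ≤ q.length)
    {u w : V} (hu : u ∈ p.support) (hw : w ∈ p.support)
    (huw : G.Adj u w) : s(u, w) ∈ p.edges := by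
  classical
  by_contra hne
  have hsplit := p.take_spec hu
  set p1 := p.takeUntil u hu with hp1
  set p2 := p.dropUntil u hu with hp2
  rw [← hsplit, Walk.mem_support_append_iff] at hw
  have hlen : p1.length + p2.length = p.length := by
    rw [← hsplit]; exact (Walk.length_append _ _).symm
  have hsub1 : ∀ z ∈ p1.support, z ∈ s := fun z hz =>
    hps z ((Walk.support_takeUntil_subset _ _) hz)
  have hsub2 : ∀ z ∈ p2.support, z ∈ s := fun z hz =>
    hps z ((Walk.support_dropUntil_subset _ _) hz)
  cases hw with
  | inr hw2 =>
    have hs2 := p2.take_spec hw2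
    set q1 := p2.takeUntil w hw2
    set q2 := p2.dropUntil w hw2
    have hlq : q1.length + q2.length = p2.length := by
      rw [← hs2]; exact (Walk.length_append _ _).symm
    have hq1 : 2 ≤ q1.length := by
      rcases Nat.lt_or_ge q1.length 2 with h | h
      · interval_cases h' : q1.length
        · exact absurd (q1.eq_of_length_eq_zero h') huw.ne
        · exfalso; apply hne
          rw [← hsplit, Walk.edges_append, List.mem_append]
          right
          rw [← hs2, Walk.edges_append, List.mem_append]
          left
          rw [edges_of_length_one q1 h']
          simp
      · exact h
    have hnew : ∀ z ∈ (p1.append (Walk.cons huw q2)).support, z ∈ s := by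
      intro z hz
      rw [Walk.mem_support_append_iff] at hz
      rcases hz with hz | hz
      · exact hsub1 z hz
      · rw [Walk.support_cons, List.mem_cons] at hz
        rcases hz with rfl | hz
        · exact hsub2 z p2.start_mem_support
        · exact hsub2 z ((Walk.support_dropUntil_subset _ _) hz)
    have := hmin _ hnew
    rw [Walk.length_append, Walk.length_cons] at this
    omega
  | inl hw1 =>
    have hs2 := p1.take_spec hw1
    set q1 := p1.takeUntil w hw1
    set q2 := p1.dropUntil w hw1
    have hlq : q1.length + q2.length = p1.length := by
      rw [← hs2]; exact (Walk.length_append _ _).symm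
    have hq2 : 2 ≤ q2.length := by
      rcases Nat.lt_or_ge q2.length 2 with h | h
      · interval_cases h' : q2.length
        · exact absurd (q2.eq_of_length_eq_zero h') huw.ne.symm
        · exfalso; apply hne
          rw [← hsplit, Walk.edges_append, List.mem_append]
          left
          rw [← hs2, Walk.edges_append, List.mem_append]
          right
          rw [edges_of_length_one q2 h']
          simp [Sym2.eq_swap]
      · exact h
    have hnew : ∀ z ∈ (q1.append (Walk.cons huw.symm p2)).support, z ∈ s := by
      intro z hz
      rw [Walk.mem_support_append_iff] at hz
      rcases hz with hz | hz
      · exact hsub1 z ((Walk.support_takeUntil_subset _ _) hz)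
      · rw [Walk.support_cons, List.mem_cons] at hz
        rcases hz with rfl | hz
        · exact hsub1 z hw1
        · exact hsub2 z hz
    have := hmin _ hnew
    rw [Walk.length_append, Walk.length_cons] at this
    omega

lemma exists_min_walk {x y : V} {s : Set V} (p0 : G.Walk x y)
    (hp0 : ∀ z ∈ p0.support, z ∈ s) :
    ∃ p : G.Walk x y, (∀ z ∈ p.support, z ∈ s) ∧ p.IsPath ∧
      ∀ q : G.Walk x y, (∀ z ∈ q.support, z ∈ s) → p.length ≤ q.length := by
  classical
  set L : Set ℕ := {n | ∃ p : G.Walk x y, p.length = n ∧ ∀ z ∈ p.support, z ∈ s} with hL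
  have hLne : L.Nonempty := ⟨p0.length, p0, rfl, hp0⟩
  obtain ⟨p, hpl, hps⟩ := Nat.sInf_mem hLne
  have hmin : ∀ q : G.Walk x y, (∀ z ∈ q.support, z ∈ s) → p.length ≤ q.length := by
    intro q hq
    rw [hpl]
    exact Nat.sInf_le ⟨q, rfl, hq⟩
  have hbs : ∀ z ∈ p.bypass.support, z ∈ s := fun z hz =>
    hps z (p.support_bypass_subset hz)
  have hble : p.bypass.length ≤ p.length := p.length_bypass_le
  have hbge : p.length ≤ p.bypass.length := hmin _ hbs
  refine ⟨p.bypass, hbs, p.bypass_isPath, fun q hq => ?_⟩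
  have := hmin q hq
  omega

/-- The key lemma: an inclusion-minimal `a`–`b` separator in a chordal graph is a clique. -/
lemma minsep_clique {a b : V} {S : Set V} (hG : IsChordal G) (hab : ¬ G.Adj a b)
    (hS : VSep G a b S)
    (hmin : ∀ x ∈ S, ∃ p : G.Walk a b, ∀ z ∈ p.support, z ∈ S → z = x) :
    G.IsClique S := by
  classical
  intro x hx y hy hxy
  by_contra hnadj
  set A := Reach G S a with hA
  set B := Reach G S b with hB
  have hSsymm : VSep G b a S := ⟨hS.2.1, hS.1, fun p => by
    obtain ⟨z, hz, hzS⟩ := hS.2.2 p.reverse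
    rw [Walk.support_reverse, List.mem_reverse] at hz
    exact ⟨z, hz, hzS⟩⟩
  -- access walks for x and y on both sides
  have haccess : ∀ w ∈ S, (∃ q : G.Walk a w, ∀ z ∈ q.support, z = w ∨ z ∈ A) ∧
      (∃ q : G.Walk b w, ∀ z ∈ q.support, z = w ∨ z ∈ B) := by
    intro w hw
    obtain ⟨p, hp⟩ := hmin w hw
    have hbp : ∀ z ∈ p.bypass.support, z ∈ S → z = w := fun z hz =>
      hp z (p.support_bypass_subset hz)
    have hwbp : w ∈ p.bypass.support := by
      obtain ⟨z, hz, hzS⟩ := hS.2.2 p.bypass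
      have := hbp z hz hzS
      rwa [this] at hz
    constructor
    · exact access p.bypass p.bypass_isPath hbp hwbp
    · have hrev : ∀ z ∈ p.bypass.reverse.support, z ∈ S → z = w := by
        intro z hz
        rw [Walk.support_reverse, List.mem_reverse] at hz
        exact hbp z hz
      have hwrev : w ∈ p.bypass.reverse.support := by
        rwa [Walk.support_reverse, List.mem_reverse]
      exact access p.bypass.reverse p.bypass_isPath.reverse hrev hwrev
  obtain ⟨⟨qax, hqax⟩, ⟨qbx, hqbx⟩⟩ := haccess x hx
  obtain ⟨⟨qay, hqay⟩, ⟨qby, hqby⟩⟩ := haccess y hy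
  -- minimum-length path from x to y through A
  have hPA : ∀ z ∈ (qax.reverse.append qay).support, z ∈ A ∪ {x, y} := by
    intro z hz
    rw [Walk.mem_support_append_iff] at hz
    rcases hz with hz | hz
    · rw [Walk.support_reverse, List.mem_reverse] at hz
      rcases hqax z hz with rfl | hz
      · exact Or.inr (Or.inl rfl)
      · exact Or.inl hz
    · rcases hqay z hz with rfl | hz
      · exact Or.inr (Or.inr rfl)
      · exact Or.inl hz
  obtain ⟨P, hPs, hPpath, hPmin⟩ := exists_min_walk _ hPA
  have hQB : ∀ z ∈ (qbx.reverse.append qby).support, z ∈ B ∪ {x, y} := by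
    intro z hz
    rw [Walk.mem_support_append_iff] at hz
    rcases hz with hz | hz
    · rw [Walk.support_reverse, List.mem_reverse] at hz
      rcases hqbx z hz with rfl | hz
      · exact Or.inr (Or.inl rfl)
      · exact Or.inl hz
    · rcases hqby z hz with rfl | hz
      · exact Or.inr (Or.inr rfl)
      · exact Or.inl hz
  obtain ⟨Q, hQs, hQpath, hQmin⟩ := exists_min_walk _ hQB
  -- basic facts
  have hxA : x ∉ A := fun h => reach_not_mem h hx
  have hyA : y ∉ A := fun h => reach_not_mem h hy
  have hxB : x ∉ B := fun h => reach_not_mem h hx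
  have hyB : y ∉ B := fun h => reach_not_mem h hy
  have hlen2 : ∀ (R : G.Walk x y), R.IsPath → ¬ (R.length ≤ 1) := by
    intro R hR h
    interval_cases h' : R.length
    · exact hxy (R.eq_of_length_eq_zero h')
    · refine hnadj ?_
      have : s(x, y) ∈ R.edges := by rw [edges_of_length_one R h']; simp
      exact R.adj_of_mem_edges this
  have hP2 : 2 ≤ P.length := by have := hlen2 P hPpath; omega
  have hQ2 : 2 ≤ Q.length := by have := hlen2 Q hQpath; omega
  -- the cycle
  set c : G.Walk x x := P.append Q.reverse with hc
  have hclen : c.length = P.length + Q.length := by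
    rw [hc, Walk.length_append, Walk.length_reverse]
  -- membership helpers
  have hPtail : ∀ z ∈ P.support.tail, z ∈ A ∪ {y} := by
    intro z hz
    have hzs := hPs z (List.mem_of_mem_tail hz)
    have hzx : z ≠ x := by
      intro h
      have := hPpath.support_nodup
      rw [Walk.support_eq_cons] at this
      exact (List.nodup_cons.1 this).1 (h ▸ hz)
    rcases hzs with h | h | h
    · exact Or.inl h
    · exact absurd h hzx
    · exact Or.inr h
  have hQrtail : ∀ z ∈ Q.reverse.support.tail, z ∈ B ∪ {x} := by
    intro z hz
    have hzs : z ∈ Q.support := by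
      have := List.mem_of_mem_tail hz
      rwa [Walk.support_reverse, List.mem_reverse] at this
    have hzy : z ≠ y := by
      intro h
      have := hQpath.reverse.support_nodup
      rw [Walk.support_eq_cons] at this
      exact (List.nodup_cons.1 this).1 (h ▸ hz)
    rcases hQs z hzs with h | h | h
    · exact Or.inl h
    · exact Or.inr h
    · exact absurd h hzy
  have hcyc : c.IsCycle := by
    have hPnd : P.edges.Nodup := hPpath.edges_nodup
    have hQrnd : Q.reverse.edges.Nodup := hQpath.reverse.edges_nodup
    have hedisj : P.edges.Disjoint Q.reverse.edges := by
      intro e heP heQ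
      rw [Walk.edges_reverse, List.mem_reverse] at heQ
      induction e with
      | h u w =>
        have huP := Walk.fst_mem_support_of_mem_edges P heP
        have hwP := Walk.snd_mem_support_of_mem_edges P heP
        have huQ := Walk.fst_mem_support_of_mem_edges Q heQ
        have hwQ := Walk.snd_mem_support_of_mem_edges Q heQ
        have huw : G.Adj u w := P.adj_of_mem_edges heP
        have hmem : ∀ v', v' ∈ P.support → v' ∈ Q.support → v' = x ∨ v' = y := by
          intro v' h1 h2
          rcases hPs v' h1 with h1' | h1' | h1'
          · rcases hQs v' h2 with h2' | h2' | h2'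
            · exact absurd rfl (vsep_cross hS h1' h2').1
            · exact Or.inl h2'
            · exact Or.inr h2'
          · exact Or.inl h1'
          · exact Or.inr h1'
        rcases hmem u huP huQ with rfl | rfl <;> rcases hmem w hwP hwQ with rfl | rfl
        · exact huw.ne rfl
        · exact hnadj huw
        · exact hnadj huw.symm
        · exact huw.ne rfl
    constructor
    · constructor
      · constructor
        rw [hc, Walk.edges_append]
        exact hPnd.append hQrnd hedisj
      · intro hnil
        have : c.length = 0 := by rw [hnil]; rfl
        omega
    · have hsupp : c.support.tail = P.support.tail ++ Q.reverse.support.tail := by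
        rw [hc, Walk.support_append]
        rw [Walk.support_eq_cons P]
        rfl
      rw [hsupp]
      refine List.Nodup.append ?_ ?_ ?_
      · exact hPpath.support_nodup.tail
      · exact hQpath.reverse.support_nodup.tail
      · intro z hz1 hz2
        rcases hPtail z hz1 with h1 | h1 <;> rcases hQrtail z hz2 with h2 | h2
        · exact (vsep_cross hS h1 h2).1 rfl
        · exact hxA (h2 ▸ h1)
        · exact hyB (h1 ▸ h2)
        · exact hxy (h2.symm.trans h1)
  -- apply chordality
  obtain ⟨u, w, hu, hw, huw, hne⟩ := hG x c hcyc (by omega)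
  have hmemc : ∀ v', v' ∈ c.support → v' ∈ P.support ∨ v' ∈ Q.support := by
    intro v' h
    rw [hc, Walk.mem_support_append_iff] at h
    rcases h with h | h
    · exact Or.inl h
    · right; rwa [Walk.support_reverse, List.mem_reverse] at h
  have hedgeP : ∀ e ∈ P.edges, e ∈ c.edges := by
    intro e he; rw [hc, Walk.edges_append, List.mem_append]; exact Or.inl he
  have hedgeQ : ∀ e ∈ Q.edges, e ∈ c.edges := by
    intro e he
    rw [hc, Walk.edges_append, List.mem_append, Walk.edges_reverse, List.mem_reverse]
    exact Or.inr he
  by_cases huP : u ∈ P.support <;> by_cases hwP : w ∈ P.support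
  · exact hne (hedgeP _ (constrained_no_chord P hPs hPmin huP hwP huw))
  · -- u in P, w only in Q
    have hwQ : w ∈ Q.support := (hmemc w hw).resolve_left hwP
    by_cases huQ : u ∈ Q.support
    · exact hne (hedgeQ _ (constrained_no_chord Q hQs hQmin huQ hwQ huw))
    · have huA : u ∈ A := by
        rcases hPs u huP with h | h | h
        · exact h
        · exact absurd (h ▸ Q.start_mem_support) huQ
        · exact absurd (h ▸ Q.end_mem_support) huQ
      have hwB : w ∈ B := by
        rcases hQs w hwQ with h | h | h
        · exact h
        · exact absurd (h ▸ P.start_mem_support) hwP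
        · exact absurd (h ▸ P.end_mem_support) hwP
      exact (vsep_cross hS huA hwB).2 huw
  · have huQ : u ∈ Q.support := (hmemc u hu).resolve_left huP
    by_cases hwQ : w ∈ Q.support
    · exact hne (hedgeQ _ (constrained_no_chord Q hQs hQmin huQ hwQ huw))
    · have hwA : w ∈ A := by
        rcases hPs w hwP with h | h | h
        · exact h
        · exact absurd (h ▸ Q.start_mem_support) hwQ
        · exact absurd (h ▸ Q.end_mem_support) hwQ
      have huB : u ∈ B := by
        rcases hQs u huQ with h | h | h
        · exact h
        · exact absurd (h ▸ P.start_mem_support) huP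
        · exact absurd (h ▸ P.end_mem_support) huP
      exact (vsep_cross hS hwA huB).2 huw.symm
  · have huQ : u ∈ Q.support := (hmemc u hu).resolve_left huP
    have hwQ : w ∈ Q.support := (hmemc w hw).resolve_left hwP
    exact hne (hedgeQ _ (constrained_no_chord Q hQs hQmin huQ hwQ huw))

section Dirac
variable {V : Type} {G : SimpleGraph V}

def Simplicial (G : SimpleGraph V) (v : V) : Prop := G.IsClique (G.neighborSet v)

lemma vsep_nbhd {a b : V} (hne : a ≠ b) (hab : ¬ G.Adj a b) :
    VSep G a b (G.neighborSet a) := by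
  refine ⟨by simp, fun h => hab h, fun p => ?_⟩
  cases p with
  | nil => exact absurd rfl hne
  | cons h q => exact ⟨_, by simp, h⟩

lemma exists_minsep [Finite V] {a b : V} (hne : a ≠ b) (hab : ¬ G.Adj a b) :
    ∃ S : Set V, VSep G a b S ∧
      ∀ x ∈ S, ∃ p : G.Walk a b, ∀ z ∈ p.support, z ∈ S → z = x := by
  classical
  obtain ⟨S, hS, hmin⟩ := Set.Finite.exists_minimalFor id {S | VSep G a b S}
    (Set.toFinite _) ⟨_, vsep_nbhd hne hab⟩
  refine ⟨S, hS, fun x hx => ?_⟩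
  have hns : ¬ VSep G a b (S \ {x}) := by
    intro hsep
    have := (Set.Subset.antisymm (hmin hsep (Set.diff_subset)) Set.diff_subset : id S = id (S \ {x}))
    simp only [id] at this
    rw [this] at hx
    exact hx.2 rfl
  rw [VSep] at hns
  push_neg at hns
  obtain ⟨p, hp⟩ := hns (fun h => hS.1 h.1) (fun h => hS.2.1 h.1)
  refine ⟨p, fun z hz hzS => ?_⟩
  have h := hp z hz
  simp only [Set.mem_diff, Set.mem_singleton_iff, not_and, not_not] at h
  exact h hzS

lemma simplicial_lift {s : Set V} {v : V} (hv : v ∈ s)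
    (hN : ∀ w, G.Adj v w → w ∈ s)
    (hs : Simplicial (G.induce s) ⟨v, hv⟩) : Simplicial G v := by
  intro x hx y hy hxy
  have hxs : x ∈ s := hN x hx
  have hys : y ∈ s := hN y hy
  have h1 : (⟨x, hxs⟩ : s) ∈ (G.induce s).neighborSet ⟨v, hv⟩ := hx
  have h2 : (⟨y, hys⟩ : s) ∈ (G.induce s).neighborSet ⟨v, hv⟩ := hy
  exact hs h1 h2 (fun h => hxy (congrArg Subtype.val h))

lemma dirac_side {n : ℕ} [Finite V]
    (IH : ∀ m, m < n → ∀ (W : Type) [Finite W] (H : SimpleGraph W), Nat.card W ≤ m →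
      IsChordal H → ∀ a b : W, a ≠ b → ¬H.Adj a b →
      ∃ u w : W, u ≠ w ∧ ¬H.Adj u w ∧ Simplicial H u ∧ Simplicial H w)
    (hn : Nat.card V ≤ n) (hG : IsChordal G) {S : Set V}
    (hclique : G.IsClique S) {r c : V} (hr : r ∉ S)
    (hc : c ∉ Reach G S r ∪ S) :
    ∃ u, u ∈ Reach G S r ∧ Simplicial G u := by
  classical
  set A := Reach G S r with hA
  set sA : Set V := A ∪ S with hsA
  have hGs : IsChordal (G.induce sA) := hG.induce sA
  have hcard : Nat.card ↥sA < n := by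
    refine lt_of_lt_of_le ?_ hn
    rw [Nat.card_coe_set_eq]
    have h1 : sA ⊂ Set.univ := by
      refine ⟨Set.subset_univ _, fun h => hc (h (Set.mem_univ c))⟩
    calc sA.ncard < (Set.univ : Set V).ncard := Set.ncard_lt_ncard h1 (Set.toFinite _)
      _ = Nat.card V := Set.ncard_univ V
  have hNA : ∀ u, u ∈ A → ∀ w, G.Adj u w → w ∈ sA := by
    intro u hu w huw
    by_cases hwS : w ∈ S
    · exact Or.inr hwS
    · exact Or.inl (reach_adj hu huw hwS)
  have hrA : r ∈ A := reach_self hr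
  by_cases hcomp : ∀ p q : ↥sA, p ≠ q → (G.induce sA).Adj p q
  · refine ⟨r, hrA, ?_⟩
    refine simplicial_lift (Or.inl hrA) (hNA r hrA) ?_
    intro x hx y hy hxy
    exact hcomp x y hxy
  · push_neg at hcomp
    obtain ⟨p, q, hpq, hnadj⟩ := hcomp
    obtain ⟨u, w, huw, hnuw, hu, hw⟩ := IH (Nat.card ↥sA) hcard ↥sA (G.induce sA)
      le_rfl hGs p q hpq hnadj
    have hkey : ∀ (z : ↥sA), Simplicial (G.induce sA) z → (z : V) ∈ A →
        ∃ u', u' ∈ A ∧ Simplicial G u' := by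
      intro z hz hzA
      exact ⟨z, hzA, simplicial_lift z.2 (hNA z hzA) hz⟩
    have hnotboth : ¬((u : V) ∈ S ∧ (w : V) ∈ S) := by
      rintro ⟨huS, hwS⟩
      have : (u : V) ≠ (w : V) := fun h => huw (Subtype.ext h)
      exact hnuw (hclique huS hwS this)
    rcases u.2 with huA | huS
    · exact hkey u hu huA
    · rcases w.2 with hwA | hwS
      · exact hkey w hw hwA
      · exact absurd ⟨huS, hwS⟩ hnotboth

lemma dirac : ∀ (n : ℕ) (V : Type) [Finite V] (G : SimpleGraph V), Nat.card V ≤ n →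
    IsChordal G → ∀ a b : V, a ≠ b → ¬G.Adj a b →
    ∃ u w : V, u ≠ w ∧ ¬G.Adj u w ∧ Simplicial G u ∧ Simplicial G w := by
  intro n
  induction n using Nat.strong_induction_on with
  | _ n IH =>
    intro V _ G hn hG a b hne hnadj
    obtain ⟨S, hS, hmin⟩ := exists_minsep hne hnadj
    have hclique := minsep_clique hG hnadj hS hmin
    have haA : a ∈ Reach G S a := reach_self hS.1
    have hbB : b ∈ Reach G S b := reach_self hS.2.1
    have hSsymm : VSep G b a S := ⟨hS.2.1, hS.1, fun p => by
      obtain ⟨z, hz, hzS⟩ := hS.2.2 p.reverse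
      rw [Walk.support_reverse, List.mem_reverse] at hz
      exact ⟨z, hz, hzS⟩⟩
    obtain ⟨u, huA, hu⟩ := dirac_side IH hn hG hclique hS.1
      (c := b) (by
        rintro (h | h)
        · exact (vsep_cross hS h hbB).1 rfl
        · exact hS.2.1 h)
    obtain ⟨w, hwB, hw⟩ := dirac_side IH hn hG hclique hS.2.1
      (c := a) (by
        rintro (h | h)
        · exact (vsep_cross hSsymm h haA).1 rfl
        · exact hS.1 h)
    obtain ⟨hneq, hnadj'⟩ := vsep_cross hS huA hwB
    exact ⟨u, w, hneq, hnadj', hu, hw⟩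

lemma exists_simplicial [Finite V] [Nonempty V] (hG : IsChordal G) :
    ∃ v, Simplicial G v := by
  by_cases h : ∀ a b : V, a ≠ b → G.Adj a b
  · exact ⟨Classical.arbitrary V, fun x hx y hy hxy => h x y hxy⟩
  · push_neg at h
    obtain ⟨a, b, hne, hnadj⟩ := h
    obtain ⟨u, _, _, _, hu, _⟩ := dirac (Nat.card V) V G le_rfl hG a b hne hnadj
    exact ⟨u, hu⟩

end Dirac

section Trees
variable {T : Type}

def addLeaf (Tg : SimpleGraph T) (t0 : T) : SimpleGraph (Option T) :=
  SimpleGraph.fromRel (fun x y =>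
    (∃ a b, x = some a ∧ y = some b ∧ Tg.Adj a b) ∨ (x = none ∧ y = some t0))

variable {Tg : SimpleGraph T} {t0 : T}

lemma addLeaf_adj_some {a b : T} : (addLeaf Tg t0).Adj (some a) (some b) ↔ Tg.Adj a b := by
  constructor
  · rintro ⟨hne, (⟨a', b', ha, hb, h⟩ | ⟨h, -⟩) | (⟨a', b', ha, hb, h⟩ | ⟨h, -⟩)⟩
    · cases ha; cases hb; exact h
    · exact absurd h (by simp)
    · cases ha; cases hb; exact h.symm
    · exact absurd h (by simp)
  · intro h
    exact ⟨by simpa using h.ne, Or.inl (Or.inl ⟨a, b, rfl, rfl, h⟩)⟩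

lemma addLeaf_adj_none {y : Option T} : (addLeaf Tg t0).Adj none y ↔ y = some t0 := by
  constructor
  · rintro ⟨hne, (⟨a', b', ha, hb, h⟩ | ⟨-, h⟩) | (⟨a', b', ha, hb, h⟩ | ⟨-, h⟩)⟩
    · exact absurd ha (by simp)
    · exact h
    · exact absurd hb (by simp)
    · exact absurd h (by simp)
  · rintro rfl
    exact ⟨by simp, Or.inl (Or.inr ⟨rfl, rfl⟩)⟩

def homSome : Tg →g addLeaf Tg t0 where
  toFun := some
  map_rel' := fun h => addLeaf_adj_some.2 h

lemma homSome_injective : Function.Injective (homSome (Tg := Tg) (t0 := t0) : T → Option T) :=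
  fun _ _ h => Option.some_injective _ h

lemma exists_last_edge {W : Type*} {H : SimpleGraph W} {u w : W} (p : H.Walk u w)
    (h : u ≠ w) : ∃ z, H.Adj z w ∧ s(z, w) ∈ p.edges := by
  induction p with
  | nil => exact absurd rfl h
  | @cons u' z' w' hadj q ih =>
    by_cases hz : z' = w'
    · subst hz
      exact ⟨u', hadj, by simp⟩
    · obtain ⟨z'', h1, h2⟩ := ih hz
      exact ⟨z'', h1, by simp [h2]⟩

lemma addLeaf_pullback : ∀ {o1 o2 : Option T} (c : (addLeaf Tg t0).Walk o1 o2)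
    (_ : none ∉ c.support) {x y : T} (h1 : o1 = some x) (h2 : o2 = some y),
    ∃ c₀ : Tg.Walk x y, c₀.map homSome = c.copy h1 h2 := by
  intro o1 o2 c
  induction c with
  | nil =>
    intro h x y h1 h2
    subst h1
    cases h2
    exact ⟨Walk.nil, by simp; rfl⟩
  | @cons o1 oz o2 hadj q ih =>
    intro h x y h1 h2
    subst h1; subst h2
    have hz : oz ≠ none := by
      intro hz
      exact h (by rw [Walk.support_cons]; right; rw [← hz]; exact q.start_mem_support)
    obtain ⟨w, rfl⟩ := Option.ne_none_iff_exists'.1 hz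
    have hq : none ∉ q.support := fun hh => h (by rw [Walk.support_cons]; right; exact hh)
    obtain ⟨q₀, hq₀⟩ := ih hq rfl rfl
    refine ⟨Walk.cons (addLeaf_adj_some.1 hadj) q₀, ?_⟩
    rw [Walk.map_cons, hq₀]
    simp [homSome]

lemma addLeaf_isTree (h : Tg.IsTree) : (addLeaf Tg t0).IsTree := by
  constructor
  · constructor
    · intro o1 o2
      have key : ∀ o : Option T, (addLeaf Tg t0).Reachable o (some t0) := by
        intro o
        cases o with
        | none => exact (addLeaf_adj_none.2 rfl).reachable
        | some a =>
          exact (h.isConnected.preconnected a t0).map (homSome (t0 := t0))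
      exact (key o1).trans (key o2).symm
  · intro o c hc
    classical
    by_cases hn : none ∈ c.support
    · -- rotate to base at none
      have hc' := hc.rotate hn
      set c' := c.rotate _ hn with hcdef
      cases hrc : c' with
      | nil => rw [hrc] at hc'; exact hc'.ne_nil rfl
      | cons hadj q =>
        rename_i oz
        rw [hrc] at hc'
        have hzt : oz = some t0 := addLeaf_adj_none.1 hadj
        subst hzt
        obtain ⟨z, hzadj, hzmem⟩ := exists_last_edge q (by simp)
        have hz2 : z = some t0 := addLeaf_adj_none.1 hzadj.symm
        subst hz2
        have hnd := hc'.isTrail.edges_nodup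
        rw [Walk.edges_cons] at hnd
        have := (List.nodup_cons.1 hnd).1
        rw [Sym2.eq_swap] at hzmem
        exact this hzmem
    · have ho : o ≠ none := fun hh => hn (hh ▸ c.start_mem_support)
      obtain ⟨a, rfl⟩ := Option.ne_none_iff_exists'.1 ho
      obtain ⟨c₀, hc₀⟩ := addLeaf_pullback c hn rfl rfl
      rw [Walk.copy_rfl_rfl] at hc₀
      rw [← hc₀] at hc
      exact h.IsAcyclic c₀ ((Walk.map_isCycle_iff_of_injective homSome_injective).1 hc)
end Trees

lemma connected_induce_singleton {U : Type*} (H : SimpleGraph U) (v : U) :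
    (H.induce {v}).Connected := by
  haveI : Nonempty ↥({v} : Set U) := ⟨⟨v, rfl⟩⟩
  refine Connected.mk fun a b => ?_
  have : a = b := Subtype.ext (a.2.trans b.2.symm)
  exact this ▸ Reachable.refl _

lemma connected_induce_image {T U : Type*} {G : SimpleGraph T} {H : SimpleGraph U}
    {f : T → U} (hadj : ∀ a b, G.Adj a b → H.Adj (f a) (f b)) (s : Set T)
    (h : (G.induce s).Connected) : (H.induce (f '' s)).Connected := by
  refine Connected.map ⟨fun a => ⟨f a.1, a.1, a.2, rfl⟩, fun hab => hadj _ _ hab⟩ ?_ h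
  rintro ⟨u, a, ha, rfl⟩
  exact ⟨⟨a, ha⟩, rfl⟩

lemma connected_induce_insert {U : Type*} {H : SimpleGraph U} {s : Set U} {v u : U}
    (hu : u ∈ s) (hadj : H.Adj v u) (h : (H.induce s).Connected) :
    (H.induce (insert v s)).Connected := by
  have key : ∀ x : ↥(insert v s), (H.induce (insert v s)).Reachable x ⟨u, Or.inr hu⟩ := by
    rintro ⟨x, hx | hx⟩
    · subst hx
      exact Adj.reachable (by exact hadj)
    · have : (H.induce s).Reachable ⟨x, hx⟩ ⟨u, hu⟩ := h.preconnected _ _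
      exact this.map (SimpleGraph.induceHomOfLE H (Set.subset_insert v s)).toHom
  haveI : Nonempty ↥(insert v s) := ⟨⟨v, Or.inl rfl⟩⟩
  exact Connected.mk fun a b => (key a).trans (key b).symm

end Sep

section CliqueTransfer

variable {V : Type} {G : SimpleGraph V} {v : V}

def lift {V : Type} {s : Set V} (K : Set ↥s) : Set V := Subtype.val '' K

def pre {V : Type} (s : Set V) (Y : Set V) : Set ↥s := {u | u.1 ∈ Y}

lemma lift_mem {s : Set V} {K : Set ↥s} {w : V} (hw : w ∈ s) :
    w ∈ lift K ↔ ⟨w, hw⟩ ∈ K := by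
  constructor
  · rintro ⟨u, hu, rfl⟩
    exact (Subtype.ext rfl : u = ⟨u.1, u.2⟩) ▸ hu
  · intro h
    exact ⟨⟨w, hw⟩, h, rfl⟩

lemma not_mem_lift {s : Set V} {K : Set ↥s} {x : V} (hx : x ∉ s) : x ∉ lift K := by
  rintro ⟨u, hu, h⟩
  exact hx (h ▸ u.2)

lemma lift_injective {s : Set V} : Function.Injective (lift (s := s)) :=
  Set.image_injective.2 Subtype.val_injective

lemma lift_pre {s : Set V} {Y : Set V} (hY : ∀ y ∈ Y, y ∈ s) : lift (pre s Y) = Y := by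
  ext w
  constructor
  · rintro ⟨u, hu, rfl⟩; exact hu
  · intro hw
    exact ⟨⟨w, hY w hw⟩, hw, rfl⟩

lemma clique_lift {s : Set V} {K : Set ↥s} (hK : (G.induce s).IsClique K) :
    G.IsClique (lift K) := by
  rintro x ⟨ux, hux, rfl⟩ y ⟨uy, huy, rfl⟩ hxy
  exact hK hux huy (fun h => hxy (congrArg Subtype.val h))

lemma clique_pre {s : Set V} {Y : Set V} (hY : G.IsClique Y) :
    (G.induce s).IsClique (pre s Y) := by
  intro x hx y hy hxy
  exact hY hx hy (fun h => hxy (Subtype.ext h))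

lemma clique_C (hv : Simplicial G v) : G.IsClique (insert v (G.neighborSet v)) := by
  rintro x (rfl | hx) y (rfl | hy) hxy
  · exact absurd rfl hxy
  · exact hy
  · exact ((G.mem_neighborSet _ _).1 hx).symm
  · exact hv hx hy hxy

lemma maxclique_C (hv : Simplicial G v) : IsMaxClique G (insert v (G.neighborSet v)) := by
  refine ⟨clique_C hv, fun Y hY hsub => ?_⟩
  refine Set.Subset.antisymm hsub fun y hy => ?_
  by_cases hyv : y = v
  · exact Or.inl hyv
  · exact Or.inr ((G.mem_neighborSet _ _).2 (hY (hsub (Or.inl rfl)) hy (fun h => hyv h.symm)))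

lemma clique_Nv (hv : Simplicial G v) :
    (G.induce {u | u ≠ v}).IsClique {u | G.Adj v u.1} := by
  intro x hx y hy hxy
  exact hv hx hy (fun h => hxy (Subtype.ext h))

lemma maxclique_lift {K : Set ↥({u : V | u ≠ v})} (hv : Simplicial G v)
    (hK : IsMaxClique (G.induce {u | u ≠ v}) K) (hne : K ≠ {u | G.Adj v u.1}) :
    IsMaxClique G (lift K) := by
  refine ⟨clique_lift hK.1, fun Y hY hsub => ?_⟩
  have hvY : v ∉ Y := by
    intro hvY
    apply hne
    apply hK.2 _ (clique_Nv hv)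
    intro u hu
    have : u.1 ∈ Y := hsub ⟨u, hu, rfl⟩
    exact (hY hvY this (fun h => u.2 h.symm))
  have hKpre : K ⊆ pre _ Y := by
    intro u hu
    exact hsub ⟨u, hu, rfl⟩
  have := hK.2 (pre _ Y) (clique_pre hY) hKpre
  rw [this, lift_pre (s := {u : V | u ≠ v}) (Y := Y) (fun y hy h => hvY (h ▸ hy))]

lemma maxclique_mem_v {X : Set V} (hv : Simplicial G v) (hX : IsMaxClique G X)
    (hvX : v ∈ X) : X = insert v (G.neighborSet v) := by
  have hsub : X ⊆ insert v (G.neighborSet v) := by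
    intro x hx
    by_cases hxv : x = v
    · exact Or.inl hxv
    · exact Or.inr (hX.1 hvX hx (fun h => hxv h.symm))
  exact hX.2 _ (clique_C hv) hsub

lemma maxclique_not_mem_v {X : Set V} (hX : IsMaxClique G X) (hvX : v ∉ X) :
    IsMaxClique (G.induce {u | u ≠ v}) (pre _ X) ∧ lift (pre {u | u ≠ v} X) = X := by
  refine ⟨⟨clique_pre hX.1, fun Y' hY' hsub => ?_⟩,
    lift_pre (s := {u : V | u ≠ v}) (Y := X) (fun y hy h => hvX (h ▸ hy))⟩
  have h1 : X ⊆ lift Y' := by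
    intro x hx
    have hxv : x ≠ v := fun h => hvX (h ▸ hx)
    exact ⟨⟨x, hxv⟩, hsub hx, rfl⟩
  have h2 := hX.2 (lift Y') (clique_lift hY') h1
  apply Set.Subset.antisymm hsub
  intro u hu
  show u.1 ∈ X
  rw [h2]
  exact ⟨u, hu, rfl⟩

end CliqueTransfer

lemma connected_congr {U : Type*} {H : SimpleGraph U} {s1 s2 : Set U} (h : s1 = s2)
    (hc : (H.induce s1).Connected) : (H.induce s2).Connected := h ▸ hc

lemma empty_decomp {V : Type} [IsEmpty V] (G : SimpleGraph V) :
    ∃ (T : Type) (Tg : SimpleGraph T) (D : TreeDecomp G Tg),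
      Function.Injective D.bag ∧ (∀ t, IsMaxClique G (D.bag t)) ∧
      (∀ X : Set V, IsMaxClique G X → ∃ t, D.bag t = X) := by
  refine ⟨Unit, ⊥, ⟨?_, fun _ => ∅, fun w => (IsEmpty.false w).elim,
    fun w _ _ => (IsEmpty.false w).elim, fun w => (IsEmpty.false w).elim⟩,
    fun a b _ => Subsingleton.elim a b, ?_, ?_⟩
  · constructor
    · exact Connected.mk fun a b => (Subsingleton.elim a b) ▸ Reachable.refl _
    · intro u c hc
      cases c with
      | nil => exact hc.ne_nil rfl
      | cons h q => exact h.elim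
  · intro t
    refine ⟨Set.pairwise_empty _, fun Y _ _ => ?_⟩
    ext y
    exact iff_of_false (fun h => h) (fun h => IsEmpty.false y)
  · intro X hX
    refine ⟨(), ?_⟩
    ext y
    exact iff_of_false (fun h => h) (fun h => IsEmpty.false y)

theorem main_aux : ∀ (n : ℕ) (V : Type) [Finite V] (G : SimpleGraph V), Nat.card V ≤ n →
    IsChordal G → ∃ (T : Type) (Tg : SimpleGraph T) (D : TreeDecomp G Tg),
      Function.Injective D.bag ∧ (∀ t, IsMaxClique G (D.bag t)) ∧
      (∀ X : Set V, IsMaxClique G X → ∃ t, D.bag t = X) := by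
  intro n
  induction n with
  | zero =>
    intro V _ G hn hG
    haveI : IsEmpty V := by
      rcases isEmpty_or_nonempty V with h | h
      · exact h
      · exact absurd hn (by have := Nat.card_pos (α := V); omega)
    exact empty_decomp G
  | succ n IH =>
    intro V _ G hn hG
    rcases isEmpty_or_nonempty V with hV | hV
    · exact empty_decomp G
    classical
    obtain ⟨v, hv⟩ := exists_simplicial hG
    have hG' : IsChordal (G.induce {u | u ≠ v}) := hG.induce _
    have hcard : Nat.card ↥({u : V | u ≠ v}) ≤ n := by
      have h1 : Nat.card ↥({u : V | u ≠ v}) < Nat.card V := by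
        rw [Nat.card_coe_set_eq]
        calc ({u : V | u ≠ v}).ncard < (Set.univ : Set V).ncard :=
              Set.ncard_lt_ncard (Set.ssubset_iff_subset_ne.2
                ⟨Set.subset_univ _, fun h => ((h ▸ Set.mem_univ v : v ∈ {u : V | u ≠ v})) rfl⟩)
                (Set.toFinite _)
          _ = Nat.card V := Set.ncard_univ V
      omega
    obtain ⟨T', Tg', D', hinj', hmax', hsurj'⟩ := IH ↥({u : V | u ≠ v}) (G.induce _) hcard hG'
    by_cases hNvmax : IsMaxClique (G.induce {u | u ≠ v}) {u | G.Adj v u.1}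
    · -- Case 1: N(v) is a maximal clique of G - v; replace its bag by C
      obtain ⟨t0, ht0⟩ := hsurj' _ hNvmax
      have hcv : ∀ w : V, ∃ t, w ∈ Function.update (fun t => lift (D'.bag t)) t0
          (insert v (G.neighborSet v)) t := by
        intro w
        by_cases hw : w = v
        · refine ⟨t0, ?_⟩
          rw [Function.update_self]
          exact hw ▸ Set.mem_insert _ _
        · obtain ⟨t, ht⟩ := D'.covers_vertex ⟨w, hw⟩
          by_cases htt : t = t0
          · refine ⟨t0, ?_⟩
            rw [Function.update_self]
            subst htt
            rw [ht0] at ht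
            exact Or.inr ht
          · refine ⟨t, ?_⟩
            rw [Function.update_of_ne htt]
            exact ⟨_, ht, rfl⟩
      have hce : ∀ ⦃a b : V⦄, G.Adj a b → ∃ t, a ∈ Function.update (fun t => lift (D'.bag t)) t0
          (insert v (G.neighborSet v)) t ∧ b ∈ Function.update (fun t => lift (D'.bag t)) t0
          (insert v (G.neighborSet v)) t := by
        intro a b hab
        by_cases ha : a = v
        · subst ha
          refine ⟨t0, ?_, ?_⟩ <;> rw [Function.update_self]
          · exact Set.mem_insert _ _
          · exact Or.inr hab
        · by_cases hb : b = v
          · subst hb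
            refine ⟨t0, ?_, ?_⟩ <;> rw [Function.update_self]
            · exact Or.inr hab.symm
            · exact Set.mem_insert _ _
          · obtain ⟨t, hta, htb⟩ := D'.covers_edge
              (show (G.induce {u | u ≠ v}).Adj ⟨a, ha⟩ ⟨b, hb⟩ from hab)
            by_cases htt : t = t0
            · subst htt
              rw [ht0] at hta htb
              refine ⟨t, ?_, ?_⟩ <;> rw [Function.update_self]
              · exact Or.inr hta
              · exact Or.inr htb
            · refine ⟨t, ?_, ?_⟩ <;> rw [Function.update_of_ne htt]
              · exact ⟨_, hta, rfl⟩
              · exact ⟨_, htb, rfl⟩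
      have hst : ∀ w : V, (Tg'.induce {t : T' | w ∈ Function.update (fun t => lift (D'.bag t)) t0
          (insert v (G.neighborSet v)) t}).Connected := by
        intro w
        by_cases hw : w = v
        · subst hw
          have hset : {t : T' | w ∈ Function.update (fun t => lift (D'.bag t)) t0
              (insert w (G.neighborSet w)) t} = {t0} := by
            ext t
            by_cases htt : t = t0
            · subst htt
              simp only [Set.mem_setOf_eq, Function.update_self]
              exact iff_of_true (Set.mem_insert _ _) rfl
            · simp only [Set.mem_setOf_eq, Function.update_of_ne htt, Set.mem_singleton_iff]
              exact iff_of_false (not_mem_lift (by simp)) htt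
          exact connected_congr hset.symm (connected_induce_singleton Tg' t0)
        · have hset : {t : T' | w ∈ Function.update (fun t => lift (D'.bag t)) t0
              (insert v (G.neighborSet v)) t} = {t : T' | ⟨w, hw⟩ ∈ D'.bag t} := by
            ext t
            by_cases htt : t = t0
            · subst htt
              simp only [Set.mem_setOf_eq, Function.update_self, ht0]
              constructor
              · rintro (h | h)
                · exact absurd h hw
                · exact h
              · exact fun h => Or.inr h
            · simp only [Set.mem_setOf_eq, Function.update_of_ne htt]
              exact lift_mem (show (w : V) ∈ {u : V | u ≠ v} from hw)
          exact connected_congr hset.symm (D'.subtree ⟨w, hw⟩)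
      have hinj : Function.Injective (Function.update (fun t => lift (D'.bag t)) t0
          (insert v (G.neighborSet v))) := by
        intro t1 t2 h
        have h' : Function.update (fun t => lift (D'.bag t)) t0 (insert v (G.neighborSet v)) t1 =
            Function.update (fun t => lift (D'.bag t)) t0 (insert v (G.neighborSet v)) t2 := h
        by_cases h1 : t1 = t0 <;> by_cases h2 : t2 = t0
        · rw [h1, h2]
        · rw [h1, Function.update_self, Function.update_of_ne h2] at h'
          exact absurd (h' ▸ Set.mem_insert v _) (not_mem_lift (by simp))
        · rw [h2, Function.update_self, Function.update_of_ne h1] at h'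
          exact absurd (h'.symm ▸ Set.mem_insert v _) (not_mem_lift (by simp))
        · rw [Function.update_of_ne h1, Function.update_of_ne h2] at h'
          exact hinj' (lift_injective h')
      have hmx : ∀ t, IsMaxClique G (Function.update (fun t => lift (D'.bag t)) t0
          (insert v (G.neighborSet v)) t) := by
        intro t
        by_cases htt : t = t0
        · subst htt
          rw [Function.update_self]
          exact maxclique_C hv
        · rw [Function.update_of_ne htt]
          exact maxclique_lift hv (hmax' t)
            (fun h => htt (hinj' (h.trans ht0.symm)))
      have hsj : ∀ X : Set V, IsMaxClique G X → ∃ t, Function.update (fun t => lift (D'.bag t)) t0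
          (insert v (G.neighborSet v)) t = X := by
        intro X hX
        by_cases hvX : v ∈ X
        · refine ⟨t0, ?_⟩
          rw [Function.update_self]
          exact (maxclique_mem_v hv hX hvX).symm
        · obtain ⟨hXmax', hliftX⟩ := maxclique_not_mem_v hX hvX
          obtain ⟨t, ht⟩ := hsurj' _ hXmax'
          have htt : t ≠ t0 := by
            intro h
            subst h
            rw [ht0] at ht
            have hX2 : X = lift {u : ↥({u : V | u ≠ v}) | G.Adj v u.1} := by
              rw [← hliftX, ht]
            have hsubC : X ⊆ insert v (G.neighborSet v) := by
              rw [hX2]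
              rintro x ⟨u, hu, rfl⟩
              exact Or.inr hu
            have hXC := hX.2 _ (clique_C hv) hsubC
            exact hvX (hXC.symm ▸ Set.mem_insert v _)
          refine ⟨t, ?_⟩
          rw [Function.update_of_ne htt, ht, hliftX]
      exact ⟨T', Tg', ⟨D'.isTree, _, hcv, hce, hst⟩, hinj, hmx, hsj⟩
    · -- Case 2: attach a new leaf for the clique C
      obtain ⟨K', hK', hsubK⟩ := exists_maxclique (G.induce {u | u ≠ v}) (clique_Nv hv)
      obtain ⟨t0, ht0⟩ := hsurj' K' hK'
      have hcv : ∀ w : V, ∃ o : Option T', w ∈ Option.rec (motive := fun _ => Set V)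
          (insert v (G.neighborSet v)) (fun t => lift (D'.bag t)) o := by
        intro w
        by_cases hw : w = v
        · exact ⟨none, hw ▸ Set.mem_insert _ _⟩
        · obtain ⟨t, ht⟩ := D'.covers_vertex ⟨w, hw⟩
          exact ⟨some t, ⟨_, ht, rfl⟩⟩
      have hce : ∀ ⦃a b : V⦄, G.Adj a b → ∃ o : Option T',
          a ∈ Option.rec (motive := fun _ => Set V)
            (insert v (G.neighborSet v)) (fun t => lift (D'.bag t)) o ∧
          b ∈ Option.rec (motive := fun _ => Set V)
            (insert v (G.neighborSet v)) (fun t => lift (D'.bag t)) o := by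
        intro a b hab
        by_cases ha : a = v
        · subst ha
          exact ⟨none, Set.mem_insert _ _, Or.inr hab⟩
        · by_cases hb : b = v
          · subst hb
            exact ⟨none, Or.inr hab.symm, Set.mem_insert _ _⟩
          · obtain ⟨t, hta, htb⟩ := D'.covers_edge
              (show (G.induce {u | u ≠ v}).Adj ⟨a, ha⟩ ⟨b, hb⟩ from hab)
            exact ⟨some t, ⟨_, hta, rfl⟩, ⟨_, htb, rfl⟩⟩
      have hst : ∀ w : V, ((addLeaf Tg' t0).induce {o : Option T' |
          w ∈ Option.rec (motive := fun _ => Set V)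
            (insert v (G.neighborSet v)) (fun t => lift (D'.bag t)) o}).Connected := by
        intro w
        by_cases hw : w = v
        · subst hw
          have hset : {o : Option T' | w ∈ Option.rec (motive := fun _ => Set V)
              (insert w (G.neighborSet w)) (fun t => lift (D'.bag t)) o} = {none} := by
            ext o
            cases o with
            | none =>
              exact iff_of_true (Set.mem_insert _ _) rfl
            | some t =>
              exact iff_of_false (not_mem_lift (by simp)) (by simp)
          exact connected_congr hset.symm (connected_induce_singleton _ none)
        · by_cases hadjvw : G.Adj v w
          · have hset : {o : Option T' | w ∈ Option.rec (motive := fun _ => Set V)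
                (insert v (G.neighborSet v)) (fun t => lift (D'.bag t)) o} =
                insert none (some '' {t : T' | ⟨w, hw⟩ ∈ D'.bag t}) := by
              ext o
              cases o with
              | none =>
                exact iff_of_true (Or.inr hadjvw) (Set.mem_insert _ _)
              | some t =>
                show w ∈ lift (D'.bag t) ↔ _
                rw [lift_mem (show (w : V) ∈ {u : V | u ≠ v} from hw)]
                constructor
                · intro h
                  exact Or.inr ⟨t, h, rfl⟩
                · rintro ((h : some t = none) | ⟨t', ht', hte⟩)
                  · exact absurd h (by simp)
                  · cases Option.some_injective _ hte
                    exact ht'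
            have htw : t0 ∈ {t : T' | ⟨w, hw⟩ ∈ D'.bag t} := by
              show ⟨w, hw⟩ ∈ D'.bag t0
              rw [ht0]
              exact hsubK hadjvw
            exact connected_congr hset.symm
              (connected_induce_insert ⟨t0, htw, rfl⟩ (addLeaf_adj_none.2 rfl)
                (connected_induce_image (fun a b h => addLeaf_adj_some.2 h) _
                  (D'.subtree ⟨w, hw⟩)))
          · have hset : {o : Option T' | w ∈ Option.rec (motive := fun _ => Set V)
                (insert v (G.neighborSet v)) (fun t => lift (D'.bag t)) o} =
                some '' {t : T' | ⟨w, hw⟩ ∈ D'.bag t} := by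
              ext o
              cases o with
              | none =>
                refine iff_of_false ?_ ?_
                · rintro (h | h)
                  · exact hw h
                  · exact hadjvw h
                · rintro ⟨t', _, ht'⟩
                  exact absurd ht' (by simp)
              | some t =>
                show w ∈ lift (D'.bag t) ↔ _
                rw [lift_mem (show (w : V) ∈ {u : V | u ≠ v} from hw)]
                constructor
                · intro h
                  exact ⟨t, h, rfl⟩
                · rintro ⟨t', ht', hte⟩
                  cases Option.some_injective _ hte
                  exact ht'
            exact connected_congr hset.symm
              (connected_induce_image (fun a b h => addLeaf_adj_some.2 h) _
                (D'.subtree ⟨w, hw⟩))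
      have hinj : Function.Injective (fun o => Option.rec (motive := fun _ => Set V)
          (insert v (G.neighborSet v)) (fun t => lift (D'.bag t)) o) := by
        intro o1 o2 h
        match o1, o2 with
        | none, none => rfl
        | none, some t =>
          have h2 : insert v (G.neighborSet v) = lift (D'.bag t) := h
          exact absurd (h2 ▸ Set.mem_insert v (G.neighborSet v)) (not_mem_lift (by simp))
        | some t, none =>
          have h2 : insert v (G.neighborSet v) = lift (D'.bag t) := h.symm
          exact absurd (h2 ▸ Set.mem_insert v (G.neighborSet v)) (not_mem_lift (by simp))
        | some t1, some t2 =>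
          have h2 : lift (D'.bag t1) = lift (D'.bag t2) := h
          exact congrArg some (hinj' (lift_injective h2))
      have hmx : ∀ o : Option T', IsMaxClique G (Option.rec (motive := fun _ => Set V)
          (insert v (G.neighborSet v)) (fun t => lift (D'.bag t)) o) := by
        intro o
        match o with
        | none => exact maxclique_C hv
        | some t =>
          refine maxclique_lift hv (hmax' t) (fun h => hNvmax ?_)
          rw [← h]
          exact hmax' t
      have hsj : ∀ X : Set V, IsMaxClique G X → ∃ o : Option T',
          Option.rec (motive := fun _ => Set V)
            (insert v (G.neighborSet v)) (fun t => lift (D'.bag t)) o = X := by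
        intro X hX
        by_cases hvX : v ∈ X
        · exact ⟨none, (maxclique_mem_v hv hX hvX).symm⟩
        · obtain ⟨hXmax', hliftX⟩ := maxclique_not_mem_v hX hvX
          obtain ⟨t, ht⟩ := hsurj' _ hXmax'
          refine ⟨some t, ?_⟩
          show lift (D'.bag t) = X
          rw [ht, hliftX]
      exact ⟨Option T', addLeaf Tg' t0, ⟨addLeaf_isTree D'.isTree,
        fun o => Option.rec (motive := fun _ => Set V)
          (insert v (G.neighborSet v)) (fun t => lift (D'.bag t)) o, hcv, hce, hst⟩,
        hinj, hmx, hsj⟩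

theorem stmt_15 {V : Type} [Finite V] (G : SimpleGraph V) (hG : IsChordal G) :
    ∃ (T : Type) (Tg : SimpleGraph T) (D : TreeDecomp G Tg),
      Function.Injective D.bag ∧
      (∀ t, IsMaxClique G (D.bag t)) ∧
      (∀ X : Set V, IsMaxClique G X → ∃ t, D.bag t = X) := by
  exact main_aux (Nat.card V) V G le_rfl hG
end
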